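/- arXiv:math/0106138 — 5 statements merged into one kernel-verified Lean document; each statement's English description precedes it below -/
import Mathlib

section
/- For any continuous positive definite function κ : ℝ≥0 → ℝ≥0 (i.e., κ continuous, κ(0)=0, κ(s)>0 for s>0), there exist a function ρ₁ of class K∞ (continuous, strictly increasing, ρ₁(0)=0, unbounded) and a function ρ₂ of class L (continuous, strictly decreasing to 0 at infinity, positive) such that κ(s) ≥ ρ₁(s)·ρ₂(s) for all s ≥ 0. -/
open MeasureTheory Set Filter

noncomputable section

/-- Class `K` function: continuous, strictly increasing, zero at zero (on `[0,∞)`). -/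
def ClassK (f : ℝ → ℝ) : Prop :=
  ContinuousOn f (Set.Ici 0) ∧ StrictMonoOn f (Set.Ici 0) ∧ f 0 = 0 ∧
    ∀ s, 0 ≤ s → 0 ≤ f s

/-- Class `K∞` function: class `K` and unbounded. -/
def ClassKinf (f : ℝ → ℝ) : Prop :=
  ClassK f ∧ ∀ M : ℝ, ∃ s, 0 ≤ s ∧ M < f s

/-- Class `L` function: continuous, strictly decreasing, positive, tending to `0` at `∞`. -/
def ClassL (f : ℝ → ℝ) : Prop :=
  ContinuousOn f (Set.Ici 0) ∧ StrictAntiOn f (Set.Ici 0) ∧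
    (∀ s, 0 ≤ s → 0 < f s) ∧ Filter.Tendsto f Filter.atTop (nhds 0)

/-- Class `KL` function. -/
def ClassKL (β : ℝ → ℝ → ℝ) : Prop :=
  (∀ t, 0 ≤ t → ClassK (fun s => β s t)) ∧
  ∀ s, 0 ≤ s → ContinuousOn (β s) (Set.Ici 0) ∧ AntitoneOn (β s) (Set.Ici 0) ∧
    Filter.Tendsto (β s) Filter.atTop (nhds 0)

/-- Positive definite function on `[0,∞)`. -/
def PosDef (κ : ℝ → ℝ) : Prop := κ 0 = 0 ∧ ∀ s, 0 < s → 0 < κ s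

/-!
On `[0, 1]` the continuous positive definite `κ` dominates its nondecreasing envelope
`A u = inf_{t ∈ [0, 1]} (κ t + max (u - t) 0)`, and on `[1, ∞)` its nonincreasing envelope
`B u = inf_{t ≥ 1} (κ t + max (t - u) 0)`. The penalty terms make both envelopes 1-Lipschitz, and
compactness of `[ε, 1]` and `[1, u + 1]` makes `A` positive definite and `B` positive. With
`b = B 0 ≥ B`, the functions `ρ₁ s = min (A s) b * (1 + s)` (class `K∞`) and
`ρ₂ s = B s / b / (1 + s)` (class `L`) have product at most `min (A s) (B s) ≤ κ s`.
-/

open scoped Pointwise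

lemma PosDef.nonneg {κ : ℝ → ℝ} (hκ : PosDef κ) {s : ℝ} (hs : 0 ≤ s) : 0 ≤ κ s :=
  hs.eq_or_lt.elim (fun h => h ▸ hκ.1.ge) fun h => (hκ.2 s h).le

lemma IsCompact.exists_pos_forall_le {α : Type*} [TopologicalSpace α] {K : Set α}
    {f : α → ℝ} (hK : IsCompact K) (hf : ContinuousOn f K) (hpos : ∀ x ∈ K, 0 < f x) :
    ∃ c > 0, ∀ x ∈ K, c ≤ f x := by
  rcases K.eq_empty_or_nonempty with rfl | hne
  · exact ⟨1, one_pos, by simp⟩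
  obtain ⟨x₀, hx₀, hmin⟩ := hK.exists_isMinOn hne hf
  exact ⟨f x₀, hpos x₀ hx₀, fun x hx => hmin hx⟩

section Envelope

variable {f : ℝ → ℝ} {T : Set ℝ} {t u c δ : ℝ}

def monoEnvelope (f : ℝ → ℝ) (T : Set ℝ) (u : ℝ) : ℝ :=
  sInf ((fun t => f t + max (u - t) 0) '' T)

lemma monoEnvelope_le (hf : ∀ t ∈ T, 0 ≤ f t) (ht : t ∈ T) (u : ℝ) :
    monoEnvelope f T u ≤ f t + max (u - t) 0 := by
  refine csInf_le ⟨0, ?_⟩ ⟨t, ht, rfl⟩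
  rintro _ ⟨t', ht', rfl⟩
  have := hf t' ht'
  positivity

lemma monoEnvelope_le_self (hf : ∀ t ∈ T, 0 ≤ f t) (ht : t ∈ T) :
    monoEnvelope f T t ≤ f t := by
  simpa using monoEnvelope_le hf ht t

lemma le_monoEnvelope (hT : T.Nonempty) (h : ∀ t ∈ T, c ≤ f t + max (u - t) 0) :
    c ≤ monoEnvelope f T u := by
  refine le_csInf (hT.image _) ?_
  rintro _ ⟨t, ht, rfl⟩
  exact h t ht

lemma monoEnvelope_nonneg (hT : T.Nonempty) (hf : ∀ t ∈ T, 0 ≤ f t) (u : ℝ) :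
    0 ≤ monoEnvelope f T u :=
  le_monoEnvelope hT fun t ht => add_nonneg (hf t ht) (le_max_right _ _)

lemma monotone_monoEnvelope (hT : T.Nonempty) (hf : ∀ t ∈ T, 0 ≤ f t) :
    Monotone (monoEnvelope f T) := fun u v huv =>
  le_monoEnvelope hT fun t ht => (monoEnvelope_le hf ht u).trans <| by gcongr

lemma lipschitzWith_monoEnvelope (hT : T.Nonempty) (hf : ∀ t ∈ T, 0 ≤ f t) :
    LipschitzWith 1 (monoEnvelope f T) := by
  refine LipschitzWith.of_le_add fun u v => ?_
  rw [← sub_le_iff_le_add]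
  refine le_monoEnvelope hT fun t ht => ?_
  have hmax : max (u - t) 0 ≤ max (v - t) 0 + dist u v := by
    rw [Real.dist_eq]
    exact max_le (by linarith [le_abs_self (u - v), le_max_left (v - t) 0]) (by positivity)
  linarith [monoEnvelope_le hf ht u]

lemma min_le_monoEnvelope (hT : T.Nonempty) (hf : ∀ t ∈ T, 0 ≤ f t)
    (hc : ∀ t ∈ T, u - δ < t → c ≤ f t) : min c δ ≤ monoEnvelope f T u := by
  refine le_monoEnvelope hT fun t ht => ?_
  rcases lt_or_ge (u - δ) t with h | h
  · linarith [hc t ht h, min_le_left c δ, le_max_right (u - t) 0]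
  · linarith [hf t ht, min_le_right c δ, le_max_left (u - t) 0]

/-- `antiEnvelope f T u = inf_{t ∈ T} (f t + max (t - u) 0)`, the mirror image of
`monoEnvelope`. -/
def antiEnvelope (f : ℝ → ℝ) (T : Set ℝ) (u : ℝ) : ℝ :=
  monoEnvelope (fun t => f (-t)) (-T) (-u)

lemma antiEnvelope_le (hf : ∀ t ∈ T, 0 ≤ f t) (ht : t ∈ T) (u : ℝ) :
    antiEnvelope f T u ≤ f t + max (t - u) 0 := by
  have := monoEnvelope_le (f := fun t => f (-t)) (T := -T) (t := -t)
    (fun t ht => hf (-t) ht) (by simpa using ht) (-u)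
  simpa [antiEnvelope, sub_eq_add_neg, add_comm] using this

lemma antiEnvelope_le_self (hf : ∀ t ∈ T, 0 ≤ f t) (ht : t ∈ T) :
    antiEnvelope f T t ≤ f t := by
  simpa using antiEnvelope_le hf ht t

lemma antitone_antiEnvelope (hT : T.Nonempty) (hf : ∀ t ∈ T, 0 ≤ f t) :
    Antitone (antiEnvelope f T) :=
  (monotone_monoEnvelope hT.neg fun t ht => hf (-t) ht).comp_antitone fun _ _ h =>
    neg_le_neg h

lemma continuous_antiEnvelope (hT : T.Nonempty) (hf : ∀ t ∈ T, 0 ≤ f t) :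
    Continuous (antiEnvelope f T) :=
  (lipschitzWith_monoEnvelope hT.neg fun t ht => hf (-t) ht).continuous.comp continuous_neg

lemma min_le_antiEnvelope (hT : T.Nonempty) (hf : ∀ t ∈ T, 0 ≤ f t)
    (hc : ∀ t ∈ T, t < u + δ → c ≤ f t) : min c δ ≤ antiEnvelope f T u :=
  min_le_monoEnvelope hT.neg (fun t ht => hf (-t) ht) fun t ht h =>
    hc (-t) ht (by linarith)

end Envelope

lemma monoEnvelope_Icc_pos {f : ℝ → ℝ} {a b u : ℝ} (hab : a ≤ b)
    (hf : ContinuousOn f (Ioc a b)) (hfpos : ∀ t ∈ Ioc a b, 0 < f t) (hfa : 0 ≤ f a)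
    (hu : a < u) :
    0 < monoEnvelope f (Icc a b) u := by
  have hsub : Icc ((a + u) / 2) b ⊆ Ioc a b := fun t ht => ⟨by linarith [ht.1], ht.2⟩
  obtain ⟨c, hc, hcf⟩ :=
    isCompact_Icc.exists_pos_forall_le (hf.mono hsub) fun t ht => hfpos t (hsub ht)
  have hnn : ∀ t ∈ Icc a b, 0 ≤ f t := fun t ht =>
    ht.1.eq_or_lt.elim (fun h => h ▸ hfa) fun h => (hfpos t ⟨h, ht.2⟩).le
  refine (lt_min hc (by linarith : 0 < (u - a) / 2)).trans_le <|
    min_le_monoEnvelope ⟨a, le_rfl, hab⟩ hnn fun t ht h => hcf t ⟨by linarith, ht.2⟩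

lemma antiEnvelope_Ici_pos {f : ℝ → ℝ} {a : ℝ} (hf : ContinuousOn f (Ici a))
    (hfpos : ∀ t ∈ Ici a, 0 < f t) (u : ℝ) : 0 < antiEnvelope f (Ici a) u := by
  obtain ⟨c, hc, hcf⟩ := (isCompact_Icc (a := a) (b := u + 1)).exists_pos_forall_le
    (hf.mono Icc_subset_Ici_self) fun t ht => hfpos t ht.1
  exact (lt_min hc one_pos).trans_le <| min_le_antiEnvelope nonempty_Ici
    (fun t ht => (hfpos t ht).le) fun t ht h => hcf t ⟨ht, h.le⟩

lemma PosDef.monoEnvelope_Icc {κ : ℝ → ℝ} (hκ : PosDef κ) (hκc : ContinuousOn κ (Ici 0))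
    {b : ℝ} (hb : 0 ≤ b) : PosDef (monoEnvelope κ (Icc 0 b)) := by
  have hnn : ∀ t ∈ Icc 0 b, 0 ≤ κ t := fun t ht => hκ.nonneg ht.1
  refine ⟨le_antisymm ((monoEnvelope_le_self hnn ⟨le_rfl, hb⟩).trans_eq hκ.1)
    (monoEnvelope_nonneg (nonempty_Icc.2 hb) hnn 0), fun s hs => ?_⟩
  exact monoEnvelope_Icc_pos hb (hκc.mono (Ioc_subset_Icc_self.trans Icc_subset_Ici_self))
    (fun t ht => hκ.2 t ht.1) hκ.1.ge hs

lemma classKinf_mul_one_add {g : ℝ → ℝ} (hc : ContinuousOn g (Ici 0))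
    (hmono : MonotoneOn g (Ici 0)) (hg : PosDef g) : ClassKinf fun s => g s * (1 + s) := by
  refine ⟨⟨hc.mul (continuousOn_const.add continuousOn_id), fun x hx y hy hxy => ?_,
    by simp [hg.1], fun s hs => mul_nonneg (hg.nonneg hs) (by linarith)⟩, fun M => ?_⟩
  · calc g x * (1 + x) ≤ g y * (1 + x) := by
          gcongr
          · linarith [mem_Ici.1 hx]
          · exact hmono hx hy hxy.le
      _ < g y * (1 + y) := by
          gcongr
          exact hg.2 y (lt_of_le_of_lt hx hxy)
  · have hg1 := hg.2 1 one_pos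
    set s := max 1 (M / g 1)
    have hs1 : 1 ≤ s := le_max_left _ _
    refine ⟨s, by positivity, ?_⟩
    calc M ≤ g 1 * s := (div_le_iff₀' hg1).1 (le_max_right _ _)
      _ < g 1 * (1 + s) := by gcongr; linarith
      _ ≤ g s * (1 + s) := by
          gcongr
          exact hmono (mem_Ici.2 zero_le_one) (mem_Ici.2 (by linarith)) hs1

lemma classL_div_one_add {h : ℝ → ℝ} (hc : ContinuousOn h (Ici 0))
    (hanti : AntitoneOn h (Ici 0)) (hpos : ∀ s, 0 ≤ s → 0 < h s) :
    ClassL fun s => h s / (1 + s) := by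
  refine ⟨hc.div (continuousOn_const.add continuousOn_id) fun s hs => by linarith [mem_Ici.1 hs],
    fun x hx y hy hxy => ?_, fun s hs => div_pos (hpos s hs) (by linarith), ?_⟩
  · calc h y / (1 + y) < h y / (1 + x) := by
          gcongr
          · exact hpos y hy
          · linarith [mem_Ici.1 hx]
      _ ≤ h x / (1 + x) := by
          gcongr
          · linarith [mem_Ici.1 hx]
          · exact hanti hx hy hxy.le
  · have hlim : Tendsto (fun s : ℝ => h 0 * (1 + s)⁻¹) atTop (nhds 0) := by
      simpa using (tendsto_inv_atTop_zero.comp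
        (tendsto_atTop_add_const_left _ 1 tendsto_id)).const_mul (h 0)
    refine squeeze_zero' ?_ ?_ hlim
    · filter_upwards [eventually_ge_atTop 0] with s hs
      exact div_nonneg (hpos s hs).le (by linarith)
    · filter_upwards [eventually_ge_atTop 0] with s hs
      rw [div_eq_mul_inv]
      gcongr
      exact hanti self_mem_Ici hs hs

lemma min_mul_div_le_min {a b c : ℝ} (ha : 0 ≤ a) (hc : 0 ≤ c) (hcb : c ≤ b) :
    min a b * (c / b) ≤ min a c := by
  rcases hc.trans hcb |>.eq_or_lt with rfl | hb
  · simp [le_antisymm hcb hc, ha]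
  refine le_min ?_ ?_
  · exact (mul_le_of_le_one_right (le_min ha hb.le) ((div_le_one hb).2 hcb)).trans
      (min_le_left _ _)
  · calc min a b * (c / b) ≤ b * (c / b) := by
          gcongr
          exact min_le_right _ _
      _ = c := mul_div_cancel₀ _ hb.ne'

theorem stmt0_general (κ : ℝ → ℝ) (hκc : ContinuousOn κ (Set.Ici 0)) (hκpd : PosDef κ) :
    ∃ ρ₁ ρ₂ : ℝ → ℝ, ClassKinf ρ₁ ∧ ClassL ρ₂ ∧
      ∀ s, 0 ≤ s → ρ₁ s * ρ₂ s ≤ κ s := by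
  have hnn₁ : ∀ t ∈ Icc (0 : ℝ) 1, 0 ≤ κ t := fun t ht => hκpd.nonneg ht.1
  have hnn₂ : ∀ t ∈ Ici (1 : ℝ), 0 ≤ κ t := fun t ht =>
    hκpd.nonneg (zero_le_one.trans ht)
  set A := monoEnvelope κ (Icc 0 1)
  set B := antiEnvelope κ (Ici 1)
  have hA : PosDef A := hκpd.monoEnvelope_Icc hκc zero_le_one
  have hAmono : Monotone A := monotone_monoEnvelope (nonempty_Icc.2 zero_le_one) hnn₁
  have hBpos : ∀ s, 0 < B s :=
    antiEnvelope_Ici_pos (hκc.mono (Ici_subset_Ici.2 zero_le_one))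
    fun t ht => hκpd.2 t (zero_lt_one.trans_le ht)
  have hBanti : Antitone B := antitone_antiEnvelope nonempty_Ici hnn₂
  refine ⟨fun s => min (A s) (B 0) * (1 + s), fun s => B s / B 0 / (1 + s), ?_, ?_, ?_⟩
  · exact classKinf_mul_one_add
      ((lipschitzWith_monoEnvelope (nonempty_Icc.2 zero_le_one) hnn₁).continuous.min
        continuous_const).continuousOn
      (fun x _ y _ h => min_le_min_right _ (hAmono h))
      ⟨by simp [hA.1, (hBpos 0).le], fun s hs => lt_min (hA.2 s hs) (hBpos 0)⟩
  · exact classL_div_one_add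
      ((continuous_antiEnvelope nonempty_Ici hnn₂).div_const _).continuousOn
      (fun x _ y _ h => div_le_div_of_nonneg_right (hBanti h) (hBpos 0).le)
      fun s _ => div_pos (hBpos s) (hBpos 0)
  · intro s hs
    calc min (A s) (B 0) * (1 + s) * (B s / B 0 / (1 + s))
        = min (A s) (B 0) * (B s / B 0) := by field_simp
      _ ≤ min (A s) (B s) := min_mul_div_le_min (hA.nonneg hs) (hBpos s).le (hBanti hs)
      _ ≤ κ s := by
          rcases le_or_gt s 1 with h | h
          · exact (min_le_left _ _).trans (monoEnvelope_le_self hnn₁ ⟨hs, h⟩)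
          · exact (min_le_right _ _).trans (antiEnvelope_le_self hnn₂ (mem_Ici.2 h.le))

/-- Lemma 3.5: any continuous positive definite `κ` dominates a product
`ρ₁ · ρ₂` with `ρ₁ ∈ K∞` and `ρ₂ ∈ L`. -/
theorem stmt0 (κ : ℝ → ℝ) (hκc : ContinuousOn κ (Set.Ici 0)) (hκpd : PosDef κ)
    (hκnn : ∀ s, 0 ≤ s → 0 ≤ κ s) :
    ∃ ρ₁ ρ₂ : ℝ → ℝ, ClassKinf ρ₁ ∧ ClassL ρ₂ ∧
      ∀ s, 0 ≤ s → ρ₁ s * ρ₂ s ≤ κ s :=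
  stmt0_general κ hκc hκpd
end
end

section
/- Let α : ℝ≥0 → ℝ≥0 be locally Lipschitz and positive definite, let 0 < t̃ ≤ ∞, let v : [0, t̃) → ℝ≥0 be measurable and locally essentially bounded, and let y : [0, t̃) → ℝ≥0 be lower semicontinuous satisfying y(t₂) ≤ y(t₁) + ∫_{t₁}^{t₂} (−α(y(s)) + v(s)) ds for all 0 ≤ t₁ ≤ t₂ < t̃. Let w be the solution of the initial value problem w'(t) = −α(w(t)) + v(t), w(0) = y(0). Then w(t) is defined for all t ∈ [0, t̃) and y(t) ≤ w(t) for all t ∈ [0, t̃). -/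
open MeasureTheory Set Filter
open scoped NNReal Topology

noncomputable section

/-- The domain `[0, t̃)` where `t̃ ∈ (0, ∞]` is coded as an `ℝ≥0∞`. -/
def Dom (ttop : ENNReal) : Set ℝ := {t : ℝ | 0 ≤ t ∧ ENNReal.ofReal t < ttop}

/-- A locally Lipschitz real function is Lipschitz on every `Icc`. -/
lemma exists_lipschitzOnWith_Icc (f : ℝ → ℝ) (hf : LocallyLipschitz f) (a b : ℝ) :
    ∃ K : ℝ≥0, LipschitzOnWith K f (Icc a b) := by
  -- choose local data
  have hloc : ∀ x : ℝ, ∃ K : ℝ≥0, ∃ ε > 0, LipschitzOnWith K f (Metric.ball x ε) := by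
    intro x
    obtain ⟨K, t, ht, hK⟩ := hf x
    obtain ⟨ε, hε, hball⟩ := Metric.mem_nhds_iff.1 ht
    exact ⟨K, ε, hε, hK.mono hball⟩
  choose Kf εf hεf hKf using hloc
  -- finite subcover
  obtain ⟨T, hT⟩ := isCompact_Icc.elim_finite_subcover (fun x : ℝ => Metric.ball x (εf x))
    (fun x => Metric.isOpen_ball) (fun x _ => mem_iUnion.2 ⟨x, Metric.mem_ball_self (hεf x)⟩)
  -- Lebesgue number for the finite cover
  obtain ⟨δ, hδ, hleb⟩ := lebesgue_number_lemma_of_metric isCompact_Icc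
    (fun i : T => Metric.isOpen_ball (x := (i : ℝ)) (ε := εf i))
    (by intro x hx
        have := hT hx
        simp only [mem_iUnion] at this
        obtain ⟨i, hi, hmem⟩ := this
        exact mem_iUnion.2 ⟨⟨i, hi⟩, hmem⟩)
  set K : ℝ≥0 := T.sup Kf with hKdef
  have hKi : ∀ i ∈ T, Kf i ≤ K := fun i hi => Finset.le_sup hi
  -- short distance estimate
  have hshort : ∀ u ∈ Icc a b, ∀ w ∈ Icc a b, dist u w < δ →
      dist (f u) (f w) ≤ (K : ℝ) * dist u w := by
    intro u hu w hw hd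
    obtain ⟨i, hi⟩ := hleb u hu
    have hu' : u ∈ Metric.ball (i : ℝ) (εf i) := hi (Metric.mem_ball_self hδ)
    have hw' : w ∈ Metric.ball (i : ℝ) (εf i) := hi (by simpa [Metric.mem_ball, dist_comm] using hd)
    calc dist (f u) (f w) ≤ (Kf i : ℝ) * dist u w := (hKf i).dist_le_mul u hu' w hw'
      _ ≤ (K : ℝ) * dist u w := by
          gcongr
          exact_mod_cast hKi i i.2
  -- chaining
  refine ⟨K, LipschitzOnWith.of_dist_le_mul ?_⟩
  have key : ∀ n : ℕ, ∀ u ∈ Icc a b, ∀ w ∈ Icc a b, u ≤ w → w - u ≤ n * (δ/2) →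
      dist (f u) (f w) ≤ (K : ℝ) * (w - u) := by
    intro n
    induction n with
    | zero =>
      intro u hu w hw huw hle
      have : w = u := le_antisymm (by linarith [hle]) huw
      simp [this]
    | succ n ih =>
      intro u hu w hw huw hle
      by_cases h : w - u ≤ δ/2
      · have : dist u w < δ := by
          rw [Real.dist_eq, abs_of_nonpos (by linarith)]
          linarith
        have h2 := hshort u hu w hw this
        have hd : dist u w = w - u := by
          rw [Real.dist_eq, abs_of_nonpos (by linarith)]; ring
        rwa [hd] at h2
      · push_neg at h
        set m := w - δ/2 with hm
        have hmab : m ∈ Icc a b := ⟨by simp only [hm]; linarith [hu.1], by simp only [hm]; linarith [hw.2]⟩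
        have h1 : dist (f u) (f m) ≤ (K : ℝ) * (m - u) := by
          apply ih u hu m hmab (by simp only [hm]; linarith)
          push_cast
          simp only [hm]
          push_cast at hle
          linarith
        have h2 : dist (f m) (f w) ≤ (K : ℝ) * (w - m) := by
          have hdm : dist m w < δ := by
            rw [Real.dist_eq, abs_of_nonpos (by simp only [hm]; linarith)]
            simp only [hm]; linarith
          have h3 := hshort m hmab w hw hdm
          have hd : dist m w = w - m := by
            rw [Real.dist_eq, abs_of_nonpos (by simp only [hm]; linarith)]; ring
          rwa [hd] at h3
        calc dist (f u) (f w) ≤ dist (f u) (f m) + dist (f m) (f w) := dist_triangle _ _ _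
          _ ≤ (K : ℝ) * (m - u) + (K : ℝ) * (w - m) := add_le_add h1 h2
          _ = (K : ℝ) * (w - u) := by ring
  intro u hu w hw
  rcases le_total u w with h | h
  · obtain ⟨n, hn⟩ := exists_nat_ge ((w - u) / (δ/2))
    have := key n u hu w hw h (by
      rw [div_le_iff₀ (by linarith)] at hn
      linarith)
    rwa [Real.dist_eq (x := u) (y := w), abs_of_nonpos (by linarith), neg_sub]
  · obtain ⟨n, hn⟩ := exists_nat_ge ((u - w) / (δ/2))
    have := key n w hw u hu h (by
      rw [div_le_iff₀ (by linarith)] at hn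
      linarith)
    rw [dist_comm] at this
    rwa [Real.dist_eq (x := u) (y := w), abs_of_nonneg (by linarith)]


lemma exists_sol (α : ℝ → ℝ) (hαlip : LocallyLipschitz α)
    (hα0 : α 0 = 0) (hαnn : ∀ s, 0 ≤ s → 0 ≤ α s)
    (v : ℝ → ℝ) (b : ℝ) (hb : 0 ≤ b)
    (hvnn : ∀ t ∈ Icc 0 b, 0 ≤ v t)
    (hvint : IntegrableOn v (Icc 0 b)) (y0 : ℝ) (hy0 : 0 ≤ y0) :
    ∃ w : ℝ → ℝ, Continuous w ∧
      (∀ t, t ∈ Icc 0 b → w t = y0 + ∫ s in (0:ℝ)..t, (-α (w s) + v s)) ∧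
      (∀ t, t ∈ Icc 0 b → 0 ≤ w t ∧ w t ≤ y0 + ∫ s in (0:ℝ)..t, v s) ∧
      (∀ g : ℝ → ℝ, Continuous g →
        (∀ t, t ∈ Icc 0 b → g t = y0 + ∫ s in (0:ℝ)..t, (-α (g s) + v s)) →
        (∀ t, t ∈ Icc 0 b → 0 ≤ g t ∧ g t ≤ y0 + ∫ s in (0:ℝ)..t, v s) →
        ∀ t, t ∈ Icc 0 b → g t = w t) := by
  -- interval integrability of v on subintervals
  have hvii : ∀ t₁ t₂ : ℝ, t₁ ∈ Icc 0 b → t₂ ∈ Icc 0 b → IntervalIntegrable v volume t₁ t₂ := by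
    intro t₁ t₂ h₁ h₂
    rw [intervalIntegrable_iff]
    refine hvint.mono_set fun x hx => ?_
    rw [uIoc_eq_union] at hx
    rcases hx with hx | hx
    · exact ⟨le_trans h₁.1 hx.1.le, le_trans hx.2 h₂.2⟩
    · exact ⟨le_trans h₂.1 hx.1.le, le_trans hx.2 h₁.2⟩
  have h0b : (0:ℝ) ∈ Icc (0:ℝ) b := ⟨le_refl 0, hb⟩
  have hbb : b ∈ Icc (0:ℝ) b := ⟨hb, le_refl b⟩
  have hIv_nonneg : 0 ≤ ∫ s in (0:ℝ)..b, v s :=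
    intervalIntegral.integral_nonneg hb (fun u hu => hvnn u hu)
  have hIv_mono : ∀ t ∈ Icc (0:ℝ) b, (∫ s in (0:ℝ)..t, v s) ≤ ∫ s in (0:ℝ)..b, v s := by
    intro t ht
    have h1 := intervalIntegral.integral_add_adjacent_intervals (hvii 0 t h0b ht) (hvii t b ht hbb)
    have h2 : 0 ≤ ∫ s in t..b, v s :=
      intervalIntegral.integral_nonneg ht.2 (fun u hu => hvnn u ⟨le_trans ht.1 hu.1, hu.2⟩)
    linarith
  have hIv_nonneg' : ∀ t ∈ Icc (0:ℝ) b, 0 ≤ ∫ s in (0:ℝ)..t, v s := fun t ht =>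
    intervalIntegral.integral_nonneg ht.1 (fun u hu => hvnn u ⟨hu.1, le_trans hu.2 ht.2⟩)
  set M : ℝ := y0 + (∫ s in (0:ℝ)..b, v s) + 1 with hMdef
  have hM1 : 1 ≤ M := by linarith
  have hM0 : 0 ≤ M := by linarith
  -- the clamp
  set c : ℝ → ℝ := fun s => min (max s 0) M with hcdef
  have hc_mem : ∀ s, c s ∈ Icc (0:ℝ) M := fun s =>
    ⟨le_min (le_max_right s 0) hM0, min_le_right _ _⟩
  have hc_lip : ∀ x y : ℝ, |c x - c y| ≤ |x - y| := by
    intro x y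
    calc |min (max x 0) M - min (max y 0) M| ≤ max |max x 0 - max y 0| |M - M| :=
          abs_min_sub_min_le_max _ _ _ _
      _ ≤ |x - y| := by
          rw [sub_self, abs_zero]
          exact max_le (abs_max_sub_max_le_abs _ _ _) (abs_nonneg _)
  have hc_cont : Continuous c := ((continuous_id.max continuous_const).min continuous_const)
  have hc_id : ∀ s ∈ Icc (0:ℝ) M, c s = s := by
    intro s hs
    simp only [hcdef]
    rw [max_eq_left hs.1, min_eq_left hs.2]
  have hc0 : ∀ s : ℝ, s ≤ 0 → c s = 0 := by
    intro s hs
    simp only [hcdef]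
    rw [max_eq_right hs, min_eq_left hM0]
  obtain ⟨Kα, hKα⟩ := exists_lipschitzOnWith_Icc α hαlip 0 M
  set αc : ℝ → ℝ := fun s => α (c s) with hαcdef
  have hαc_lip : ∀ x y : ℝ, |αc x - αc y| ≤ (Kα : ℝ) * |x - y| := by
    intro x y
    have h1 := hKα.dist_le_mul (c x) (hc_mem x) (c y) (hc_mem y)
    rw [Real.dist_eq, Real.dist_eq] at h1
    exact le_trans h1 (mul_le_mul_of_nonneg_left (hc_lip x y) Kα.coe_nonneg)
  have hαc_cont : Continuous αc := hαlip.continuous.comp hc_cont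
  have hαc_nonneg : ∀ s, 0 ≤ αc s := fun s => hαnn _ (hc_mem s).1
  have hαc_eq : ∀ s ∈ Icc (0:ℝ) M, αc s = α s := by
    intro s hs
    simp only [hαcdef]
    rw [hc_id s hs]
  have hαc0 : ∀ s : ℝ, s ≤ 0 → αc s = 0 := by
    intro s hs
    simp only [hαcdef]
    rw [hc0 s hs, hα0]
  have hαc_bdd : ∀ s : ℝ, |αc s| ≤ (Kα:ℝ) * M := by
    intro s
    have h1 := hKα.dist_le_mul (c s) (hc_mem s) (c 0) (hc_mem 0)
    have hc00 : c 0 = 0 := hc0 0 le_rfl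
    rw [Real.dist_eq, Real.dist_eq, hc00, hα0, sub_zero, sub_zero] at h1
    refine le_trans h1 (mul_le_mul_of_nonneg_left ?_ Kα.coe_nonneg)
    rw [abs_of_nonneg (hc_mem s).1]
    exact (hc_mem s).2
  -- the projection on [0, b]
  set proj : ℝ → ℝ := fun t => min (max t 0) b with hpdef
  have hp_mem : ∀ t, proj t ∈ Icc (0:ℝ) b := fun t => ⟨le_min (le_max_right t 0) hb, min_le_right _ _⟩
  have hp_id : ∀ t ∈ Icc (0:ℝ) b, proj t = t := by
    intro t ht
    simp only [hpdef]
    rw [max_eq_left ht.1, min_eq_left ht.2]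
  have hp_cont : Continuous proj := (continuous_id.max continuous_const).min continuous_const
  -- integrability of the Picard integrand
  have hψint : ∀ (f : ℝ → ℝ), Continuous f → ∀ t₁ t₂ : ℝ, t₁ ∈ Icc (0:ℝ) b → t₂ ∈ Icc (0:ℝ) b →
      IntervalIntegrable (fun s => v s - αc (f s)) volume t₁ t₂ := by
    intro f hf t₁ t₂ h₁ h₂
    exact (hvii t₁ t₂ h₁ h₂).sub ((hαc_cont.comp hf).intervalIntegrable _ _)
  have hprim : ∀ (f : ℝ → ℝ), Continuous f →
      ContinuousOn (fun u => ∫ s in (0:ℝ)..u, (v s - αc (f s))) (Icc 0 b) := by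
    intro f hf
    have h1 : IntegrableOn (fun s => v s - αc (f s)) (uIcc 0 b) volume := by
      rw [uIcc_of_le hb]
      exact hvint.sub ((hαc_cont.comp hf).integrableOn_Icc)
    have h2 := intervalIntegral.continuousOn_primitive_interval h1
    rwa [uIcc_of_le hb] at h2
  -- bound for the Picard operator
  have haii : IntervalIntegrable (fun s => |v s| + (Kα:ℝ)*M) volume 0 b := by
    rw [intervalIntegrable_iff]
    have h1 : IntegrableOn (fun s => |v s| + (Kα:ℝ)*M) (Icc 0 b) volume :=
      hvint.abs.add (integrableOn_const measure_Icc_lt_top.ne)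
    refine MeasureTheory.IntegrableOn.mono_set h1 ?_
    rw [uIoc_of_le hb]
    exact Ioc_subset_Icc_self
  have hTbdd : ∀ (f : ℝ → ℝ), Continuous f → ∀ t : ℝ,
      |y0 + ∫ s in (0:ℝ)..(proj t), (v s - αc (f s))| ≤
        |y0| + ∫ s in (0:ℝ)..b, (|v s| + (Kα:ℝ)*M) := by
    intro f hf t
    have hpt := hp_mem t
    refine le_trans (abs_add_le _ _) (add_le_add le_rfl ?_)
    calc |∫ s in (0:ℝ)..(proj t), (v s - αc (f s))|
        ≤ ∫ s in (0:ℝ)..(proj t), |v s - αc (f s)| :=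
          intervalIntegral.abs_integral_le_integral_abs hpt.1
      _ ≤ ∫ s in (0:ℝ)..(proj t), (|v s| + (Kα:ℝ)*M) := by
          apply intervalIntegral.integral_mono_on hpt.1
          · exact (hψint f hf 0 (proj t) h0b hpt).abs
          · exact haii.mono_set (by
              rw [uIcc_of_le hpt.1, uIcc_of_le hb]
              exact Icc_subset_Icc le_rfl hpt.2)
          · intro s hs
            refine le_trans (abs_sub _ _) (add_le_add le_rfl ?_)
            exact hαc_bdd (f s)
      _ ≤ ∫ s in (0:ℝ)..b, (|v s| + (Kα:ℝ)*M) := by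
          apply intervalIntegral.integral_mono_interval le_rfl hpt.1 hpt.2 _ haii
          filter_upwards with s
          positivity
  -- the Picard operator
  set T : BoundedContinuousFunction ℝ ℝ → BoundedContinuousFunction ℝ ℝ := fun f =>
    BoundedContinuousFunction.ofNormedAddCommGroup
      (fun t => y0 + ∫ s in (0:ℝ)..(proj t), (v s - αc (f s)))
      (continuous_const.add ((hprim f f.continuous).comp_continuous hp_cont hp_mem))
      (|y0| + ∫ s in (0:ℝ)..b, (|v s| + (Kα:ℝ)*M))
      (fun t => by simpa [Real.norm_eq_abs] using hTbdd f f.continuous t) with hTdef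
  have hT_apply : ∀ (f : BoundedContinuousFunction ℝ ℝ) (t : ℝ),
      T f t = y0 + ∫ s in (0:ℝ)..(proj t), (v s - αc (f s)) := fun f t => rfl
  -- iterated contraction estimate
  have hiter : ∀ n : ℕ, ∀ f g : BoundedContinuousFunction ℝ ℝ, ∀ t : ℝ,
      |T^[n] f t - T^[n] g t| ≤ (Kα:ℝ)^n * (proj t)^n / (n.factorial) * dist f g := by
    intro n
    induction n with
    | zero =>
      intro f g t
      have h1 := BoundedContinuousFunction.dist_coe_le_dist (f := f) (g := g) t
      rw [Real.dist_eq] at h1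
      simpa using h1
    | succ n ih =>
      intro f g t
      rw [Function.iterate_succ_apply', Function.iterate_succ_apply']
      set F := T^[n] f with hF
      set G := T^[n] g with hG
      set p := proj t with hp
      have hpt : p ∈ Icc (0:ℝ) b := hp_mem t
      have hint1 : IntervalIntegrable (fun s => v s - αc (F s)) volume 0 p :=
        hψint F F.continuous 0 p h0b hpt
      have hint2 : IntervalIntegrable (fun s => v s - αc (G s)) volume 0 p :=
        hψint G G.continuous 0 p h0b hpt
      have key : T F t - T G t = ∫ s in (0:ℝ)..p, (αc (G s) - αc (F s)) := by
        rw [hT_apply, hT_apply]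
        have h1 : ∀ s : ℝ, αc (G s) - αc (F s) = (v s - αc (F s)) - (v s - αc (G s)) := by
          intro s; ring
        simp_rw [h1]
        rw [intervalIntegral.integral_sub hint1 hint2]
        ring
      rw [key]
      calc |∫ s in (0:ℝ)..p, (αc (G s) - αc (F s))|
          ≤ ∫ s in (0:ℝ)..p, |αc (G s) - αc (F s)| :=
            intervalIntegral.abs_integral_le_integral_abs hpt.1
        _ ≤ ∫ s in (0:ℝ)..p, ((Kα:ℝ)^(n+1) * dist f g / n.factorial * s^n) := by
            apply intervalIntegral.integral_mono_on hpt.1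
            · exact (((hαc_cont.comp G.continuous).sub
                (hαc_cont.comp F.continuous)).abs).intervalIntegrable _ _
            · exact Continuous.intervalIntegrable (continuous_const.mul (continuous_pow n)) _ _
            · intro s hs
              have hsb : s ∈ Icc (0:ℝ) b := ⟨hs.1, le_trans hs.2 hpt.2⟩
              have h3 := ih f g s
              rw [hp_id s hsb] at h3
              calc |αc (G s) - αc (F s)| ≤ (Kα:ℝ) * |G s - F s| := hαc_lip (G s) (F s)
                _ ≤ (Kα:ℝ) * ((Kα:ℝ)^n * s^n / n.factorial * dist f g) := by
                    apply mul_le_mul_of_nonneg_left _ Kα.coe_nonneg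
                    rw [abs_sub_comm]
                    exact h3
                _ = (Kα:ℝ)^(n+1) * dist f g / n.factorial * s^n := by ring
        _ = (Kα:ℝ)^(n+1) * dist f g / n.factorial * ((p^(n+1) - 0^(n+1))/(n+1)) := by
            rw [intervalIntegral.integral_const_mul, integral_pow]
        _ = (Kα:ℝ)^(n+1) * p^(n+1) / ((n+1).factorial) * dist f g := by
            rw [Nat.factorial_succ, zero_pow (Nat.succ_ne_zero n)]
            have hfac : (0:ℝ) < n.factorial := by positivity
            push_cast
            field_simp
            ring
  have hdist_le : ∀ n : ℕ, ∀ f g : BoundedContinuousFunction ℝ ℝ,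
      dist (T^[n] f) (T^[n] g) ≤ ((Kα:ℝ)^n * b^n / n.factorial) * dist f g := by
    intro n f g
    have hC : 0 ≤ ((Kα:ℝ)^n * b^n / n.factorial) * dist f g :=
      mul_nonneg (div_nonneg (mul_nonneg (pow_nonneg Kα.coe_nonneg _)
        (pow_nonneg hb _)) (Nat.cast_nonneg _)) dist_nonneg
    apply (BoundedContinuousFunction.dist_le hC).2
    intro t
    rw [Real.dist_eq]
    refine le_trans (hiter n f g t) ?_
    gcongr
    exact (hp_mem t).2
  -- choose n making the iterate a contraction
  obtain ⟨n, hn⟩ : ∃ n : ℕ, (Kα:ℝ)^n * b^n / n.factorial < 1 := by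
    have h := FloorSemiring.tendsto_pow_div_factorial_atTop ((Kα:ℝ) * b)
    obtain ⟨n, hn⟩ := (h.eventually_lt_const one_pos).exists
    exact ⟨n, by rwa [mul_pow] at hn⟩
  have hcnn : 0 ≤ (Kα:ℝ)^n * b^n / n.factorial :=
    div_nonneg (mul_nonneg (pow_nonneg Kα.coe_nonneg _) (pow_nonneg hb _)) (Nat.cast_nonneg _)
  set cn : ℝ≥0 := Real.toNNReal ((Kα:ℝ)^n * b^n / n.factorial) with hcndef
  have hcn_coe : (cn : ℝ) = (Kα:ℝ)^n * b^n / n.factorial := Real.coe_toNNReal _ hcnn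
  have hcontr : ContractingWith cn (T^[n]) := by
    constructor
    · rw [← NNReal.coe_lt_coe, hcn_coe, NNReal.coe_one]
      exact hn
    · apply LipschitzWith.of_dist_le_mul
      intro f g
      rw [hcn_coe]
      exact hdist_le n f g
  set W : BoundedContinuousFunction ℝ ℝ := ContractingWith.fixedPoint (T^[n]) hcontr with hWdef
  have hWfix : Function.IsFixedPt (T^[n]) W := ContractingWith.fixedPoint_isFixedPt hcontr
  have hfixed_unique : ∀ g : BoundedContinuousFunction ℝ ℝ, T g = g → g = W := by
    intro g hg
    exact hcontr.fixedPoint_unique (Function.IsFixedPt.iterate hg n)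
  have hTW : T W = W := by
    have h1 : Function.IsFixedPt (T^[n]) (T W) := by
      show T^[n] (T W) = T W
      rw [← Function.iterate_succ_apply T n W, Function.iterate_succ_apply' T n W]
      rw [show T^[n] W = W from hWfix]
    exact hcontr.fixedPoint_unique h1
  -- the equation for W with the truncated nonlinearity
  have heqc : ∀ t ∈ Icc (0:ℝ) b, W t = y0 + ∫ s in (0:ℝ)..t, (v s - αc (W s)) := by
    intro t ht
    conv_lhs => rw [← hTW]
    rw [hT_apply, hp_id t ht]
  have hW0 : W 0 = y0 := by
    rw [heqc 0 h0b, intervalIntegral.integral_same, add_zero]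
  -- upper bound
  have hWub : ∀ t ∈ Icc (0:ℝ) b, W t ≤ y0 + ∫ s in (0:ℝ)..t, v s := by
    intro t ht
    rw [heqc t ht]
    apply add_le_add le_rfl
    apply intervalIntegral.integral_mono_on ht.1 (hψint W W.continuous 0 t h0b ht) (hvii 0 t h0b ht)
    intro s hs
    have := hαc_nonneg (W s)
    linarith
  -- additivity of the equation
  have hadd : ∀ t₁ t₂ : ℝ, t₁ ∈ Icc (0:ℝ) b → t₂ ∈ Icc (0:ℝ) b →
      W t₂ = W t₁ + ∫ s in t₁..t₂, (v s - αc (W s)) := by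
    intro t₁ t₂ h₁ h₂
    rw [heqc t₁ h₁, heqc t₂ h₂]
    have h3 : IntervalIntegrable (fun s => v s - αc (W s)) volume 0 t₁ :=
      hψint W W.continuous 0 t₁ h0b h₁
    have h4 : IntervalIntegrable (fun s => v s - αc (W s)) volume t₁ t₂ :=
      hψint W W.continuous t₁ t₂ h₁ h₂
    have h5 := intervalIntegral.integral_add_adjacent_intervals h3 h4
    linarith
  -- lower bound: W stays nonnegative
  have hWlb : ∀ t ∈ Icc (0:ℝ) b, 0 ≤ W t := by
    intro t ht
    by_contra hneg
    push_neg at hneg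
    set S : Set ℝ := {s | s ∈ Icc 0 t ∧ 0 ≤ W s} with hSdef
    have hS0 : (0:ℝ) ∈ S := ⟨⟨le_refl 0, ht.1⟩, by rw [hW0]; exact hy0⟩
    have hSne : S.Nonempty := ⟨0, hS0⟩
    have hSbdd : BddAbove S := ⟨t, fun x hx => hx.1.2⟩
    have hSclosed : IsClosed S := by
      have : S = Icc 0 t ∩ W ⁻¹' (Ici 0) := by
        ext x; simp [hSdef, and_comm]
      rw [this]
      exact isClosed_Icc.inter (isClosed_Ici.preimage W.continuous)
    set t₀ : ℝ := sSup S with ht₀def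
    have ht₀S : t₀ ∈ S := hSclosed.csSup_mem hSne hSbdd
    have ht₀Icc : t₀ ∈ Icc (0:ℝ) b := ⟨ht₀S.1.1, le_trans ht₀S.1.2 ht.2⟩
    have ht₀lt : t₀ < t := by
      rcases lt_or_eq_of_le ht₀S.1.2 with h | h
      · exact h
      · exfalso; rw [h] at ht₀S; linarith [ht₀S.2]
    have hIoc_neg : ∀ s ∈ Ioc t₀ t, W s < 0 := by
      intro s hs
      by_contra hns
      push_neg at hns
      have : s ∈ S := ⟨⟨le_trans ht₀S.1.1 hs.1.le, hs.2⟩, hns⟩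
      exact absurd (le_csSup hSbdd this) (not_le.2 hs.1)
    have hWt₀_le : W t₀ ≤ 0 := by
      by_contra hpos
      push_neg at hpos
      have hopen : IsOpen {s : ℝ | 0 < W s} := isOpen_lt continuous_const W.continuous
      obtain ⟨ε, hε, hball⟩ := Metric.isOpen_iff.1 hopen t₀ hpos
      set s₁ : ℝ := min (t₀ + ε/2) t with hs₁def
      have hs₁Ioc : s₁ ∈ Ioc t₀ t := ⟨lt_min (by linarith) ht₀lt, min_le_right _ _⟩
      have hs₁ball : s₁ ∈ Metric.ball t₀ ε := by
        rw [Metric.mem_ball, Real.dist_eq, abs_of_nonneg (by linarith [hs₁Ioc.1.le])]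
        calc s₁ - t₀ ≤ (t₀ + ε/2) - t₀ := by linarith [min_le_left (t₀ + ε/2) t]
          _ < ε := by linarith
      exact absurd (hball hs₁ball) (not_lt.2 (hIoc_neg s₁ hs₁Ioc).le)
    have hWt₀ : W t₀ = 0 := le_antisymm hWt₀_le ht₀S.2
    have h6 : W t = W t₀ + ∫ s in t₀..t, (v s - αc (W s)) :=
      hadd t₀ t ht₀Icc ht
    have h7 : 0 ≤ ∫ s in t₀..t, (v s - αc (W s)) := by
      apply intervalIntegral.integral_nonneg ht₀lt.le
      intro u hu
      have huIcc : u ∈ Icc (0:ℝ) b := ⟨le_trans ht₀Icc.1 hu.1, le_trans hu.2 ht.2⟩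
      rcases eq_or_lt_of_le hu.1 with h | h
      · rw [← h, hWt₀, hαc0 0 le_rfl]
        have h8 := hvnn t₀ ht₀Icc
        linarith
      · have := hIoc_neg u ⟨h, hu.2⟩
        rw [hαc0 (W u) this.le]
        have := hvnn u huIcc
        linarith
    rw [hWt₀, zero_add] at h6
    linarith [h6 ▸ h7]
  have hWrange : ∀ s ∈ Icc (0:ℝ) b, W s ∈ Icc (0:ℝ) M := by
    intro s hs
    refine ⟨hWlb s hs, ?_⟩
    have h1 := hWub s hs
    have h2 := hIv_mono s hs
    rw [hMdef]; linarith
  refine ⟨fun t => W t, W.continuous, ?_, ?_, ?_⟩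
  · intro t ht
    show W t = y0 + ∫ s in (0:ℝ)..t, (-α (W s) + v s)
    rw [heqc t ht]
    congr 1
    apply intervalIntegral.integral_congr
    intro s hs
    rw [uIcc_of_le ht.1] at hs
    have hsb : s ∈ Icc (0:ℝ) b := ⟨hs.1, le_trans hs.2 ht.2⟩
    show v s - αc (W s) = -α (W s) + v s
    rw [hαc_eq (W s) (hWrange s hsb)]
    ring
  · intro t ht
    exact ⟨hWlb t ht, hWub t ht⟩
  · intro g hgcont hgeq hgbnd t ht
    have hgrange : ∀ s ∈ Icc (0:ℝ) b, g s ∈ Icc (0:ℝ) M := by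
      intro s hs
      refine ⟨(hgbnd s hs).1, ?_⟩
      have h1 := (hgbnd s hs).2
      have h2 := hIv_mono s hs
      rw [hMdef]; linarith
    have hgp_bdd : ∀ u : ℝ, ‖g (proj u)‖ ≤ M := by
      intro u
      have h3 := hgrange (proj u) (hp_mem u)
      rw [Real.norm_eq_abs, abs_of_nonneg h3.1]
      exact h3.2
    set G : BoundedContinuousFunction ℝ ℝ :=
      BoundedContinuousFunction.ofNormedAddCommGroup (fun u => g (proj u))
        (hgcont.comp hp_cont) M hgp_bdd with hGdef
    have hG_apply : ∀ u : ℝ, G u = g (proj u) := fun u => rfl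
    have hGfix : T G = G := by
      apply BoundedContinuousFunction.ext
      intro u
      rw [hT_apply, hG_apply]
      have hpu := hp_mem u
      have h1 : (∫ s in (0:ℝ)..(proj u), (v s - αc (G s))) =
          ∫ s in (0:ℝ)..(proj u), (-α (g s) + v s) := by
        apply intervalIntegral.integral_congr
        intro s hs
        rw [uIcc_of_le hpu.1] at hs
        have hsb : s ∈ Icc (0:ℝ) b := ⟨hs.1, le_trans hs.2 hpu.2⟩
        show v s - αc (G s) = -α (g s) + v s
        rw [hG_apply s, hp_id s hsb, hαc_eq (g s) (hgrange s hsb)]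
        ring
      rw [h1, ← hgeq (proj u) hpu]
    have hGW : G = W := hfixed_unique G hGfix
    show g t = W t
    have h2 : g t = G t := by rw [hG_apply t, hp_id t ht]
    rw [h2, hGW]


/-- Lemma 3.7, comparison with the solution of the ODE:
if a lower semicontinuous `y` satisfies the integral inequality, then the solution `w` of
`w' = -α(w) + v`, `w(0) = y(0)` exists on all of `[0, t̃)` and dominates `y`. -/
theorem stmt1 (α : ℝ → ℝ) (hαlip : LocallyLipschitz α) (hαpd : PosDef α)
    (hαnn : ∀ s, 0 ≤ s → 0 ≤ α s)
    (ttop : ENNReal) (httop : 0 < ttop)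
    (v : ℝ → ℝ) (hvmeas : Measurable v) (hvnn : ∀ t ∈ Dom ttop, 0 ≤ v t)
    (hvbdd : ∀ b ∈ Dom ttop, ∃ C, ∀ᵐ s ∂volume, s ∈ Set.Icc (0 : ℝ) b → |v s| ≤ C)
    (y : ℝ → ℝ) (hylsc : LowerSemicontinuousOn y (Dom ttop))
    (hynn : ∀ t ∈ Dom ttop, 0 ≤ y t)
    (hyint : ∀ t₁ t₂ : ℝ, 0 ≤ t₁ → t₁ ≤ t₂ → t₂ ∈ Dom ttop →
      IntervalIntegrable (fun s => -α (y s) + v s) volume t₁ t₂)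
    (hineq : ∀ t₁ t₂ : ℝ, 0 ≤ t₁ → t₁ ≤ t₂ → t₂ ∈ Dom ttop →
      y t₂ ≤ y t₁ + ∫ s in t₁..t₂, (-α (y s) + v s)) :
    ∃ w : ℝ → ℝ, ContinuousOn w (Dom ttop) ∧
      (∀ t ∈ Dom ttop, w t = y 0 + ∫ s in (0 : ℝ)..t, (-α (w s) + v s)) ∧
      ∀ t ∈ Dom ttop, y t ≤ w t := by
  classical
  have h0dom : (0:ℝ) ∈ Dom ttop := ⟨le_rfl, by simpa [ENNReal.ofReal_zero] using httop⟩
  have hy0 : 0 ≤ y 0 := hynn 0 h0dom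
  have hIccDom : ∀ b ∈ Dom ttop, Icc (0:ℝ) b ⊆ Dom ttop := by
    intro b hb s hs
    exact ⟨hs.1, lt_of_le_of_lt (ENNReal.ofReal_le_ofReal hs.2) hb.2⟩
  have hvint : ∀ b ∈ Dom ttop, IntegrableOn v (Icc (0:ℝ) b) volume := by
    intro b hb
    obtain ⟨C, hC⟩ := hvbdd b hb
    apply Integrable.mono' (integrable_const C) hvmeas.aestronglyMeasurable.restrict
    rw [ae_restrict_iff' measurableSet_Icc]
    filter_upwards [hC] with s hs hmem
    simpa [Real.norm_eq_abs] using hs hmem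
  -- the family of solutions
  have hex : ∀ b : ℝ, b ∈ Dom ttop →
      ∃ f : ℝ → ℝ, Continuous f ∧
      (∀ t, t ∈ Icc 0 b → f t = y 0 + ∫ s in (0:ℝ)..t, (-α (f s) + v s)) ∧
      (∀ t, t ∈ Icc 0 b → 0 ≤ f t ∧ f t ≤ y 0 + ∫ s in (0:ℝ)..t, v s) ∧
      (∀ g : ℝ → ℝ, Continuous g →
        (∀ t, t ∈ Icc 0 b → g t = y 0 + ∫ s in (0:ℝ)..t, (-α (g s) + v s)) →
        (∀ t, t ∈ Icc 0 b → 0 ≤ g t ∧ g t ≤ y 0 + ∫ s in (0:ℝ)..t, v s) →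
        ∀ t, t ∈ Icc 0 b → g t = f t) := by
    intro b hb
    exact exists_sol α hαlip hαpd.1 hαnn v b hb.1
      (fun t ht => hvnn t (hIccDom b hb ht)) (hvint b hb) (y 0) hy0
  choose! W hWc hWeq hWbnd hWuniq using hex
  -- consistency of the family
  have hcons : ∀ b b' : ℝ, b ∈ Dom ttop → b' ∈ Dom ttop → b ≤ b' →
      ∀ u ∈ Icc (0:ℝ) b, W b' u = W b u := by
    intro b b' hb hb' hbb'
    refine hWuniq b hb (W b') (hWc b' hb') ?_ ?_
    · intro u hu
      exact hWeq b' hb' u ⟨hu.1, le_trans hu.2 hbb'⟩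
    · intro u hu
      exact hWbnd b' hb' u ⟨hu.1, le_trans hu.2 hbb'⟩
  set w : ℝ → ℝ := fun t => W t t with hwdef
  have hwW : ∀ t ∈ Dom ttop, ∀ s ∈ Icc (0:ℝ) t, w s = W t s := by
    intro t ht s hs
    have hsdom : s ∈ Dom ttop := hIccDom t ht hs
    exact (hcons s t hsdom ht hs.2 s ⟨hs.1, le_rfl⟩).symm
  -- a strictly larger point of the domain
  have hbig : ∀ t ∈ Dom ttop, ∃ b ∈ Dom ttop, t < b := by
    intro t ht
    rcases eq_or_ne ttop ⊤ with h | h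
    · exact ⟨t + 1, ⟨by linarith [ht.1], by rw [h]; exact ENNReal.ofReal_lt_top⟩, by linarith⟩
    · have hr : t < ttop.toReal := by
        have := ht.2
        rw [← ENNReal.ofReal_toReal h] at this
        exact lt_of_not_ge fun hcon => absurd this
          (not_lt.2 (ENNReal.ofReal_le_ofReal hcon))
      have h2 : ENNReal.ofReal ((t + ttop.toReal)/2) < ttop := by
        conv_rhs => rw [← ENNReal.ofReal_toReal h]
        exact (ENNReal.ofReal_lt_ofReal_iff_of_nonneg (by linarith [ht.1, hr])).2 (by linarith [hr])
      exact ⟨(t + ttop.toReal)/2, ⟨by linarith [ht.1, hr], h2⟩, by linarith [hr]⟩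
  -- continuity
  have hwcont : ContinuousOn w (Dom ttop) := by
    intro t₀ ht₀
    obtain ⟨b, hb, htb⟩ := hbig t₀ ht₀
    have h1 : ContinuousWithinAt (W b) (Dom ttop) t₀ := (hWc b hb).continuousWithinAt
    apply ContinuousWithinAt.congr_of_eventuallyEq h1
    · have hA : ∀ᶠ s in 𝓝[Dom ttop] t₀, s < b :=
        Filter.Eventually.filter_mono nhdsWithin_le_nhds (eventually_lt_nhds htb)
      filter_upwards [hA, eventually_mem_nhdsWithin] with s hs1 hs2
      exact hwW b hb s ⟨hs2.1, hs1.le⟩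
    · exact hwW b hb t₀ ⟨ht₀.1, htb.le⟩
  have hweq : ∀ t ∈ Dom ttop, w t = y 0 + ∫ s in (0:ℝ)..t, (-α (w s) + v s) := by
    intro t ht
    have h1 := hWeq t ht t ⟨ht.1, le_rfl⟩
    have h2 : (∫ s in (0:ℝ)..t, (-α (W t s) + v s)) = ∫ s in (0:ℝ)..t, (-α (w s) + v s) := by
      apply intervalIntegral.integral_congr
      intro s hs
      rw [uIcc_of_le ht.1] at hs
      show -α (W t s) + v s = -α (w s) + v s
      rw [hwW t ht s hs]
    show W t t = _
    rw [h1, h2]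
  refine ⟨w, hwcont, hweq, ?_⟩
  intro t ht
  set ω : ℝ → ℝ := W t with hωdef
  have hωc : Continuous ω := hWc t ht
  have hteq0 : ω 0 = y 0 := by
    have h1 := hWeq t ht 0 ⟨le_rfl, ht.1⟩
    rwa [intervalIntegral.integral_same, add_zero] at h1
  have hvii : ∀ t₁ t₂ : ℝ, t₁ ∈ Icc (0:ℝ) t → t₂ ∈ Icc (0:ℝ) t →
      IntervalIntegrable v volume t₁ t₂ := by
    intro t₁ t₂ h₁ h₂
    rw [intervalIntegrable_iff]
    refine (hvint t ht).mono_set fun x hx => ?_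
    rw [uIoc_eq_union] at hx
    rcases hx with hx | hx
    · exact ⟨le_trans h₁.1 hx.1.le, le_trans hx.2 h₂.2⟩
    · exact ⟨le_trans h₂.1 hx.1.le, le_trans hx.2 h₁.2⟩
  have hωii : ∀ t₁ t₂ : ℝ, t₁ ∈ Icc (0:ℝ) t → t₂ ∈ Icc (0:ℝ) t →
      IntervalIntegrable (fun s => -α (ω s) + v s) volume t₁ t₂ := by
    intro t₁ t₂ h₁ h₂
    exact (((hαlip.continuous.comp hωc).neg).intervalIntegrable _ _).add (hvii t₁ t₂ h₁ h₂)
  have h0t : (0:ℝ) ∈ Icc (0:ℝ) t := ⟨le_rfl, ht.1⟩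
  have htt : t ∈ Icc (0:ℝ) t := ⟨ht.1, le_rfl⟩
  have hωadd : ∀ t₁ t₂ : ℝ, t₁ ∈ Icc (0:ℝ) t → t₂ ∈ Icc (0:ℝ) t →
      ω t₂ = ω t₁ + ∫ s in t₁..t₂, (-α (ω s) + v s) := by
    intro t₁ t₂ h₁ h₂
    have e₁ := hWeq t ht t₁ h₁
    have e₂ := hWeq t ht t₂ h₂
    have h5 := intervalIntegral.integral_add_adjacent_intervals
      (hωii 0 t₁ h0t h₁) (hωii t₁ t₂ h₁ h₂)
    show W t t₂ = W t t₁ + _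
    rw [e₁, e₂, ← h5]
    ring
  set B : ℝ := y 0 + ∫ s in (0:ℝ)..t, v s with hBdef
  have hIvmono : ∀ s ∈ Icc (0:ℝ) t, (∫ u in (0:ℝ)..s, v u) ≤ ∫ u in (0:ℝ)..t, v u := by
    intro s hs
    have h1 := intervalIntegral.integral_add_adjacent_intervals
      (hvii 0 s h0t hs) (hvii s t hs htt)
    have h2 : 0 ≤ ∫ u in s..t, v u :=
      intervalIntegral.integral_nonneg hs.2
        (fun u hu => hvnn u (hIccDom t ht ⟨le_trans hs.1 hu.1, hu.2⟩))
    linarith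
  have hωB : ∀ s ∈ Icc (0:ℝ) t, 0 ≤ ω s ∧ ω s ≤ B := by
    intro s hs
    obtain ⟨h1, h2⟩ := hWbnd t ht s hs
    exact ⟨h1, le_trans h2 (by rw [hBdef]; linarith [hIvmono s hs])⟩
  have hyB : ∀ s ∈ Icc (0:ℝ) t, 0 ≤ y s ∧ y s ≤ B := by
    intro s hs
    have hsdom : s ∈ Dom ttop := hIccDom t ht hs
    refine ⟨hynn s hsdom, ?_⟩
    have h1 := hineq 0 s le_rfl hs.1 hsdom
    have h2 : (∫ u in (0:ℝ)..s, (-α (y u) + v u)) ≤ ∫ u in (0:ℝ)..s, v u := by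
      apply intervalIntegral.integral_mono_on hs.1 (hyint 0 s le_rfl hs.1 hsdom)
        (hvii 0 s h0t hs)
      intro u hu
      have h3 := hαnn (y u) (hynn u (hIccDom t ht ⟨hu.1, le_trans hu.2 hs.2⟩))
      linarith
    rw [hBdef]
    linarith [hIvmono s hs]
  obtain ⟨K, hK⟩ := exists_lipschitzOnWith_Icc α hαlip 0 B
  have hmain : ∀ s ∈ Icc (0:ℝ) t, y s ≤ ω s := by
    by_contra hcon
    push_neg at hcon
    obtain ⟨t₁, ht₁, ht₁pos⟩ := hcon
    rw [← sub_pos] at ht₁pos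
    set S : Set ℝ := {σ | σ ∈ Icc 0 t₁ ∧ y σ - ω σ ≤ 0} with hSdef
    have hS0 : (0:ℝ) ∈ S := ⟨⟨le_rfl, ht₁.1⟩, by rw [hteq0]; linarith⟩
    have hSne : S.Nonempty := ⟨0, hS0⟩
    have hSbdd : BddAbove S := ⟨t₁, fun x hx => hx.1.2⟩
    set τ : ℝ := sSup S with hτdef
    have hτmem : τ ∈ Icc (0:ℝ) t₁ := ⟨le_csSup hSbdd hS0, csSup_le hSne (fun x hx => hx.1.2)⟩
    have hτt : τ ∈ Icc (0:ℝ) t := ⟨hτmem.1, le_trans hτmem.2 ht₁.2⟩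
    have hτdom : τ ∈ Dom ttop := hIccDom t ht hτt
    have hpos : ∀ σ ∈ Ioc τ t₁, 0 < y σ - ω σ := by
      intro σ hσ
      by_contra hns
      push_neg at hns
      have hmem : σ ∈ S := ⟨⟨le_trans hτmem.1 hσ.1.le, hσ.2⟩, hns⟩
      exact absurd (le_csSup hSbdd hmem) (not_le.2 hσ.1)
    have hτle : y τ - ω τ ≤ 0 := by
      by_contra hpos'
      push_neg at hpos'
      set ε' : ℝ := (y τ - ω τ)/2 with hε'
      have h1 := hylsc τ hτdom (ω τ + ε') (by rw [hε']; linarith)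
      have h2 : ∀ᶠ σ in 𝓝[Dom ttop] τ, ω σ < ω τ + ε' :=
        Filter.Eventually.filter_mono nhdsWithin_le_nhds
          ((hωc.tendsto τ).eventually (eventually_lt_nhds (by linarith)))
      have h3 := h1.and h2
      rw [eventually_nhdsWithin_iff] at h3
      obtain ⟨ε, hεpos, hball⟩ := Metric.eventually_nhds_iff.1 h3
      obtain ⟨σ, hσS, hσlt⟩ := exists_lt_of_lt_csSup hSne
        (show τ - ε/2 < sSup S by rw [← hτdef]; linarith)
      have hσle : σ ≤ τ := le_csSup hSbdd hσS
      have hσdom : σ ∈ Dom ttop := hIccDom t ht ⟨hσS.1.1, le_trans hσS.1.2 ht₁.2⟩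
      have hσball : dist σ τ < ε := by
        rw [Real.dist_eq, abs_of_nonpos (by linarith)]
        linarith
      have h4 := hball hσball hσdom
      have h5 := hσS.2
      linarith [h4.1, h4.2]
    have hτlt : τ < t₁ := by
      rcases lt_or_eq_of_le hτmem.2 with h | h
      · exact h
      · exfalso; rw [h] at hτle; linarith
    set δ : ℝ := min (1/(2*((K:ℝ)+1))) (t₁ - τ) with hδdef
    have hKpos : (0:ℝ) < (K:ℝ) + 1 := by positivity
    have hδpos : 0 < δ := lt_min (by positivity) (by linarith)
    have hδle : δ ≤ t₁ - τ := min_le_right _ _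
    set t' : ℝ := τ + δ with ht'def
    have ht'Ioc : t' ∈ Ioc τ t₁ := ⟨by linarith, by linarith⟩
    set u : ℝ → ℝ := fun σ => y σ - ω σ with hudef
    set φ : ℝ := sSup (u '' Icc τ t') with hφdef
    have himgne : (u '' Icc τ t').Nonempty :=
      ⟨u τ, mem_image_of_mem _ (left_mem_Icc.2 (by linarith))⟩
    have hsubt : Icc τ t' ⊆ Icc (0:ℝ) t := fun x hx =>
      ⟨le_trans hτmem.1 hx.1, le_trans hx.2 (le_trans ht'Ioc.2 ht₁.2)⟩
    have himgbdd : BddAbove (u '' Icc τ t') := by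
      refine ⟨B, ?_⟩
      rintro x ⟨σ, hσ, rfl⟩
      have h1 := hyB σ (hsubt hσ)
      have h2 := hωB σ (hsubt hσ)
      simp only [hudef]
      linarith [h1.2, h2.1]
    have hle_φ : ∀ σ ∈ Icc τ t', u σ ≤ φ :=
      fun σ hσ => le_csSup himgbdd (mem_image_of_mem _ hσ)
    have hφpos : 0 < φ :=
      lt_of_lt_of_le (hpos t' ht'Ioc) (hle_φ t' (right_mem_Icc.2 (by linarith)))
    have hbound : ∀ σ ∈ Icc τ t', u σ ≤ φ/2 := by
      intro σ hσ
      rcases eq_or_lt_of_le hσ.1 with h | h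
      · simp only [hudef]; rw [← h]; linarith
      · have hσt : σ ∈ Icc (0:ℝ) t := hsubt hσ
        have hσdom : σ ∈ Dom ttop := hIccDom t ht hσt
        have hy1 := hineq τ σ hτmem.1 h.le hσdom
        have hω1 := hωadd τ σ hτt hσt
        have hfun : (fun x => (-α (y x) + v x) - (-α (ω x) + v x))
            = fun x => α (ω x) - α (y x) := by
          funext x; ring
        have hsub : (∫ x in τ..σ, (-α (y x) + v x)) - (∫ x in τ..σ, (-α (ω x) + v x))
            = ∫ x in τ..σ, (α (ω x) - α (y x)) := by
          rw [← intervalIntegral.integral_sub (hyint τ σ hτmem.1 h.le hσdom)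
            (hωii τ σ hτt hσt)]
          rw [hfun]
        have hii2 : IntervalIntegrable (fun x => α (ω x) - α (y x)) volume τ σ := by
          have h6 := (hyint τ σ hτmem.1 h.le hσdom).sub (hωii τ σ hτt hσt)
          rwa [hfun] at h6
        have hint : (∫ x in τ..σ, (α (ω x) - α (y x))) ≤ ∫ x in τ..σ, ((K:ℝ) * φ) := by
          apply intervalIntegral.integral_mono_ae_restrict h.le hii2 intervalIntegrable_const
          show ∀ᵐ x ∂(volume.restrict (Icc τ σ)), α (ω x) - α (y x) ≤ (K:ℝ) * φ
          rw [ae_restrict_iff' measurableSet_Icc]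
          filter_upwards [compl_mem_ae_iff.2 (Real.volume_singleton (a := τ))] with x hx hmem
          have hxτ : x ≠ τ := by simpa using hx
          have hxIoc : x ∈ Ioc τ σ := ⟨lt_of_le_of_ne hmem.1 (Ne.symm hxτ), hmem.2⟩
          have hxt' : x ∈ Icc τ t' := ⟨hxIoc.1.le, le_trans hxIoc.2 hσ.2⟩
          have hxt : x ∈ Icc (0:ℝ) t := hsubt hxt'
          have hupos : 0 < y x - ω x :=
            hpos x ⟨hxIoc.1, le_trans hxIoc.2 (le_trans hσ.2 ht'Ioc.2)⟩
          have hyx := hyB x hxt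
          have hωx := hωB x hxt
          have hKd := hK.dist_le_mul (ω x) ⟨hωx.1, hωx.2⟩ (y x) ⟨hyx.1, hyx.2⟩
          rw [Real.dist_eq, Real.dist_eq] at hKd
          have h7 : |α (ω x) - α (y x)| ≤ (K:ℝ) * (y x - ω x) := by
            refine le_trans hKd ?_
            rw [abs_of_nonpos (by linarith)]
            apply mul_le_mul_of_nonneg_left (by linarith) K.coe_nonneg
          have h8 : y x - ω x ≤ φ := hle_φ x hxt'
          calc α (ω x) - α (y x) ≤ |α (ω x) - α (y x)| := le_abs_self _
            _ ≤ (K:ℝ) * (y x - ω x) := h7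
            _ ≤ (K:ℝ) * φ := mul_le_mul_of_nonneg_left h8 K.coe_nonneg
        have hconst : (∫ x in τ..σ, ((K:ℝ) * φ)) = (K:ℝ) * φ * (σ - τ) := by
          rw [intervalIntegral.integral_const, smul_eq_mul]; ring
        have hσδ : σ - τ ≤ δ := by
          have := hσ.2
          rw [ht'def] at this
          linarith
        have hfinal : (K:ℝ) * φ * (σ - τ) ≤ φ/2 := by
          have h9 : (K:ℝ) * φ * (σ - τ) ≤ (K:ℝ) * φ * δ :=
            mul_le_mul_of_nonneg_left hσδ (by positivity)
          have h10 : δ ≤ 1/(2*((K:ℝ)+1)) := min_le_left _ _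
          have h11 : (K:ℝ) * φ * δ ≤ (K:ℝ) * φ * (1/(2*((K:ℝ)+1))) :=
            mul_le_mul_of_nonneg_left h10 (by positivity)
          have h12 : (K:ℝ) * φ * (1/(2*((K:ℝ)+1))) ≤ φ/2 := by
            rw [mul_one_div, div_le_div_iff₀ (by positivity) (by norm_num)]
            nlinarith [hφpos.le, K.coe_nonneg]
          linarith
        simp only [hudef]
        linarith [hy1, hω1, hsub, hint, hconst, hfinal, hτle]
    have hcontra : φ ≤ φ/2 :=
      csSup_le himgne (by rintro x ⟨σ, hσ, rfl⟩; exact hbound σ hσ)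
    linarith
  exact hmain t htt
end
end

section
/- Given any continuous positive definite function α : ℝ≥0 → ℝ≥0, there exists a class KL function β with the following property: for any 0 < t̃ ≤ ∞, any lower semicontinuous function y : [0, t̃) → ℝ≥0, and any measurable locally essentially bounded v : [0, t̃) → ℝ≥0, if y(t₂) ≤ y(t₁) + ∫_{t₁}^{t₂} (−α(y(s)) + v(s)) ds for all 0 ≤ t₁ ≤ t₂ < t̃, then y(t) ≤ β(y(0), t) + ∫₀^t 2v(s) ds for all t ∈ [0, t̃). -/
open MeasureTheory Set Filter

noncomputable section

namespace Stmt2Aux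

variable (α : ℝ → ℝ)

/-- Infimum of `α` on `[ε, max (2σ) ε]`. -/
def mfun (ε σ : ℝ) : ℝ := sInf (α '' Set.Icc ε (max (2*σ) ε))

def SS (σ t : ℝ) : Set ℝ := {ε : ℝ | 0 ≤ ε ∧ ε ≤ σ ∧ t * mfun α ε σ ≤ σ}

def Bfun (σ t : ℝ) : ℝ := sSup (SS α σ t)

variable {α}

lemma icc_nonempty (ε σ : ℝ) : (Set.Icc ε (max (2*σ) ε)).Nonempty :=
  ⟨ε, le_refl ε, le_max_right _ _⟩

lemma image_nonempty (ε σ : ℝ) : (α '' Set.Icc ε (max (2*σ) ε)).Nonempty :=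
  (icc_nonempty ε σ).image α

lemma image_bddBelow (hαnn : ∀ s, 0 ≤ s → 0 ≤ α s) {ε σ : ℝ} (hε : 0 ≤ ε) :
    BddBelow (α '' Set.Icc ε (max (2*σ) ε)) := by
  refine ⟨0, fun x hx => ?_⟩
  rcases hx with ⟨u, hu, rfl⟩
  exact hαnn u (hε.trans hu.1)

lemma mfun_nonneg (hαnn : ∀ s, 0 ≤ s → 0 ≤ α s) {ε σ : ℝ} (hε : 0 ≤ ε) :
    0 ≤ mfun α ε σ :=
  le_csInf (image_nonempty ε σ) (by rintro x ⟨u, hu, rfl⟩; exact hαnn u (hε.trans hu.1))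

lemma mfun_le (hαnn : ∀ s, 0 ≤ s → 0 ≤ α s) {ε σ x : ℝ} (hε : 0 ≤ ε)
    (hx : x ∈ Set.Icc ε (max (2*σ) ε)) : mfun α ε σ ≤ α x :=
  csInf_le (image_bddBelow hαnn hε) ⟨x, hx, rfl⟩

lemma mfun_zero (hα0 : α 0 = 0) (hαnn : ∀ s, 0 ≤ s → 0 ≤ α s) {σ : ℝ} (hσ : 0 ≤ σ) :
    mfun α 0 σ = 0 := by
  refine le_antisymm ?_ (mfun_nonneg hαnn le_rfl)
  have h0 : (0:ℝ) ∈ Set.Icc (0:ℝ) (max (2*σ) 0) := ⟨le_rfl, le_max_right _ _⟩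
  simpa [hα0] using mfun_le hαnn le_rfl h0

/-- `mfun` is antitone in `σ`. -/
lemma mfun_anti_sigma (hαnn : ∀ s, 0 ≤ s → 0 ≤ α s) {ε σ σ' : ℝ} (hε : 0 ≤ ε)
    (hσ : σ ≤ σ') : mfun α ε σ' ≤ mfun α ε σ := by
  refine csInf_le_csInf (image_bddBelow hαnn hε) (image_nonempty ε σ) ?_
  refine Set.image_mono (Set.Icc_subset_Icc le_rfl ?_)
  exact max_le_max (by linarith) le_rfl

/-- `mfun` is monotone in `ε` as long as `ε' ≤ 2σ`. -/
lemma mfun_mono_eps (hαnn : ∀ s, 0 ≤ s → 0 ≤ α s) {ε ε' σ : ℝ} (hε : 0 ≤ ε)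
    (hee : ε ≤ ε') (he2 : ε' ≤ 2*σ) : mfun α ε σ ≤ mfun α ε' σ := by
  refine csInf_le_csInf (image_bddBelow hαnn hε) (image_nonempty ε' σ) ?_
  refine Set.image_mono ?_
  have h1 : max (2*σ) ε' = 2*σ := max_eq_left he2
  have h2 : ε ≤ 2*σ := hee.trans he2
  rw [h1]
  exact Set.Icc_subset_Icc hee (le_max_left _ _)

lemma mfun_pos (hαc : ContinuousOn α (Set.Ici 0)) (hαpd : PosDef α) {ε σ : ℝ}
    (hε : 0 < ε) : 0 < mfun α ε σ := by
  have hKne : (Set.Icc ε (max (2*σ) ε)).Nonempty := icc_nonempty ε σ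
  have hKsub : Set.Icc ε (max (2*σ) ε) ⊆ Set.Ici (0:ℝ) :=
    fun x hx => le_trans hε.le hx.1
  obtain ⟨x₀, hx₀, hmin⟩ := isCompact_Icc.exists_isMinOn hKne (hαc.mono hKsub)
  have hx₀pos : 0 < x₀ := lt_of_lt_of_le hε hx₀.1
  have : 0 < α x₀ := hαpd.2 x₀ hx₀pos
  refine lt_of_lt_of_le this ?_
  exact le_csInf (image_nonempty ε σ) (by rintro y ⟨u, hu, rfl⟩; exact hmin hu)

lemma SS_zero_mem (hα0 : α 0 = 0) (hαnn : ∀ s, 0 ≤ s → 0 ≤ α s) {σ : ℝ} (hσ : 0 ≤ σ)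
    (t : ℝ) : (0:ℝ) ∈ SS α σ t := by
  refine ⟨le_rfl, hσ, ?_⟩
  rw [mfun_zero hα0 hαnn hσ]
  simpa using hσ

lemma SS_bddAbove (σ t : ℝ) : BddAbove (SS α σ t) :=
  ⟨σ, fun x hx => hx.2.1⟩

lemma Bfun_nonneg (hα0 : α 0 = 0) (hαnn : ∀ s, 0 ≤ s → 0 ≤ α s) {σ : ℝ} (hσ : 0 ≤ σ)
    (t : ℝ) : 0 ≤ Bfun α σ t :=
  le_csSup (SS_bddAbove σ t) (SS_zero_mem hα0 hαnn hσ t)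

lemma Bfun_le_self (hα0 : α 0 = 0) (hαnn : ∀ s, 0 ≤ s → 0 ≤ α s) {σ : ℝ} (hσ : 0 ≤ σ)
    (t : ℝ) : Bfun α σ t ≤ σ :=
  csSup_le ⟨0, SS_zero_mem hα0 hαnn hσ t⟩ (fun x hx => hx.2.1)

lemma Bfun_of_neg {σ : ℝ} (hσ : σ < 0) (t : ℝ) : Bfun α σ t = 0 := by
  have : SS α σ t = ∅ := by
    ext x; simp only [SS, Set.mem_setOf_eq, Set.mem_empty_iff_false, iff_false]
    rintro ⟨h1, h2, -⟩; linarith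
  rw [Bfun, this, Real.sSup_empty]

/-- `Bfun` is monotone in `σ` (for `t ≥ 0`). -/
lemma Bfun_mono_sigma (hα0 : α 0 = 0) (hαnn : ∀ s, 0 ≤ s → 0 ≤ α s) {t : ℝ} (ht : 0 ≤ t) :
    Monotone (fun σ => Bfun α σ t) := by
  intro σ σ' hσσ
  simp only
  rcases lt_or_ge σ 0 with hσ | hσ
  · rw [Bfun_of_neg hσ]
    rcases lt_or_ge σ' 0 with h' | h'
    · rw [Bfun_of_neg h']
    · exact Bfun_nonneg hα0 hαnn h' t
  · refine csSup_le ⟨0, SS_zero_mem hα0 hαnn hσ t⟩ (fun ε hε => ?_)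
    refine le_csSup (SS_bddAbove σ' t) ?_
    refine ⟨hε.1, hε.2.1.trans hσσ, ?_⟩
    have h1 : mfun α ε σ' ≤ mfun α ε σ := mfun_anti_sigma hαnn hε.1 hσσ
    calc t * mfun α ε σ' ≤ t * mfun α ε σ := by
          exact mul_le_mul_of_nonneg_left h1 ht
      _ ≤ σ := hε.2.2
      _ ≤ σ' := hσσ

/-- `Bfun` is antitone in `t` on `t ≥ 0`. -/
lemma Bfun_anti_t (hα0 : α 0 = 0) (hαnn : ∀ s, 0 ≤ s → 0 ≤ α s) {σ t t' : ℝ}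
    (ht : 0 ≤ t) (htt : t ≤ t') : Bfun α σ t' ≤ Bfun α σ t := by
  rcases lt_or_ge σ 0 with hσ | hσ
  · rw [Bfun_of_neg hσ, Bfun_of_neg hσ]
  · refine csSup_le_csSup (SS_bddAbove σ t) ⟨0, SS_zero_mem hα0 hαnn hσ t'⟩ ?_
    rintro ε ⟨h1, h2, h3⟩
    refine ⟨h1, h2, ?_⟩
    calc t * mfun α ε σ ≤ t' * mfun α ε σ :=
          mul_le_mul_of_nonneg_right htt (mfun_nonneg hαnn h1)
      _ ≤ σ := h3

/-- For `t` large, `Bfun σ t` is small. -/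
lemma Bfun_small (hαc : ContinuousOn α (Set.Ici 0)) (hα0 : α 0 = 0)
    (hαpd : PosDef α) (hαnn : ∀ s, 0 ≤ s → 0 ≤ α s) {σ ε : ℝ} (hσ : 0 ≤ σ)
    (hε : 0 < ε) (hεσ : ε ≤ σ) {t : ℝ} (ht : σ / mfun α ε σ < t) :
    Bfun α σ t ≤ ε := by
  have hm : 0 < mfun α ε σ := mfun_pos hαc hαpd hε
  refine csSup_le ⟨0, SS_zero_mem hα0 hαnn hσ t⟩ (fun ε' hε' => ?_)
  by_contra hlt
  push_neg at hlt
  obtain ⟨h1, h2, h3⟩ := hε'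
  have hmm : mfun α ε σ ≤ mfun α ε' σ :=
    mfun_mono_eps hαnn hε.le hlt.le (by linarith)
  have : σ < t * mfun α ε' σ := by
    have h4 : σ < t * mfun α ε σ := (div_lt_iff₀ hm).mp ht
    have ht0 : 0 ≤ t := by
      by_contra h; push_neg at h
      have : t * mfun α ε σ < 0 := mul_neg_of_neg_of_pos h hm
      linarith
    nlinarith
  linarith

lemma Bfun_tendsto (hαc : ContinuousOn α (Set.Ici 0)) (hα0 : α 0 = 0)
    (hαpd : PosDef α) (hαnn : ∀ s, 0 ≤ s → 0 ≤ α s) {σ : ℝ} (hσ : 0 ≤ σ) :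
    Tendsto (Bfun α σ) atTop (nhds 0) := by
  rw [tendsto_order]
  constructor
  · intro a ha
    exact Eventually.of_forall (fun t => lt_of_lt_of_le ha (Bfun_nonneg hα0 hαnn hσ t))
  · intro a ha
    rcases le_or_gt σ (a/2) with h | h
    · refine Eventually.of_forall (fun t => ?_)
      calc Bfun α σ t ≤ σ := Bfun_le_self hα0 hαnn hσ t
        _ ≤ a/2 := h
        _ < a := by linarith
    · -- use ε := min (a/2) σ > 0
      set e := min (a/2) σ with he
      have he0 : 0 < e := lt_min (by linarith) (lt_of_le_of_lt (by linarith) h)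
      have heσ : e ≤ σ := min_le_right _ _
      have hev : ∀ᶠ t in atTop, σ / mfun α e σ < t := eventually_gt_atTop _
      filter_upwards [hev] with t ht
      calc Bfun α σ t ≤ e := Bfun_small hαc hα0 hαpd hαnn hσ he0 heσ ht
        _ ≤ a/2 := min_le_left _ _
        _ < a := by linarith

end Stmt2Aux
namespace Stmt2Aux

variable (α : ℝ → ℝ)

def beta1 (s t : ℝ) : ℝ := ∫ u in (1:ℝ)..2, Bfun α (s*u) (max t 0)

def beta2 (s t : ℝ) : ℝ := ∫ τ in (t-1)..t, beta1 α s τ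

def betaF (s t : ℝ) : ℝ := beta2 α s t + s * Real.exp (-t)

variable {α}

section Beta1

variable (hα0 : α 0 = 0) (hαnn : ∀ s, 0 ≤ s → 0 ≤ α s)
include hα0 hαnn

lemma Bfun_monot (t : ℝ) {s : ℝ} (hs : 0 ≤ s) :
    Monotone (fun u => Bfun α (s*u) (max t 0)) := by
  have h1 : Monotone (fun u : ℝ => s * u) := fun a b hab => mul_le_mul_of_nonneg_left hab hs
  exact (Bfun_mono_sigma hα0 hαnn (le_max_right t 0)).comp h1

lemma Bfun_integrable (t : ℝ) {s : ℝ} (hs : 0 ≤ s) (a b : ℝ) :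
    IntervalIntegrable (fun u => Bfun α (s*u) (max t 0)) volume a b :=
  (Bfun_monot hα0 hαnn t hs).intervalIntegrable

lemma beta1_nonneg (t : ℝ) {s : ℝ} (hs : 0 ≤ s) : 0 ≤ beta1 α s t := by
  refine intervalIntegral.integral_nonneg (by norm_num) (fun u hu => ?_)
  exact Bfun_nonneg hα0 hαnn (by nlinarith [hu.1]) _

lemma beta1_le (t : ℝ) {s : ℝ} (hs : 0 ≤ s) : beta1 α s t ≤ 2*s := by
  rw [beta1]
  calc (∫ u in (1:ℝ)..2, Bfun α (s*u) (max t 0))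
      ≤ ∫ _ in (1:ℝ)..2, 2*s := by
        refine intervalIntegral.integral_mono_on (by norm_num)
          (Bfun_integrable hα0 hαnn t hs 1 2) intervalIntegrable_const (fun u hu => ?_)
        calc Bfun α (s*u) (max t 0) ≤ s*u := Bfun_le_self hα0 hαnn (by nlinarith [hu.1]) _
          _ ≤ 2*s := by nlinarith [hu.1, hu.2]
    _ = 2*s := by rw [intervalIntegral.integral_const]; norm_num

lemma beta1_mono_s (t : ℝ) : MonotoneOn (fun s => beta1 α s t) (Set.Ici 0) := by
  intro s hs s' hs' hss
  simp only [beta1]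
  refine intervalIntegral.integral_mono_on (by norm_num)
    (Bfun_integrable hα0 hαnn t hs 1 2) (Bfun_integrable hα0 hαnn t hs' 1 2)
    (fun u hu => ?_)
  exact Bfun_mono_sigma hα0 hαnn (le_max_right t 0) (by nlinarith [hu.1, (hs : (0:ℝ) ≤ s)])

lemma beta1_anti_t {s : ℝ} (hs : 0 ≤ s) : Antitone (fun t => beta1 α s t) := by
  intro t t' htt
  simp only [beta1]
  refine intervalIntegral.integral_mono_on (by norm_num)
    (Bfun_integrable hα0 hαnn t' hs 1 2) (Bfun_integrable hα0 hαnn t hs 1 2)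
    (fun u hu => ?_)
  exact Bfun_anti_t hα0 hαnn (le_max_right t 0) (max_le_max htt le_rfl)

lemma beta1_ge_Bfun (t : ℝ) {s : ℝ} (hs : 0 ≤ s) :
    Bfun α s (max t 0) ≤ beta1 α s t := by
  rw [beta1]
  calc Bfun α s (max t 0) = ∫ _ in (1:ℝ)..2, Bfun α s (max t 0) := by
        rw [intervalIntegral.integral_const]; norm_num
    _ ≤ ∫ u in (1:ℝ)..2, Bfun α (s*u) (max t 0) := by
        refine intervalIntegral.integral_mono_on (by norm_num)
          intervalIntegrable_const (Bfun_integrable hα0 hαnn t hs 1 2) (fun u hu => ?_)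
        exact Bfun_mono_sigma hα0 hαnn (le_max_right t 0) (by nlinarith [hu.1])

lemma beta1_le_B2s (t : ℝ) {s : ℝ} (hs : 0 ≤ s) :
    beta1 α s t ≤ Bfun α (2*s) (max t 0) := by
  rw [beta1]
  calc (∫ u in (1:ℝ)..2, Bfun α (s*u) (max t 0))
      ≤ ∫ _ in (1:ℝ)..2, Bfun α (2*s) (max t 0) := by
        refine intervalIntegral.integral_mono_on (by norm_num)
          (Bfun_integrable hα0 hαnn t hs 1 2) intervalIntegrable_const (fun u hu => ?_)
        exact Bfun_mono_sigma hα0 hαnn (le_max_right t 0) (by nlinarith [hu.2])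
    _ = Bfun α (2*s) (max t 0) := by rw [intervalIntegral.integral_const]; norm_num

lemma Bfun_zero (t : ℝ) : Bfun α 0 t = 0 :=
  le_antisymm (Bfun_le_self hα0 hαnn le_rfl t) (Bfun_nonneg hα0 hαnn le_rfl t)

lemma beta1_zero (t : ℝ) : beta1 α 0 t = 0 := by
  simp only [beta1, zero_mul, Bfun_zero hα0 hαnn]
  simp

lemma beta1_cont_s (t : ℝ) : ContinuousOn (fun s => beta1 α s t) (Set.Ici 0) := by
  set f : ℝ → ℝ := fun σ => Bfun α σ (max t 0) with hf
  have hmono : Monotone f := Bfun_mono_sigma hα0 hαnn (le_max_right t 0)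
  have h_int : ∀ a b : ℝ, IntervalIntegrable f volume a b := fun a b =>
    hmono.intervalIntegrable
  set F : ℝ → ℝ := fun x => ∫ σ in (0:ℝ)..x, f σ with hF
  have FC : Continuous F := intervalIntegral.continuous_primitive h_int 0
  have key : ∀ s : ℝ, s ≠ 0 → beta1 α s t = s⁻¹ * (F (s*2) - F (s*1)) := by
    intro s hs
    have h1 : (∫ u in (1:ℝ)..2, f (s * u)) = s⁻¹ • ∫ x in (s*1)..(s*2), f x :=
      intervalIntegral.integral_comp_mul_left f hs
    have h2 : (∫ x in (0:ℝ)..(s*1), f x) + (∫ x in (s*1)..(s*2), f x)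
        = ∫ x in (0:ℝ)..(s*2), f x :=
      intervalIntegral.integral_add_adjacent_intervals (h_int 0 (s*1)) (h_int (s*1) (s*2))
    have h3 : (∫ x in (s*1)..(s*2), f x) = F (s*2) - F (s*1) := by
      rw [hF]; linarith [h2]
    rw [beta1, h1, h3]
    simp [smul_eq_mul]
  intro x₀ hx₀
  rcases eq_or_lt_of_le (Set.mem_Ici.mp hx₀ : (0:ℝ) ≤ x₀) with h0 | hpos
  · -- continuity at 0 within Ici 0 by squeeze
    have hb0 : beta1 α 0 t = 0 := beta1_zero hα0 hαnn t
    rw [ContinuousWithinAt, ← h0, hb0]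
    have hup : Tendsto (fun s : ℝ => 2*s) (nhdsWithin 0 (Set.Ici 0)) (nhds 0) := by
      have h : Tendsto (fun s : ℝ => 2*s) (nhds 0) (nhds (2*0)) := ((continuous_const.mul continuous_id : Continuous fun s : ℝ => 2*s)).tendsto (0:ℝ)
      simpa using h.mono_left nhdsWithin_le_nhds
    refine tendsto_of_tendsto_of_tendsto_of_le_of_le' tendsto_const_nhds hup ?_ ?_
    · filter_upwards [self_mem_nhdsWithin] with s hs
      exact beta1_nonneg hα0 hαnn t hs
    · filter_upwards [self_mem_nhdsWithin] with s hs
      exact beta1_le hα0 hαnn t hs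
  · -- continuity at x₀ > 0
    have hne : x₀ ≠ 0 := ne_of_gt hpos
    have hc : ContinuousAt (fun s : ℝ => s⁻¹ * (F (s*2) - F (s*1))) x₀ := by
      have h1 : ContinuousAt (fun s : ℝ => s⁻¹) x₀ := continuousAt_inv₀ hne
      have h2 : Continuous (fun s : ℝ => F (s*2)) := FC.comp (by continuity)
      have h3 : Continuous (fun s : ℝ => F (s*1)) := FC.comp (by continuity)
      exact h1.mul ((h2.sub h3).continuousAt)
    have heq : (fun s => beta1 α s t) =ᶠ[nhds x₀] fun s => s⁻¹ * (F (s*2) - F (s*1)) := by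
      filter_upwards [Ioi_mem_nhds hpos] with s hs
      exact key s (ne_of_gt hs)
    exact (hc.congr heq.symm).continuousWithinAt

lemma beta1_tendsto (hαc : ContinuousOn α (Set.Ici 0)) (hαpd : PosDef α) {s : ℝ}
    (hs : 0 ≤ s) : Tendsto (beta1 α s) atTop (nhds 0) := by
  have hmax : Tendsto (fun t : ℝ => max t 0) atTop atTop :=
    tendsto_atTop_mono (fun t => le_max_left t 0) tendsto_id
  have h2 : Tendsto (fun t => Bfun α (2*s) (max t 0)) atTop (nhds 0) :=
    (Bfun_tendsto hαc hα0 hαpd hαnn (by linarith)).comp hmax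
  refine tendsto_of_tendsto_of_tendsto_of_le_of_le' tendsto_const_nhds h2 ?_ ?_
  · exact Eventually.of_forall (fun t => beta1_nonneg hα0 hαnn t hs)
  · exact Eventually.of_forall (fun t => beta1_le_B2s hα0 hαnn t hs)

end Beta1

end Stmt2Aux
namespace Stmt2Aux

variable {α : ℝ → ℝ}

section Beta2

variable (hα0 : α 0 = 0) (hαnn : ∀ s, 0 ≤ s → 0 ≤ α s)
include hα0 hαnn

lemma beta1_intgr {s : ℝ} (hs : 0 ≤ s) (a b : ℝ) :
    IntervalIntegrable (fun τ => beta1 α s τ) volume a b :=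
  (beta1_anti_t hα0 hαnn hs).intervalIntegrable

lemma beta2_ge_beta1 (t : ℝ) {s : ℝ} (hs : 0 ≤ s) : beta1 α s t ≤ beta2 α s t := by
  rw [beta2]
  calc beta1 α s t = ∫ _ in (t-1)..t, beta1 α s t := by
        rw [intervalIntegral.integral_const]; norm_num
    _ ≤ ∫ τ in (t-1)..t, beta1 α s τ := by
        refine intervalIntegral.integral_mono_on (by linarith)
          intervalIntegrable_const (beta1_intgr hα0 hαnn hs _ _) (fun τ hτ => ?_)
        exact beta1_anti_t hα0 hαnn hs hτ.2

lemma beta2_le_beta1 (t : ℝ) {s : ℝ} (hs : 0 ≤ s) : beta2 α s t ≤ beta1 α s (t-1) := by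
  rw [beta2]
  calc (∫ τ in (t-1)..t, beta1 α s τ)
      ≤ ∫ _ in (t-1)..t, beta1 α s (t-1) := by
        refine intervalIntegral.integral_mono_on (by linarith)
          (beta1_intgr hα0 hαnn hs _ _) intervalIntegrable_const (fun τ hτ => ?_)
        exact beta1_anti_t hα0 hαnn hs hτ.1
    _ = beta1 α s (t-1) := by rw [intervalIntegral.integral_const]; norm_num

lemma beta2_nonneg (t : ℝ) {s : ℝ} (hs : 0 ≤ s) : 0 ≤ beta2 α s t :=
  le_trans (beta1_nonneg hα0 hαnn t hs) (beta2_ge_beta1 hα0 hαnn t hs)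

lemma beta2_le (t : ℝ) {s : ℝ} (hs : 0 ≤ s) : beta2 α s t ≤ 2*s :=
  le_trans (beta2_le_beta1 hα0 hαnn t hs) (beta1_le hα0 hαnn (t-1) hs)

lemma beta2_zero (t : ℝ) : beta2 α 0 t = 0 := by
  rw [beta2]
  simp only [beta1_zero hα0 hαnn]
  simp

lemma beta2_mono_s (t : ℝ) : MonotoneOn (fun s => beta2 α s t) (Set.Ici 0) := by
  intro s hs s' hs' hss
  simp only [beta2]
  refine intervalIntegral.integral_mono_on (by linarith)
    (beta1_intgr hα0 hαnn hs _ _) (beta1_intgr hα0 hαnn hs' _ _) (fun τ hτ => ?_)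
  exact beta1_mono_s hα0 hαnn τ hs hs' hss

lemma beta2_anti_t {s : ℝ} (hs : 0 ≤ s) : Antitone (fun t => beta2 α s t) := by
  intro t t' htt
  simp only [beta2]
  have hshift : (∫ τ in (t'-1)..t', beta1 α s τ)
      = ∫ τ in (t-1)..t, beta1 α s (τ + (t' - t)) := by
    rw [intervalIntegral.integral_comp_add_right (fun τ => beta1 α s τ) (t' - t)]
    norm_num
  rw [hshift]
  have hm : Monotone (fun τ : ℝ => τ + (t' - t)) := fun a b hab => by
    simpa using add_le_add_right hab (t' - t)
  refine intervalIntegral.integral_mono_on (by linarith)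
    ((beta1_anti_t hα0 hαnn hs).comp_monotone hm).intervalIntegrable
    (beta1_intgr hα0 hαnn hs _ _) (fun τ hτ => ?_)
  exact beta1_anti_t hα0 hαnn hs (by linarith)

lemma beta2_cont_t {s : ℝ} (hs : 0 ≤ s) : Continuous (fun t => beta2 α s t) := by
  have h_int : ∀ a b : ℝ, IntervalIntegrable (fun τ => beta1 α s τ) volume a b :=
    beta1_intgr hα0 hαnn hs
  have GC : Continuous (fun x => ∫ τ in (0:ℝ)..x, beta1 α s τ) :=
    intervalIntegral.continuous_primitive h_int 0
  have key : ∀ t : ℝ, beta2 α s t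
      = (∫ τ in (0:ℝ)..t, beta1 α s τ) - ∫ τ in (0:ℝ)..(t-1), beta1 α s τ := by
    intro t
    have h2 := intervalIntegral.integral_add_adjacent_intervals
      (h_int 0 (t-1)) (h_int (t-1) t)
    rw [beta2]; linarith
  simp only [key]
  exact GC.sub (GC.comp (continuous_id.sub continuous_const))

lemma beta2_cont_s (t : ℝ) : ContinuousOn (fun s => beta2 α s t) (Set.Ici 0) := by
  intro x₀ hx₀
  have hx₀' : (0:ℝ) ≤ x₀ := hx₀
  refine intervalIntegral.continuousWithinAt_of_dominated_interval
    (F := fun x τ => beta1 α x τ) (bound := fun _ => 2*(x₀+1)) ?_ ?_ ?_ ?_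
  · filter_upwards [self_mem_nhdsWithin] with x hx
    exact ((beta1_anti_t hα0 hαnn hx).measurable).aestronglyMeasurable
  · have h1 : ∀ᶠ x in nhdsWithin x₀ (Set.Ici 0), x < x₀ + 1 :=
      eventually_nhdsWithin_of_eventually_nhds
        (Filter.Tendsto.eventually_lt_const (by linarith) tendsto_id)
    filter_upwards [self_mem_nhdsWithin, h1] with x hx hxlt
    refine Eventually.of_forall (fun τ _ => ?_)
    rw [Real.norm_eq_abs, abs_of_nonneg (beta1_nonneg hα0 hαnn τ hx)]
    calc beta1 α x τ ≤ 2*x := beta1_le hα0 hαnn τ hx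
      _ ≤ 2*(x₀+1) := by linarith
  · exact intervalIntegrable_const
  · refine Eventually.of_forall (fun τ _ => ?_)
    exact beta1_cont_s hα0 hαnn τ x₀ hx₀

lemma beta2_tendsto (hαc : ContinuousOn α (Set.Ici 0)) (hαpd : PosDef α) {s : ℝ}
    (hs : 0 ≤ s) : Tendsto (fun t => beta2 α s t) atTop (nhds 0) := by
  have hsh : Tendsto (fun t : ℝ => t - 1) atTop atTop := tendsto_atTop_add_const_right _ _ tendsto_id
  have h2 : Tendsto (fun t : ℝ => beta1 α s (t-1)) atTop (nhds 0) :=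
    (beta1_tendsto hα0 hαnn hαc hαpd hs).comp hsh
  refine tendsto_of_tendsto_of_tendsto_of_le_of_le' tendsto_const_nhds h2 ?_ ?_
  · exact Eventually.of_forall (fun t => beta2_nonneg hα0 hαnn t hs)
  · exact Eventually.of_forall (fun t => beta2_le_beta1 hα0 hαnn t hs)

end Beta2

lemma betaF_classKL (hαc : ContinuousOn α (Set.Ici 0)) (hαpd : PosDef α)
    (hαnn : ∀ s, 0 ≤ s → 0 ≤ α s) : ClassKL (betaF α) := by
  have hα0 : α 0 = 0 := hαpd.1
  constructor
  · intro t ht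
    refine ⟨?_, ?_, ?_, ?_⟩
    · -- continuity in s
      refine ContinuousOn.add (beta2_cont_s hα0 hαnn t) ?_
      exact (continuous_id.mul continuous_const).continuousOn
    · -- strict mono in s
      intro s hs s' hs' hss
      have h1 : beta2 α s t ≤ beta2 α s' t := beta2_mono_s hα0 hαnn t hs hs' hss.le
      have h2 : s * Real.exp (-t) < s' * Real.exp (-t) :=
        mul_lt_mul_of_pos_right hss (Real.exp_pos _)
      simpa [betaF] using by linarith
    · simp [betaF, beta2_zero hα0 hαnn]
    · intro s hs
      have h1 : 0 ≤ beta2 α s t := beta2_nonneg hα0 hαnn t hs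
      have h2 : 0 ≤ s * Real.exp (-t) := mul_nonneg hs (Real.exp_pos _).le
      simpa [betaF] using by linarith
  · intro s hs
    refine ⟨?_, ?_, ?_⟩
    · refine Continuous.continuousOn ?_
      exact (beta2_cont_t hα0 hαnn hs).add
        (continuous_const.mul (Real.continuous_exp.comp continuous_neg))
    · intro t ht t' ht' htt
      have h1 : beta2 α s t' ≤ beta2 α s t := beta2_anti_t hα0 hαnn hs htt
      have h2 : s * Real.exp (-t') ≤ s * Real.exp (-t) :=
        mul_le_mul_of_nonneg_left (Real.exp_le_exp.mpr (by linarith)) hs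
      simp only [betaF]
      linarith
    · have h1 : Tendsto (fun t => beta2 α s t) atTop (nhds 0) :=
        beta2_tendsto hα0 hαnn hαc hαpd hs
      have h2 : Tendsto (fun t : ℝ => s * Real.exp (-t)) atTop (nhds 0) := by
        have := Real.tendsto_exp_neg_atTop_nhds_zero
        simpa using (this.const_mul s)
      exact (by simpa using h1.add h2 : Tendsto (fun x => beta2 α s x + s * Real.exp (-x)) atTop (nhds 0))

lemma betaF_ge_Bfun (hαpd : PosDef α) (hαnn : ∀ s, 0 ≤ s → 0 ≤ α s) {s t : ℝ}
    (hs : 0 ≤ s) (ht : 0 ≤ t) : Bfun α s t ≤ betaF α s t := by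
  have hα0 : α 0 = 0 := hαpd.1
  have h0 : Bfun α s t = Bfun α s (max t 0) := by rw [max_eq_left ht]
  rw [betaF, h0]
  have h1 : Bfun α s (max t 0) ≤ beta1 α s t := beta1_ge_Bfun hα0 hαnn t hs
  have h2 : beta1 α s t ≤ beta2 α s t := beta2_ge_beta1 hα0 hαnn t hs
  have h3 : 0 ≤ s * Real.exp (-t) := mul_nonneg hs (Real.exp_pos _).le
  linarith

end Stmt2Aux

/-- Proposition 3.6, comparison principle for lower semicontinuous functions:
for any continuous positive definite `α` there is a `KL` function `β` such that any lower
semicontinuous `y` satisfying the integral decay inequality with forcing `v` satisfies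
`y(t) ≤ β(y(0), t) + ∫₀ᵗ 2 v`. -/
theorem stmt2 (α : ℝ → ℝ) (hαc : ContinuousOn α (Set.Ici 0)) (hαpd : PosDef α)
    (hαnn : ∀ s, 0 ≤ s → 0 ≤ α s) :
    ∃ β : ℝ → ℝ → ℝ, ClassKL β ∧
      ∀ (ttop : ENNReal), 0 < ttop →
      ∀ (v : ℝ → ℝ), Measurable v → (∀ t ∈ Dom ttop, 0 ≤ v t) →
      (∀ b ∈ Dom ttop, ∃ C, ∀ᵐ s ∂volume, s ∈ Set.Icc (0 : ℝ) b → |v s| ≤ C) →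
      ∀ (y : ℝ → ℝ), LowerSemicontinuousOn y (Dom ttop) → (∀ t ∈ Dom ttop, 0 ≤ y t) →
      (∀ t₁ t₂ : ℝ, 0 ≤ t₁ → t₁ ≤ t₂ → t₂ ∈ Dom ttop →
        IntervalIntegrable (fun s => -α (y s) + v s) volume t₁ t₂) →
      (∀ t₁ t₂ : ℝ, 0 ≤ t₁ → t₁ ≤ t₂ → t₂ ∈ Dom ttop →
        y t₂ ≤ y t₁ + ∫ s in t₁..t₂, (-α (y s) + v s)) →
      ∀ t ∈ Dom ttop, y t ≤ β (y 0) t + ∫ s in (0 : ℝ)..t, 2 * v s := by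
  have hα0 : α 0 = 0 := hαpd.1
  refine ⟨Stmt2Aux.betaF α, Stmt2Aux.betaF_classKL hαc hαpd hαnn, ?_⟩
  intro ttop httop v hvmeas hvnn hvbdd y _hylsc hynn hIint hIineq t htDom
  obtain ⟨ht0, httt⟩ := htDom
  have hsub : ∀ {τ : ℝ}, 0 ≤ τ → τ ≤ t → τ ∈ Dom ttop := fun {τ} hτ0 hτt =>
    ⟨hτ0, lt_of_le_of_lt (ENNReal.ofReal_le_ofReal hτt) httt⟩
  have h0Dom : (0:ℝ) ∈ Dom ttop := hsub (τ := 0) le_rfl ht0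
  -- v is interval integrable on subintervals of [0,t]
  have hvInt : ∀ t₁ t₂ : ℝ, 0 ≤ t₁ → t₁ ≤ t₂ → t₂ ≤ t →
      IntervalIntegrable v volume t₁ t₂ := by
    intro t₁ t₂ h1 h12 h2t
    obtain ⟨C, hC⟩ := hvbdd t (hsub ht0 le_rfl)
    have hev : ∀ᵐ s ∂(volume.restrict (Set.Icc (0:ℝ) t)), ‖v s‖ ≤ C := by
      rw [ae_restrict_iff' measurableSet_Icc]
      filter_upwards [hC] with s hs hmem
      rw [Real.norm_eq_abs]; exact hs hmem
    have hint : IntegrableOn v (Set.Icc (0:ℝ) t) volume :=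
      Measure.integrableOn_of_bounded measure_Icc_lt_top.ne
        hvmeas.aestronglyMeasurable hev
    have hint2 : IntegrableOn v (Set.Icc t₁ t₂) volume :=
      hint.mono_set (Set.Icc_subset_Icc h1 h2t)
    have huIcc : Set.uIcc t₁ t₂ = Set.Icc t₁ t₂ := Set.uIcc_of_le h12
    exact IntegrableOn.intervalIntegrable (by rwa [huIcc])
  -- α ∘ y is interval integrable
  have hαyInt : ∀ t₁ t₂ : ℝ, 0 ≤ t₁ → t₁ ≤ t₂ → t₂ ≤ t →
      IntervalIntegrable (fun s => α (y s)) volume t₁ t₂ := by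
    intro t₁ t₂ h1 h12 h2t
    have hI := hIint t₁ t₂ h1 h12 (hsub (h1.trans h12) h2t)
    have hv := hvInt t₁ t₂ h1 h12 h2t
    have heq : (fun s => α (y s)) = fun s => v s - (-α (y s) + v s) := by
      funext s; ring
    rw [heq]; exact hv.sub hI
  -- nonnegativity of integrals of α∘y
  have hαynn : ∀ t₁ t₂ : ℝ, 0 ≤ t₁ → t₁ ≤ t₂ → t₂ ≤ t →
      0 ≤ ∫ s in t₁..t₂, α (y s) := by
    intro t₁ t₂ h1 h12 h2t
    refine intervalIntegral.integral_nonneg h12 (fun u hu => ?_)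
    exact hαnn (y u) (hynn u (hsub (h1.trans hu.1) (hu.2.trans h2t)))
  set U : ℝ → ℝ := fun τ => ∫ s in (0:ℝ)..τ, v s with hU
  have hUadd : ∀ t₁ t₂ : ℝ, 0 ≤ t₁ → t₁ ≤ t₂ → t₂ ≤ t →
      U t₂ - U t₁ = ∫ s in t₁..t₂, v s := by
    intro t₁ t₂ h1 h12 h2t
    have h := intervalIntegral.integral_add_adjacent_intervals
      (hvInt 0 t₁ le_rfl h1 ((h12.trans h2t))) (hvInt t₁ t₂ h1 h12 h2t)
    simp only [hU]; linarith
  have hUnn : ∀ τ : ℝ, 0 ≤ τ → τ ≤ t → 0 ≤ U τ := by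
    intro τ h1 h2
    refine intervalIntegral.integral_nonneg h1 (fun u hu => ?_)
    exact hvnn u (hsub hu.1 (hu.2.trans h2))
  have hvIntnn : ∀ t₁ t₂ : ℝ, 0 ≤ t₁ → t₁ ≤ t₂ → t₂ ≤ t →
      0 ≤ ∫ s in t₁..t₂, v s := by
    intro t₁ t₂ h1 h12 h2t
    refine intervalIntegral.integral_nonneg h12 (fun u hu => ?_)
    exact hvnn u (hsub (h1.trans hu.1) (hu.2.trans h2t))
  -- L1 : decay of z = y - 2U
  have L1 : ∀ t₁ t₂ : ℝ, 0 ≤ t₁ → t₁ ≤ t₂ → t₂ ≤ t →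
      y t₂ - 2*U t₂ ≤ y t₁ - 2*U t₁ - ∫ s in t₁..t₂, α (y s) := by
    intro t₁ t₂ h1 h12 h2t
    have hmain := hIineq t₁ t₂ h1 h12 (hsub (h1.trans h12) h2t)
    have hneg : IntervalIntegrable (fun s => -α (y s)) volume t₁ t₂ :=
      (hαyInt t₁ t₂ h1 h12 h2t).neg
    have hsplit : (∫ s in t₁..t₂, (-α (y s) + v s))
        = -(∫ s in t₁..t₂, α (y s)) + ∫ s in t₁..t₂, v s := by
      rw [intervalIntegral.integral_add hneg (hvInt t₁ t₂ h1 h12 h2t),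
        intervalIntegral.integral_neg]
    have hvv := hvIntnn t₁ t₂ h1 h12 h2t
    have hUd := hUadd t₁ t₂ h1 h12 h2t
    rw [hsplit] at hmain
    linarith
  -- L2 : growth bound
  have L2 : ∀ τ : ℝ, 0 ≤ τ → τ ≤ t → y τ ≤ y 0 + U τ := by
    intro τ h0τ hτt
    have hmain := hIineq 0 τ le_rfl h0τ (hsub h0τ hτt)
    have hle : (∫ s in (0:ℝ)..τ, (-α (y s) + v s)) ≤ ∫ s in (0:ℝ)..τ, v s := by
      refine intervalIntegral.integral_mono_on h0τ
        (hIint 0 τ le_rfl h0τ (hsub h0τ hτt)) (hvInt 0 τ le_rfl h0τ hτt)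
        (fun u hu => ?_)
      have := hαnn (y u) (hynn u (hsub hu.1 (hu.2.trans hτt)))
      linarith
    simp only [hU]
    linarith
  set s0 := y 0 with hs0
  have hs0nn : 0 ≤ s0 := hynn 0 h0Dom
  have hU0 : U 0 = 0 := by simp [hU]
  have hBcomp : y t - 2*U t ≤ Stmt2Aux.Bfun α s0 t := by
    by_contra hcon; push_neg at hcon
    set ε := y t - 2*U t with hε
    have hεpos : 0 < ε :=
      lt_of_le_of_lt (Stmt2Aux.Bfun_nonneg hα0 hαnn hs0nn t) hcon
    have hεle : ε ≤ s0 := by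
      have h := L1 0 t le_rfl ht0 le_rfl
      have hαy0 := hαynn 0 t le_rfl ht0 le_rfl
      linarith
    have hs0pos : 0 < s0 := lt_of_lt_of_le hεpos hεle
    have hnotmem : ε ∉ Stmt2Aux.SS α s0 t := fun hmem =>
      absurd (le_csSup (Stmt2Aux.SS_bddAbove s0 t) hmem) (not_le.mpr hcon)
    have hm : s0 < t * Stmt2Aux.mfun α ε s0 := by
      by_contra h; push_neg at h
      exact hnotmem ⟨hεpos.le, hεle, h⟩
    have hpt : ∀ τ ∈ Set.Icc (0:ℝ) t, Stmt2Aux.mfun α ε s0 ≤ α (y τ) := by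
      intro τ hτ
      have hzτ : ε ≤ y τ - 2*U τ := by
        have h := L1 τ t hτ.1 hτ.2 le_rfl
        have hαy := hαynn τ t hτ.1 hτ.2 le_rfl
        linarith
      have hUτ : 0 ≤ U τ := hUnn τ hτ.1 hτ.2
      have hylo : ε ≤ y τ := by linarith
      have hyhi : y τ ≤ 2*s0 := by
        have h := L2 τ hτ.1 hτ.2
        linarith
      refine Stmt2Aux.mfun_le hαnn hεpos.le ⟨hylo, ?_⟩
      exact hyhi.trans (le_max_left _ _)
    have hintlb : t * Stmt2Aux.mfun α ε s0 ≤ ∫ s in (0:ℝ)..t, α (y s) := by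
      have h := intervalIntegral.integral_mono_on (μ := volume) (a := (0:ℝ)) (b := t)
        (f := fun _ => Stmt2Aux.mfun α ε s0) (g := fun s => α (y s)) ht0
        intervalIntegrable_const (hαyInt 0 t le_rfl ht0 le_rfl) hpt
      rw [intervalIntegral.integral_const] at h
      simpa [smul_eq_mul] using h
    have h := L1 0 t le_rfl ht0 le_rfl
    linarith
  have hfinal : Stmt2Aux.Bfun α s0 t ≤ Stmt2Aux.betaF α s0 t :=
    Stmt2Aux.betaF_ge_Bfun hαpd hαnn hs0nn ht0
  have h2v : (∫ s in (0:ℝ)..t, 2 * v s) = 2 * U t := by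
    rw [hU]; exact intervalIntegral.integral_const_mul 2 v
  rw [h2v]
  linarith
end
end

section
/- For any class KL function β : ℝ≥0 × ℝ≥0 → ℝ≥0, there exists a family of maps {T_r}_{r>0} such that: (i) for each fixed r > 0, T_r : (0,∞) → (0,∞) is strictly decreasing and surjective; (ii) for each fixed ε > 0, r ↦ T_r(ε) is strictly increasing and T_r(ε) → ∞ as r → ∞; (iii) (r, ε) ↦ T_r(ε) is jointly continuous; and (iv) β(s, t) ≤ ε whenever s ≤ r and t ≥ T_r(ε). -/
/-!
For `R ≥ 1` let `τ R` be the first time at which `β R ·` drops to `R⁻¹`, and let `K` be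
a continuous nondecreasing majorant of `x ↦ τ (max x 1) * (β (max x 1) 0 + 1)`, obtained by
averaging over `[x, x + 1]`. Then `T_r(ε) = (1 + r + K (r + ε⁻¹)) / ε` works: with
`R = max (r + ε⁻¹) 1` we have `s ≤ R` and `R⁻¹ ≤ ε`, and either `ε ≥ β R 0 ≥ β s t` already, or
`ε < β R 0 + 1` and then `ε T_r(ε) ≥ K (r + ε⁻¹) ≥ τ R (β R 0 + 1)` forces `T_r(ε) ≥ τ R`, so
that `β s t ≤ β R (τ R) ≤ R⁻¹ ≤ ε`. The factor `ε⁻¹` makes `T_r` strictly decreasing from `∞` to `0`, and the summand `r` makes it strictly increasing and unbounded in `r`.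
-/

open MeasureTheory Set Filter

noncomputable section

open intervalIntegral

theorem Monotone.exists_continuous_monotone_ge {f : ℝ → ℝ} (hf : Monotone f) :
    ∃ F : ℝ → ℝ, Continuous F ∧ Monotone F ∧ ∀ x, f x ≤ F x := by
  have hint : ∀ a b : ℝ, IntervalIntegrable f volume a b :=
    fun _ _ => hf.intervalIntegrable
  refine ⟨fun x => ∫ u in x..x + 1, f u, ?_, ?_, ?_⟩
  · have hprim := continuous_primitive hint 0
    refine ((hprim.comp (continuous_add_const 1)).sub hprim).congr fun x => ?_
    exact integral_interval_sub_left (hint 0 (x + 1)) (hint 0 x)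
  · intro x y hxy
    have hshift : ∫ u in x..x + 1, f (u + (y - x)) = ∫ u in y..y + 1, f u := by
      rw [integral_comp_add_right]
      ring_nf
    change _ ≤ ∫ u in y..y + 1, f u
    rw [← hshift]
    exact integral_mono_on (by linarith) (hint x (x + 1))
      (hf.comp (monotone_id.add_const (y - x))).intervalIntegrable
      fun u _ => hf (by linarith)
  · intro x
    simpa using integral_mono_on (by linarith : x ≤ x + 1) intervalIntegrable_const
      (hint x (x + 1)) fun u hu => hf hu.1

namespace ClassKL

variable {β : ℝ → ℝ → ℝ}

theorem nonneg (hβ : ClassKL β) {s t : ℝ} (hs : 0 ≤ s) (ht : 0 ≤ t) : 0 ≤ β s t :=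
  (hβ.1 t ht).2.2.2 s hs

theorem mono_left (hβ : ClassKL β) {s s' t : ℝ} (hs : 0 ≤ s) (ht : 0 ≤ t) (hss' : s ≤ s') :
    β s t ≤ β s' t :=
  (hβ.1 t ht).2.1.monotoneOn hs (hs.trans hss') hss'

theorem anti_right (hβ : ClassKL β) {s t t' : ℝ} (hs : 0 ≤ s) (ht : 0 ≤ t) (htt' : t ≤ t') :
    β s t' ≤ β s t :=
  (hβ.2 s hs).2.1 ht (ht.trans htt') htt'

variable (β) in
def settlingTime (R δ : ℝ) : ℝ := sInf {t | 0 ≤ t ∧ β R t ≤ δ}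

theorem settlingTime_mem (hβ : ClassKL β) {R δ : ℝ} (hR : 0 ≤ R) (hδ : 0 < δ) :
    0 ≤ settlingTime β R δ ∧ β R (settlingTime β R δ) ≤ δ := by
  have hclosed : IsClosed {t | 0 ≤ t ∧ β R t ≤ δ} :=
    (hβ.2 R hR).1.preimage_isClosed_of_isClosed isClosed_Ici isClosed_Iic
  have hne : {t | 0 ≤ t ∧ β R t ≤ δ}.Nonempty :=
    (((hβ.2 R hR).2.2.eventually_le_const hδ).and (eventually_ge_atTop 0)).exists.imp
      fun _ ht => ⟨ht.2, ht.1⟩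
  exact hclosed.csInf_mem hne ⟨0, fun _ ht => ht.1⟩

theorem settlingTime_mono (hβ : ClassKL β) {R R' δ δ' : ℝ} (hR : 0 ≤ R) (hRR' : R ≤ R')
    (hδ' : 0 < δ') (hδδ' : δ' ≤ δ) : settlingTime β R δ ≤ settlingTime β R' δ' := by
  obtain ⟨hτ, hβτ⟩ := hβ.settlingTime_mem (hR.trans hRR') hδ'
  exact csInf_le ⟨0, fun _ ht => ht.1⟩
    ⟨hτ, (hβ.mono_left hR hτ hRR').trans (hβτ.trans hδδ')⟩

theorem le_of_settlingTime_mul_le (hβ : ClassKL β) {s R δ ε t : ℝ} (hs : 0 ≤ s) (hsR : s ≤ R)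
    (hδ : 0 < δ) (hδε : δ ≤ ε)
    (hτ : settlingTime β R δ * (β R 0 + 1) ≤ ε * t) : β s t ≤ ε := by
  have hR := hs.trans hsR
  obtain ⟨hτ0, hβτ⟩ := hβ.settlingTime_mem hR hδ
  have hε : 0 < ε := hδ.trans_le hδε
  have ht : 0 ≤ t := nonneg_of_mul_nonneg_right
    ((mul_nonneg hτ0 (by linarith [hβ.nonneg hR le_rfl])).trans hτ) hε
  rcases le_or_gt (β R 0) ε with hβR | hβR
  · calc β s t ≤ β s 0 := hβ.anti_right hs le_rfl ht
      _ ≤ β R 0 := hβ.mono_left hs le_rfl hsR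
      _ ≤ ε := hβR
  · have hτt : settlingTime β R δ ≤ t := by
      refine le_of_mul_le_mul_left ?_ hε
      nlinarith
    calc β s t ≤ β R t := hβ.mono_left hs ht hsR
      _ ≤ β R (settlingTime β R δ) := hβ.anti_right hR hτ0 hτt
      _ ≤ ε := hβτ.trans hδε

variable (β) in
def scaledSettlingTime (x : ℝ) : ℝ :=
  settlingTime β (max x 1) (max x 1)⁻¹ * (β (max x 1) 0 + 1)

theorem scaledSettlingTime_nonneg (hβ : ClassKL β) (x : ℝ) : 0 ≤ scaledSettlingTime β x := by
  have hR : (0 : ℝ) ≤ max x 1 := zero_le_one.trans (le_max_right x 1)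
  exact mul_nonneg (hβ.settlingTime_mem hR (by positivity)).1
    (by linarith [hβ.nonneg hR le_rfl])

theorem monotone_scaledSettlingTime (hβ : ClassKL β) : Monotone (scaledSettlingTime β) := by
  intro x y hxy
  have hRx : (0 : ℝ) < max x 1 := zero_lt_one.trans_le (le_max_right x 1)
  have hRxy : max x 1 ≤ max y 1 := max_le_max hxy le_rfl
  exact mul_le_mul
    (hβ.settlingTime_mono hRx.le hRxy (by positivity) (inv_anti₀ hRx hRxy))
    (by linarith [hβ.mono_left hRx.le le_rfl hRxy])
    (by linarith [hβ.nonneg hRx.le le_rfl])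
    (hβ.settlingTime_mem (hRx.trans_le hRxy).le (by positivity)).1

theorem le_of_scaledSettlingTime_le (hβ : ClassKL β) {s r ε t : ℝ} (hs : 0 ≤ s) (hsr : s ≤ r)
    (hε : 0 < ε) (h : scaledSettlingTime β (r + ε⁻¹) ≤ ε * t) : β s t ≤ ε := by
  have hR : 0 < max (r + ε⁻¹) 1 := zero_lt_one.trans_le (le_max_right _ 1)
  have hε' : 0 < ε⁻¹ := inv_pos.2 hε
  have hεR : ε⁻¹ ≤ max (r + ε⁻¹) 1 := le_max_of_le_left (by linarith [hs.trans hsr])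
  exact hβ.le_of_settlingTime_mul_le hs (hsr.trans (by linarith [le_max_left (r + ε⁻¹) 1]))
    (inv_pos.2 hR) ((inv_le_comm₀ hε hR).1 hεR) h

end ClassKL

section ConvergenceTime

variable {K : ℝ → ℝ}

variable (K) in
def convergenceTime (r ε : ℝ) : ℝ := (1 + r + K (r + ε⁻¹)) / ε

theorem convergenceTime_pos (hK : ∀ x, 0 ≤ K x) {r ε : ℝ} (hr : 0 ≤ r) (hε : 0 < ε) :
    0 < convergenceTime K r ε :=
  div_pos (by linarith [hK (r + ε⁻¹)]) hε

theorem strictAntiOn_convergenceTime (hK : ∀ x, 0 ≤ K x) (hKm : Monotone K) {r : ℝ}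
    (hr : 0 ≤ r) : StrictAntiOn (convergenceTime K r) (Ioi 0) := by
  intro ε₁ (hε₁ : 0 < ε₁) ε₂ (hε₂ : 0 < ε₂) h
  calc convergenceTime K r ε₂ ≤ (1 + r + K (r + ε₁⁻¹)) / ε₂ := by
        unfold convergenceTime
        gcongr
        exact hKm (by gcongr)
    _ < convergenceTime K r ε₁ :=
        div_lt_div_of_pos_left (by linarith [hK (r + ε₁⁻¹)]) hε₁ h

theorem strictMono_convergenceTime_left (hKm : Monotone K) {ε : ℝ} (hε : 0 < ε) :
    StrictMono (convergenceTime K · ε) := by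
  intro r₁ r₂ h
  refine div_lt_div_of_pos_right ?_ hε
  linarith [hKm (by linarith : r₁ + ε⁻¹ ≤ r₂ + ε⁻¹)]

theorem tendsto_convergenceTime_atTop (hK : ∀ x, 0 ≤ K x) {ε : ℝ} (hε : 0 < ε) :
    Tendsto (convergenceTime K · ε) atTop atTop := by
  refine tendsto_atTop_mono (fun r => ?_) (tendsto_id.atTop_div_const hε)
  change r / ε ≤ (1 + r + K (r + ε⁻¹)) / ε
  gcongr
  linarith [hK (r + ε⁻¹)]

theorem continuousOn_convergenceTime (hKc : Continuous K) :
    ContinuousOn (fun p : ℝ × ℝ => convergenceTime K p.1 p.2) {p | p.2 ≠ 0} := by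
  refine ContinuousOn.div (ContinuousOn.add (by fun_prop) (hKc.comp_continuousOn ?_)) (by fun_prop)
    fun p hp => hp
  exact continuousOn_fst.add (continuousOn_snd.inv₀ fun p hp => hp)

theorem exists_convergenceTime_eq (hK : ∀ x, 0 ≤ K x) (hKm : Monotone K) (hKc : Continuous K)
    {r c : ℝ} (hr : 0 ≤ r) (hc : 0 < c) : ∃ ε, 0 < ε ∧ convergenceTime K r ε = c := by
  set a := min 1 c⁻¹
  set b := max 1 ((1 + r + K (r + 1)) / c)
  have ha : 0 < a := lt_min one_pos (inv_pos.2 hc)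
  have hb : 1 ≤ b := le_max_left _ _
  have hTb : convergenceTime K r b ≤ c := by
    have hKb : K (r + b⁻¹) ≤ K (r + 1) := hKm (by linarith [inv_le_one_of_one_le₀ hb])
    have hbc : 1 + r + K (r + 1) ≤ c * b := (div_le_iff₀' hc).1 (le_max_right _ _)
    rw [convergenceTime, div_le_iff₀ (one_pos.trans_le hb)]
    linarith
  have hTa : c ≤ convergenceTime K r a :=
    calc c ≤ 1 / a := by rw [one_div]; exact (le_inv_comm₀ ha hc).1 (min_le_right _ _)
      _ ≤ convergenceTime K r a := by
        unfold convergenceTime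
        gcongr
        linarith [hK (r + a⁻¹)]
  have hcont : ContinuousOn (convergenceTime K r) (Icc a b) :=
    (continuousOn_convergenceTime hKc).comp (Continuous.prodMk_right r).continuousOn
      fun ε hε => (ha.trans_le hε.1).ne'
  obtain ⟨ε, hε, hTε⟩ :=
    intermediate_value_Icc' ((min_le_left _ _).trans hb) hcont ⟨hTb, hTa⟩
  exact ⟨ε, ha.trans_le hε.1, hTε⟩

end ConvergenceTime

theorem stmt9_general (β : ℝ → ℝ → ℝ) (hβ : ClassKL β) :
    ∃ T : ℝ → ℝ → ℝ,
      (∀ r, 0 < r → (∀ ε, 0 < ε → 0 < T r ε) ∧ StrictAntiOn (T r) (Set.Ioi 0) ∧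
        ∀ c, 0 < c → ∃ ε, 0 < ε ∧ T r ε = c) ∧
      (∀ ε, 0 < ε → StrictMonoOn (fun r => T r ε) (Set.Ioi 0) ∧
        Filter.Tendsto (fun r => T r ε) Filter.atTop Filter.atTop) ∧
      ContinuousOn (fun p : ℝ × ℝ => T p.1 p.2) (Set.Ioi 0 ×ˢ Set.Ioi 0) ∧
      ∀ s t r ε, 0 ≤ s → s ≤ r → 0 < ε → T r ε ≤ t → β s t ≤ ε := by
  obtain ⟨K, hKc, hKm, hK⟩ := hβ.monotone_scaledSettlingTime.exists_continuous_monotone_ge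
  have hK0 : ∀ x, 0 ≤ K x := fun x => (hβ.scaledSettlingTime_nonneg x).trans (hK x)
  refine ⟨convergenceTime K,
    fun r hr => ⟨fun ε hε => convergenceTime_pos hK0 hr.le hε,
      strictAntiOn_convergenceTime hK0 hKm hr.le,
      fun c hc => exists_convergenceTime_eq hK0 hKm hKc hr.le hc⟩,
    fun ε hε => ⟨(strictMono_convergenceTime_left hKm hε).strictMonoOn _,
      tendsto_convergenceTime_atTop hK0 hε⟩,
    (continuousOn_convergenceTime hKc).mono fun p hp => hp.2.ne', ?_⟩
  intro s t r ε hs hsr hε hT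
  refine hβ.le_of_scaledSettlingTime_le hs hsr hε ?_
  calc ClassKL.scaledSettlingTime β (r + ε⁻¹) ≤ K (r + ε⁻¹) := hK _
    _ ≤ 1 + r + K (r + ε⁻¹) := by linarith [hs.trans hsr]
    _ ≤ ε * t := (div_le_iff₀' hε).1 hT

/-- Proposition 3.9: for any `KL` function `β` (wlog positive for `s > 0`)
there is a family `T_r(ε)`, strictly decreasing and onto `(0,∞)` in `ε`, strictly
increasing and unbounded in `r`, jointly continuous, with `β(s,t) ≤ ε` for `s ≤ r`,
`t ≥ T_r(ε)`. -/
theorem stmt9 (β : ℝ → ℝ → ℝ) (hβ : ClassKL β)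
    (hβpos : ∀ s t, 0 < s → 0 ≤ t → 0 < β s t) :
    ∃ T : ℝ → ℝ → ℝ,
      (∀ r, 0 < r → (∀ ε, 0 < ε → 0 < T r ε) ∧ StrictAntiOn (T r) (Set.Ioi 0) ∧
        ∀ c, 0 < c → ∃ ε, 0 < ε ∧ T r ε = c) ∧
      (∀ ε, 0 < ε → StrictMonoOn (fun r => T r ε) (Set.Ioi 0) ∧
        Filter.Tendsto (fun r => T r ε) Filter.atTop Filter.atTop) ∧
      ContinuousOn (fun p : ℝ × ℝ => T p.1 p.2) (Set.Ioi 0 ×ˢ Set.Ioi 0) ∧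
      ∀ s t r ε, 0 ≤ s → s ≤ r → 0 < ε → T r ε ≤ t → β s t ≤ ε :=
  stmt9_general β hβ
end
end

section
/- Let ẋ = f(x,u), y = h(x) be forward complete with a continuous iIOSS Lyapunov function V : ℝⁿ → ℝ≥0: there exist α̲, ᾱ ∈ K∞, σ₁, σ₂ ∈ K, and continuous positive definite κ with α̲(|ξ|) ≤ V(ξ) ≤ ᾱ(|ξ|) for all ξ, and V(x(t,ξ,u)) − V(ξ) ≤ ∫₀^t (−κ(|x(s,ξ,u)|) + σ₁(|h(x(s,ξ,u))|) + σ₂(|u(s)|)) ds for all t ≥ 0, ξ, u. Then the system is iIOSS: there exist α ∈ K∞, β ∈ KL, γ₁, γ₂ ∈ K with α(|x(t,ξ,u)|) ≤ β(|ξ|,t) + ∫₀^t (γ₁(|y(s,ξ,u)|) + γ₂(|u(s)|)) ds for all t ≥ 0, ξ, u. Explicitly one can take α = α̲, γᵢ = 2σᵢ, and β obtained from the comparison result applied to ρ̃(s) := ρ₁(ᾱ⁻¹(s))·ρ₂(α̲⁻¹(s)) where κ(s) ≥ ρ₁(s)ρ₂(s) with ρ₁ ∈ K∞, ρ₂ ∈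 L. -/
open MeasureTheory Set Filter

noncomputable section

abbrev Vec (n : ℕ) := EuclideanSpace ℝ (Fin n)

/-- Admissible input: measurable and locally essentially bounded. -/
def Adm {m : ℕ} (u : ℝ → Vec m) : Prop :=
  Measurable u ∧ ∀ T : ℝ, 0 < T → ∃ C, ∀ᵐ s ∂volume, s ∈ Set.Icc (0 : ℝ) T → ‖u s‖ ≤ C

/-- (Carathéodory) solution on `[0,∞)` of `ẋ = f(x,u)`, `x(0) = ξ`, in integral form. -/
def IsSol {n m : ℕ} (f : Vec n → Vec m → Vec n) (u : ℝ → Vec m) (ξ : Vec n)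
    (x : ℝ → Vec n) : Prop :=
  ContinuousOn x (Set.Ici 0) ∧ x 0 = ξ ∧
    ∀ t, 0 ≤ t → x t = ξ + ∫ s in (0 : ℝ)..t, f (x s) (u s)

/-- `f` jointly continuous and locally Lipschitz in `x` uniformly in `u`. -/
def RegularRHS {n m : ℕ} (f : Vec n → Vec m → Vec n) : Prop :=
  Continuous (fun p : Vec n × Vec m => f p.1 p.2) ∧
  ∀ K : Set (Vec n), IsCompact K → ∃ L, 0 ≤ L ∧
    ∀ μ : Vec m, ∀ a ∈ K, ∀ b ∈ K, ‖f a μ - f b μ‖ ≤ L * ‖a - b‖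

/-- Forward completeness: every initial state and admissible input yield a global solution. -/
def ForwardComplete {n m : ℕ} (f : Vec n → Vec m → Vec n) : Prop :=
  ∀ (ξ : Vec n) (u : ℝ → Vec m), Adm u → ∃ x, IsSol f u ξ x

section P1
variable {n m q : ℕ} {f : Vec n → Vec m → Vec n} {h : Vec n → Vec q}
  {σ₁ σ₂ κ : ℝ → ℝ} {u : ℝ → Vec m} {ξ : Vec n} {x : ℝ → Vec n}

lemma max0_cont {φ : ℝ → ℝ} (hφ : ContinuousOn φ (Set.Ici 0)) :
    Continuous (fun r : ℝ => φ (max r 0)) :=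
  hφ.comp_continuous (continuous_id.max continuous_const) (fun _ => mem_Ici.mpr (le_max_right _ _))

lemma intervalIntegrable_of_ae_bound {E : Type*} [NormedAddCommGroup E] {φ : ℝ → E}
    {a b C : ℝ} (hab : a ≤ b)
    (hm : AEStronglyMeasurable φ (volume.restrict (Icc a b)))
    (hb : ∀ᵐ s ∂volume.restrict (Icc a b), ‖φ s‖ ≤ C) :
    IntervalIntegrable φ volume a b := by
  rw [intervalIntegrable_iff_integrableOn_Icc_of_le hab]
  exact Integrable.mono' (integrableOn_const measure_Icc_lt_top.ne) hm hb

variable {n m q : ℕ} {f : Vec n → Vec m → Vec n} {h : Vec n → Vec q}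
  {σ₁ σ₂ κ : ℝ → ℝ} {u : ℝ → Vec m} {ξ : Vec n} {x : ℝ → Vec n}

/-- key integrability facts on `[0,T]` for a trajectory. -/
lemma traj_integrable
    (hfC : Continuous (fun p : Vec n × Vec m => f p.1 p.2))
    (hhc : Continuous h)
    (hσ₁c : ContinuousOn σ₁ (Set.Ici 0)) (hσ₂c : ContinuousOn σ₂ (Set.Ici 0))
    (hκc : ContinuousOn κ (Set.Ici 0))
    (hσ₁mono : MonotoneOn σ₁ (Set.Ici 0)) (hσ₂mono : MonotoneOn σ₂ (Set.Ici 0))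
    (hσ₁nn : ∀ s, 0 ≤ s → 0 ≤ σ₁ s) (hσ₂nn : ∀ s, 0 ≤ s → 0 ≤ σ₂ s)
    (hu : Adm u) (hx : IsSol f u ξ x) {a b : ℝ} (ha : 0 ≤ a) (hab : a ≤ b) :
    IntervalIntegrable (fun s => f (x s) (u s)) volume a b ∧
    IntervalIntegrable (fun s => σ₁ ‖h (x s)‖ + σ₂ ‖u s‖) volume a b ∧
    IntervalIntegrable (fun s => κ ‖x s‖) volume a b := by
  have hIcc : Set.Icc a b ⊆ Set.Icc 0 b := Icc_subset_Icc ha le_rfl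
  have hsub : Set.Icc a b ⊆ Set.Ici (0:ℝ) := fun s hs => le_trans ha hs.1
  -- continuity of x on [a,b]
  have hxc : ContinuousOn x (Set.Icc a b) := hx.1.mono hsub
  -- measurability
  have hxm : AEMeasurable x (volume.restrict (Icc a b)) :=
    hxc.aemeasurable measurableSet_Icc
  have hum : AEMeasurable u (volume.restrict (Icc a b)) := hu.1.aemeasurable
  have hFm : AEStronglyMeasurable (fun s => f (x s) (u s)) (volume.restrict (Icc a b)) := by
    exact (hfC.measurable.comp_aemeasurable (hxm.prodMk hum)).aestronglyMeasurable
  have hxnm : AEMeasurable (fun s => ‖x s‖) (volume.restrict (Icc a b)) := hxm.norm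
  have hκm : AEStronglyMeasurable (fun s => κ ‖x s‖) (volume.restrict (Icc a b)) := by
    have : (fun s => κ ‖x s‖) = (fun r : ℝ => κ (max r 0)) ∘ (fun s => ‖x s‖) := by
      funext s; simp [max_eq_left (norm_nonneg _)]
    rw [this]
    exact ((max0_cont hκc).measurable.comp_aemeasurable hxnm).aestronglyMeasurable
  have hwm : AEStronglyMeasurable (fun s => σ₁ ‖h (x s)‖ + σ₂ ‖u s‖)
      (volume.restrict (Icc a b)) := by
    have h1 : (fun s => σ₁ ‖h (x s)‖) = (fun r : ℝ => σ₁ (max r 0)) ∘ (fun s => ‖h (x s)‖) := by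
      funext s; simp [max_eq_left (norm_nonneg _)]
    have h2 : (fun s => σ₂ ‖u s‖) = (fun r : ℝ => σ₂ (max r 0)) ∘ (fun s => ‖u s‖) := by
      funext s; simp [max_eq_left (norm_nonneg _)]
    have hm1 : AEMeasurable (fun s => σ₁ ‖h (x s)‖) (volume.restrict (Icc a b)) := by
      rw [h1]; exact (max0_cont hσ₁c).measurable.comp_aemeasurable ((hhc.measurable.comp_aemeasurable hxm).norm)
    have hm2 : AEMeasurable (fun s => σ₂ ‖u s‖) (volume.restrict (Icc a b)) := by
      rw [h2]; exact (max0_cont hσ₂c).measurable.comp_aemeasurable hum.norm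
    exact (hm1.add hm2).aestronglyMeasurable
  -- bounds
  rcases le_or_gt b 0 with hb0 | hb0
  · -- degenerate: a = b = 0? a ≥ 0, a ≤ b ≤ 0 so a = b = 0; interval is a point
    have hab0 : a = b := le_antisymm hab (hb0.trans ha)
    subst hab0
    exact ⟨IntervalIntegrable.refl, IntervalIntegrable.refl, IntervalIntegrable.refl⟩
  obtain ⟨C₀, hC₀⟩ := hu.2 b hb0
  set C := max C₀ 0 with hC
  have hCu : ∀ᵐ s ∂volume.restrict (Icc a b), ‖u s‖ ≤ C := by
    filter_upwards [ae_restrict_of_ae hC₀, ae_restrict_mem measurableSet_Icc] with s h1 h2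
    exact le_trans (h1 (hIcc h2)) (le_max_left _ _)
  have hKx : IsCompact (x '' Icc a b) := (isCompact_Icc).image_of_continuousOn hxc
  -- bound for f term
  have hKp : IsCompact ((x '' Icc a b) ×ˢ Metric.closedBall (0 : Vec m) C) :=
    hKx.prod (isCompact_closedBall _ _)
  obtain ⟨M, hM⟩ := hKp.exists_bound_of_continuousOn hfC.continuousOn
  have hFb : ∀ᵐ s ∂volume.restrict (Icc a b), ‖f (x s) (u s)‖ ≤ M := by
    filter_upwards [hCu, ae_restrict_mem measurableSet_Icc] with s h1 h2
    exact hM (x s, u s) ⟨mem_image_of_mem x h2, by simpa [Metric.mem_closedBall, dist_eq_norm] using h1⟩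
  -- bound for w term
  obtain ⟨B₁, hB₁⟩ := hKx.exists_bound_of_continuousOn (hhc.continuousOn (s := x '' Icc a b)).norm
  set B := max B₁ 0 with hB
  have hwb : ∀ᵐ s ∂volume.restrict (Icc a b), ‖σ₁ ‖h (x s)‖ + σ₂ ‖u s‖‖ ≤ σ₁ B + σ₂ C := by
    filter_upwards [hCu, ae_restrict_mem measurableSet_Icc] with s h1 h2
    have e1 : σ₁ ‖h (x s)‖ ≤ σ₁ B := by
      refine hσ₁mono (norm_nonneg _) (mem_Ici.mpr (le_max_right _ _)) ?_
      have := hB₁ _ (mem_image_of_mem x h2)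
      rw [norm_norm] at this
      exact le_trans this (le_max_left _ _)
    have e2 : σ₂ ‖u s‖ ≤ σ₂ C := hσ₂mono (norm_nonneg _) (mem_Ici.mpr (le_max_right _ _)) h1
    have p1 : 0 ≤ σ₁ ‖h (x s)‖ := hσ₁nn _ (norm_nonneg _)
    have p2 : 0 ≤ σ₂ ‖u s‖ := hσ₂nn _ (norm_nonneg _)
    rw [Real.norm_eq_abs, abs_of_nonneg (by linarith)]
    linarith
  -- bound for κ term
  obtain ⟨Cx, hCx⟩ := hKx.exists_bound_of_continuousOn continuous_id.continuousOn
  obtain ⟨Mκ, hMκ⟩ := (isCompact_Icc (a := (0:ℝ)) (b := max Cx 0)).exists_bound_of_continuousOn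
    (hκc.mono (fun r hr => hr.1))
  have hκb : ∀ᵐ s ∂volume.restrict (Icc a b), ‖κ ‖x s‖‖ ≤ Mκ := by
    filter_upwards [ae_restrict_mem measurableSet_Icc] with s h2
    refine hMκ _ ⟨norm_nonneg _, ?_⟩
    have := hCx _ (mem_image_of_mem x h2)
    exact le_trans this (le_max_left _ _)
  exact ⟨intervalIntegrable_of_ae_bound hab hFm hFb,
         intervalIntegrable_of_ae_bound hab hwm hwb,
         intervalIntegrable_of_ae_bound hab hκm hκb⟩

lemma traj_shift (hu : Adm u) (hx : IsSol f u ξ x)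
    (hF : ∀ a b : ℝ, 0 ≤ a → a ≤ b → IntervalIntegrable (fun s => f (x s) (u s)) volume a b)
    {t₁ : ℝ} (ht₁ : 0 ≤ t₁) :
    Adm (fun s => u (t₁ + s)) ∧ IsSol f (fun s => u (t₁ + s)) (x t₁) (fun s => x (t₁ + s)) := by
  constructor
  · constructor
    · exact hu.1.comp (measurable_const_add t₁)
    · intro T hT
      obtain ⟨C, hC⟩ := hu.2 (t₁ + T) (by linarith)
      refine ⟨C, ?_⟩
      have := (measurePreserving_add_left volume t₁).quasiMeasurePreserving.ae hC
      filter_upwards [this] with s hs hmem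
      exact hs ⟨by linarith [hmem.1], by linarith [hmem.2]⟩
  · refine ⟨?_, by simp, ?_⟩
    · refine hx.1.comp (continuous_const.add continuous_id).continuousOn ?_
      intro s hs
      simp only [mem_Ici] at hs ⊢
      linarith
    · intro t ht
      have h1 := hx.2.2 (t₁ + t) (by linarith)
      have h2 := hx.2.2 t₁ ht₁
      have hsub := intervalIntegral.integral_interval_sub_left
        (hF 0 (t₁ + t) le_rfl (by linarith)) (hF 0 t₁ le_rfl ht₁)
      have hcomp := intervalIntegral.integral_comp_add_left
        (a := (0:ℝ)) (b := t) (fun s => f (x s) (u s)) t₁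
      simp only [add_zero] at hcomp
      have : x (t₁ + t) - x t₁ = ∫ s in t₁..(t₁ + t), f (x s) (u s) := by
        rw [h1, h2, ← hsub]; abel
      rw [hcomp]
      show x (t₁ + t) = x t₁ + _
      rw [← this]; abel

lemma traj_dec2
    (hfC : Continuous (fun p : Vec n × Vec m => f p.1 p.2))
    (hhc : Continuous h)
    (hσ₁c : ContinuousOn σ₁ (Set.Ici 0)) (hσ₂c : ContinuousOn σ₂ (Set.Ici 0))
    (hκc : ContinuousOn κ (Set.Ici 0))
    (hσ₁mono : MonotoneOn σ₁ (Set.Ici 0)) (hσ₂mono : MonotoneOn σ₂ (Set.Ici 0))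
    (hσ₁nn : ∀ s, 0 ≤ s → 0 ≤ σ₁ s) (hσ₂nn : ∀ s, 0 ≤ s → 0 ≤ σ₂ s)
    {V : Vec n → ℝ}
    (hVdec : ∀ (ξ : Vec n) (u : ℝ → Vec m) (x : ℝ → Vec n), Adm u → IsSol f u ξ x →
      ∀ t, 0 ≤ t → V (x t) - V ξ ≤
        ∫ s in (0 : ℝ)..t, (-κ ‖x s‖ + σ₁ ‖h (x s)‖ + σ₂ ‖u s‖))
    (hu : Adm u) (hx : IsSol f u ξ x) {t₁ t₂ : ℝ} (ht₁ : 0 ≤ t₁) (ht₂ : t₁ ≤ t₂) :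
    V (x t₂) - V (x t₁) ≤ -(∫ s in t₁..t₂, κ ‖x s‖)
      + ∫ s in t₁..t₂, (σ₁ ‖h (x s)‖ + σ₂ ‖u s‖) := by
  have hF : ∀ a b : ℝ, 0 ≤ a → a ≤ b → IntervalIntegrable (fun s => f (x s) (u s)) volume a b :=
    fun a b ha hab => (traj_integrable hfC hhc hσ₁c hσ₂c hκc hσ₁mono hσ₂mono hσ₁nn hσ₂nn
      hu hx ha hab).1
  obtain ⟨hu', hx'⟩ := traj_shift hu hx hF ht₁
  have hd := hVdec _ _ _ hu' hx' (t₂ - t₁) (by linarith)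
  have he : t₁ + (t₂ - t₁) = t₂ := by ring
  rw [he] at hd
  have hcomp := intervalIntegral.integral_comp_add_left (a := (0:ℝ)) (b := t₂ - t₁)
    (fun s => -κ ‖x s‖ + σ₁ ‖h (x s)‖ + σ₂ ‖u s‖) t₁
  simp only [add_zero, he] at hcomp
  rw [hcomp] at hd
  refine le_trans hd (le_of_eq ?_)
  have hsplit : (fun s => -κ ‖x s‖ + σ₁ ‖h (x s)‖ + σ₂ ‖u s‖)
      = fun s => (fun s => -κ ‖x s‖) s + (fun s => σ₁ ‖h (x s)‖ + σ₂ ‖u s‖) s := by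
    funext s; ring
  obtain ⟨_, hw, hκi⟩ := traj_integrable hfC hhc hσ₁c hσ₂c hκc hσ₁mono hσ₂mono hσ₁nn hσ₂nn
    hu hx ht₁ ht₂
  have hκneg : IntervalIntegrable (fun s => -κ ‖x s‖) volume t₁ t₂ := by
    exact hκi.neg
  rw [hsplit, intervalIntegral.integral_add hκneg hw]
  congr 1
  simpa using intervalIntegral.integral_neg (f := fun s => κ ‖x s‖) (a := t₁) (b := t₂)

lemma traj_z_dec
    (hfC : Continuous (fun p : Vec n × Vec m => f p.1 p.2))
    (hhc : Continuous h)
    (hσ₁c : ContinuousOn σ₁ (Set.Ici 0)) (hσ₂c : ContinuousOn σ₂ (Set.Ici 0))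
    (hκc : ContinuousOn κ (Set.Ici 0))
    (hσ₁mono : MonotoneOn σ₁ (Set.Ici 0)) (hσ₂mono : MonotoneOn σ₂ (Set.Ici 0))
    (hσ₁nn : ∀ s, 0 ≤ s → 0 ≤ σ₁ s) (hσ₂nn : ∀ s, 0 ≤ s → 0 ≤ σ₂ s)
    {V : Vec n → ℝ}
    (hVdec : ∀ (ξ : Vec n) (u : ℝ → Vec m) (x : ℝ → Vec n), Adm u → IsSol f u ξ x →
      ∀ t, 0 ≤ t → V (x t) - V ξ ≤
        ∫ s in (0 : ℝ)..t, (-κ ‖x s‖ + σ₁ ‖h (x s)‖ + σ₂ ‖u s‖))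
    (hu : Adm u) (hx : IsSol f u ξ x) {t₁ t₂ : ℝ} (ht₁ : 0 ≤ t₁) (ht₂ : t₁ ≤ t₂) :
    V (x t₂) - 2 * ∫ s in (0:ℝ)..t₂, (σ₁ ‖h (x s)‖ + σ₂ ‖u s‖)
      ≤ (V (x t₁) - 2 * ∫ s in (0:ℝ)..t₁, (σ₁ ‖h (x s)‖ + σ₂ ‖u s‖))
        - ∫ s in t₁..t₂, κ ‖x s‖ := by
  obtain ⟨_, hw01, _⟩ := traj_integrable hfC hhc hσ₁c hσ₂c hκc hσ₁mono hσ₂mono hσ₁nn hσ₂nn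
    hu hx le_rfl ht₁
  obtain ⟨_, hw12, _⟩ := traj_integrable hfC hhc hσ₁c hσ₂c hκc hσ₁mono hσ₂mono hσ₁nn hσ₂nn
    hu hx ht₁ ht₂
  have hadd := intervalIntegral.integral_add_adjacent_intervals hw01 hw12
  have hdec := traj_dec2 hfC hhc hσ₁c hσ₂c hκc hσ₁mono hσ₂mono hσ₁nn hσ₂nn hVdec hu hx ht₁ ht₂
  have hwpos : 0 ≤ ∫ s in t₁..t₂, (σ₁ ‖h (x s)‖ + σ₂ ‖u s‖) :=
    intervalIntegral.integral_nonneg ht₂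
      (fun s _ => add_nonneg (hσ₁nn _ (norm_nonneg _)) (hσ₂nn _ (norm_nonneg _)))
  have := hadd.symm
  linarith


/-- master per-trajectory decay estimate -/
lemma traj_master
    (hfC : Continuous (fun p : Vec n × Vec m => f p.1 p.2))
    (hhc : Continuous h)
    (hσ₁c : ContinuousOn σ₁ (Set.Ici 0)) (hσ₂c : ContinuousOn σ₂ (Set.Ici 0))
    (hκc : ContinuousOn κ (Set.Ici 0)) (hκnn : ∀ s, 0 ≤ s → 0 ≤ κ s)
    (hσ₁mono : MonotoneOn σ₁ (Set.Ici 0)) (hσ₂mono : MonotoneOn σ₂ (Set.Ici 0))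
    (hσ₁nn : ∀ s, 0 ≤ s → 0 ≤ σ₁ s) (hσ₂nn : ∀ s, 0 ≤ s → 0 ≤ σ₂ s)
    {V : Vec n → ℝ}
    (hVdec : ∀ (ξ : Vec n) (u : ℝ → Vec m) (x : ℝ → Vec n), Adm u → IsSol f u ξ x →
      ∀ t, 0 ≤ t → V (x t) - V ξ ≤
        ∫ s in (0 : ℝ)..t, (-κ ‖x s‖ + σ₁ ‖h (x s)‖ + σ₂ ‖u s‖))
    (hu : Adm u) (hx : IsSol f u ξ x)
    {R ε' c t : ℝ} (hVξ : V ξ ≤ R) (hε' : 0 < ε') (ht : 0 ≤ t)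
    (hc : ∀ v : Vec n, ε' ≤ V v → V v ≤ 2 * R → c ≤ κ ‖v‖)
    (hzt : ε' ≤ V (x t) - 2 * ∫ τ in (0:ℝ)..t, (σ₁ ‖h (x τ)‖ + σ₂ ‖u τ‖)) :
    V (x t) - 2 * ∫ τ in (0:ℝ)..t, (σ₁ ‖h (x τ)‖ + σ₂ ‖u τ‖) ≤ V ξ - c * t := by
  have wnn : ∀ τ : ℝ, 0 ≤ σ₁ ‖h (x τ)‖ + σ₂ ‖u τ‖ :=
    fun τ => add_nonneg (hσ₁nn _ (norm_nonneg _)) (hσ₂nn _ (norm_nonneg _))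
  have hII : ∀ a b : ℝ, 0 ≤ a → a ≤ b →
      IntervalIntegrable (fun s => σ₁ ‖h (x s)‖ + σ₂ ‖u s‖) volume a b ∧
      IntervalIntegrable (fun s => κ ‖x s‖) volume a b :=
    fun a b ha hab => ((traj_integrable hfC hhc hσ₁c hσ₂c hκc hσ₁mono hσ₂mono hσ₁nn hσ₂nn
      hu hx ha hab).2)
  have hκint : ∀ a b : ℝ, 0 ≤ a → a ≤ b → 0 ≤ ∫ s in a..b, κ ‖x s‖ :=
    fun a b _ hab => intervalIntegral.integral_nonneg hab (fun s _ => hκnn _ (norm_nonneg _))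
  have hgnn : ∀ s : ℝ, 0 ≤ s → 0 ≤ ∫ τ in (0:ℝ)..s, (σ₁ ‖h (x τ)‖ + σ₂ ‖u τ‖) :=
    fun s hs => intervalIntegral.integral_nonneg hs (fun τ _ => wnn τ)
  have hgmono : ∀ s : ℝ, 0 ≤ s → s ≤ t →
      (∫ τ in (0:ℝ)..s, (σ₁ ‖h (x τ)‖ + σ₂ ‖u τ‖))
        ≤ ∫ τ in (0:ℝ)..t, (σ₁ ‖h (x τ)‖ + σ₂ ‖u τ‖) := by
    intro s hs hst
    have hadd := intervalIntegral.integral_add_adjacent_intervals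
      (hII 0 s le_rfl hs).1 (hII s t hs hst).1
    have hpos : 0 ≤ ∫ τ in s..t, (σ₁ ‖h (x τ)‖ + σ₂ ‖u τ‖) :=
      intervalIntegral.integral_nonneg hst (fun τ _ => wnn τ)
    linarith
  -- z is bounded below by ε' on [0,t], and V(x s) ≤ V ξ + g s
  have hzs : ∀ s : ℝ, 0 ≤ s → s ≤ t → ε' ≤ V (x s)
      - 2 * ∫ τ in (0:ℝ)..s, (σ₁ ‖h (x τ)‖ + σ₂ ‖u τ‖) := by
    intro s hs hst
    have := traj_z_dec hfC hhc hσ₁c hσ₂c hκc hσ₁mono hσ₂mono hσ₁nn hσ₂nn hVdec hu hx hs hst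
    have hk := hκint s t hs hst
    linarith
  have hVxs : ∀ s : ℝ, 0 ≤ s → s ≤ t → V (x s)
      ≤ V ξ + ∫ τ in (0:ℝ)..s, (σ₁ ‖h (x τ)‖ + σ₂ ‖u τ‖) := by
    intro s hs _
    have := traj_dec2 hfC hhc hσ₁c hσ₂c hκc hσ₁mono hσ₂mono hσ₁nn hσ₂nn hVdec hu hx le_rfl hs
    rw [hx.2.1] at this
    have hk := hκint 0 s le_rfl hs
    linarith
  have hgt : (∫ τ in (0:ℝ)..t, (σ₁ ‖h (x τ)‖ + σ₂ ‖u τ‖)) ≤ V ξ - ε' := by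
    have h1 := hVxs t ht le_rfl
    linarith
  -- pointwise κ lower bound on [0,t]
  have hκlb : ∀ s ∈ Icc (0:ℝ) t, c ≤ κ ‖x s‖ := by
    intro s hs
    refine hc (x s) ?_ ?_
    · have h1 := hzs s hs.1 hs.2
      have h2 := hgnn s hs.1
      linarith
    · have h1 := hVxs s hs.1 hs.2
      have h2 := hgmono s hs.1 hs.2
      linarith
  have hκge : c * t ≤ ∫ s in (0:ℝ)..t, κ ‖x s‖ := by
    have := intervalIntegral.integral_mono_on ht
      (intervalIntegrable_const (c := c)) (hII 0 t le_rfl ht).2 hκlb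
    rw [intervalIntegral.integral_const] at this
    simpa [smul_eq_mul, mul_comm] using this
  have hzdec := traj_z_dec hfC hhc hσ₁c hσ₂c hκc hσ₁mono hσ₂mono hσ₁nn hσ₂nn hVdec hu hx
    le_rfl ht
  rw [hx.2.1] at hzdec
  simp only [intervalIntegral.integral_same] at hzdec
  linarith


end P1

section P2
variable {n m q : ℕ} (f : Vec n → Vec m → Vec n) (h : Vec n → Vec q) (V : Vec n → ℝ)
  (σ₁ σ₂ : ℝ → ℝ)

/-- worst-case value of `V(x(t)) - 2∫w` over trajectories starting in the ball of radius `s`. -/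
def Phi (s t : ℝ) : ℝ :=
  sSup (insert (0:ℝ) { v | ∃ (ξ : Vec n) (u : ℝ → Vec m) (x : ℝ → Vec n),
    Adm u ∧ IsSol f u ξ x ∧ ‖ξ‖ ≤ max s 0 ∧
    v = V (x (max t 0)) - 2 * ∫ τ in (0:ℝ)..(max t 0), (σ₁ ‖h (x τ)‖ + σ₂ ‖u τ‖) })

variable {f h V σ₁ σ₂}
variable {κ αlo αhi : ℝ → ℝ}

variable (hfC : Continuous (fun p : Vec n × Vec m => f p.1 p.2))
  (hhc : Continuous h)
  (hσ₁c : ContinuousOn σ₁ (Set.Ici 0)) (hσ₂c : ContinuousOn σ₂ (Set.Ici 0))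
  (hκc : ContinuousOn κ (Set.Ici 0)) (hκnn : ∀ s, 0 ≤ s → 0 ≤ κ s)
  (hσ₁mono : MonotoneOn σ₁ (Set.Ici 0)) (hσ₂mono : MonotoneOn σ₂ (Set.Ici 0))
  (hσ₁nn : ∀ s, 0 ≤ s → 0 ≤ σ₁ s) (hσ₂nn : ∀ s, 0 ≤ s → 0 ≤ σ₂ s)
  (hαlo : ClassKinf αlo) (hαhi : ClassKinf αhi)
  (hVb : ∀ ξ : Vec n, αlo ‖ξ‖ ≤ V ξ ∧ V ξ ≤ αhi ‖ξ‖)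
  (hVdec : ∀ (ξ : Vec n) (u : ℝ → Vec m) (x : ℝ → Vec n), Adm u → IsSol f u ξ x →
      ∀ t, 0 ≤ t → V (x t) - V ξ ≤
        ∫ s in (0 : ℝ)..t, (-κ ‖x s‖ + σ₁ ‖h (x s)‖ + σ₂ ‖u s‖))

section
include hfC hhc hσ₁c hσ₂c hκc hκnn hσ₁mono hσ₂mono hσ₁nn hσ₂nn hαhi hVb hVdec

lemma Phi_elem_le {s t v : ℝ}
    (hv : v ∈ insert (0:ℝ) { v | ∃ (ξ : Vec n) (u : ℝ → Vec m) (x : ℝ → Vec n),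
      Adm u ∧ IsSol f u ξ x ∧ ‖ξ‖ ≤ max s 0 ∧
      v = V (x (max t 0)) - 2 * ∫ τ in (0:ℝ)..(max t 0), (σ₁ ‖h (x τ)‖ + σ₂ ‖u τ‖) }) :
    v ≤ αhi (max s 0) := by
  have hαhinn : 0 ≤ αhi (max s 0) := hαhi.1.2.2.2 _ (le_max_right _ _)
  rcases hv with rfl | ⟨ξ, u, x, hu, hx, hξ, rfl⟩
  · exact hαhinn
  · have hz := traj_z_dec hfC hhc hσ₁c hσ₂c hκc hσ₁mono hσ₂mono hσ₁nn hσ₂nn hVdec hu hx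
      (le_refl (0:ℝ)) (le_max_right t 0)
    rw [hx.2.1] at hz
    simp only [intervalIntegral.integral_same] at hz
    have hκi : 0 ≤ ∫ s in (0:ℝ)..(max t 0), κ ‖x s‖ :=
      intervalIntegral.integral_nonneg (le_max_right _ _) (fun s _ => hκnn _ (norm_nonneg _))
    have h2 : V ξ ≤ αhi ‖ξ‖ := (hVb ξ).2
    have h3 : αhi ‖ξ‖ ≤ αhi (max s 0) :=
      hαhi.1.2.1.monotoneOn (norm_nonneg _) (mem_Ici.mpr (le_max_right _ _)) hξ
    linarith

lemma Phi_bdd (s t : ℝ) :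
    BddAbove (insert (0:ℝ) { v | ∃ (ξ : Vec n) (u : ℝ → Vec m) (x : ℝ → Vec n),
      Adm u ∧ IsSol f u ξ x ∧ ‖ξ‖ ≤ max s 0 ∧
      v = V (x (max t 0)) - 2 * ∫ τ in (0:ℝ)..(max t 0), (σ₁ ‖h (x τ)‖ + σ₂ ‖u τ‖) }) :=
  ⟨αhi (max s 0), fun v hv => Phi_elem_le hfC hhc hσ₁c hσ₂c hκc hκnn hσ₁mono hσ₂mono
    hσ₁nn hσ₂nn hαhi hVb hVdec hv⟩

lemma Phi_nonneg (s t : ℝ) : 0 ≤ Phi f h V σ₁ σ₂ s t :=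
  le_csSup (Phi_bdd hfC hhc hσ₁c hσ₂c hκc hκnn hσ₁mono hσ₂mono hσ₁nn hσ₂nn hαhi hVb hVdec s t)
    (mem_insert _ _)

lemma Phi_le (s t : ℝ) : Phi f h V σ₁ σ₂ s t ≤ αhi (max s 0) :=
  csSup_le (insert_nonempty _ _) (fun v hv => Phi_elem_le hfC hhc hσ₁c hσ₂c hκc hκnn
    hσ₁mono hσ₂mono hσ₁nn hσ₂nn hαhi hVb hVdec hv)

lemma Phi_mono (t : ℝ) : Monotone (fun s => Phi f h V σ₁ σ₂ s t) := by
  intro s₁ s₂ hs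
  refine csSup_le (insert_nonempty _ _) ?_
  rintro v (rfl | ⟨ξ, u, x, hu, hx, hξ, rfl⟩)
  · exact Phi_nonneg hfC hhc hσ₁c hσ₂c hκc hκnn hσ₁mono hσ₂mono hσ₁nn hσ₂nn hαhi hVb hVdec _ _
  · exact le_csSup (Phi_bdd hfC hhc hσ₁c hσ₂c hκc hκnn hσ₁mono hσ₂mono hσ₁nn hσ₂nn hαhi hVb
      hVdec s₂ t) (mem_insert_of_mem _ ⟨ξ, u, x, hu, hx, le_trans hξ (max_le_max hs le_rfl), rfl⟩)

lemma Phi_anti (s : ℝ) : Antitone (Phi f h V σ₁ σ₂ s) := by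
  intro t₁ t₂ ht
  refine csSup_le (insert_nonempty _ _) ?_
  rintro v (rfl | ⟨ξ, u, x, hu, hx, hξ, rfl⟩)
  · exact Phi_nonneg hfC hhc hσ₁c hσ₂c hκc hκnn hσ₁mono hσ₂mono hσ₁nn hσ₂nn hαhi hVb hVdec _ _
  · have hz := traj_z_dec hfC hhc hσ₁c hσ₂c hκc hσ₁mono hσ₂mono hσ₁nn hσ₂nn hVdec hu hx
      (le_max_right t₁ 0) (max_le_max ht (le_refl (0:ℝ)))
    have hκi : 0 ≤ ∫ s in (max t₁ 0)..(max t₂ 0), κ ‖x s‖ :=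
      intervalIntegral.integral_nonneg (max_le_max ht le_rfl)
        (fun s _ => hκnn _ (norm_nonneg _))
    have hmem : V (x (max t₁ 0)) - 2 * ∫ τ in (0:ℝ)..(max t₁ 0), (σ₁ ‖h (x τ)‖ + σ₂ ‖u τ‖)
        ≤ Phi f h V σ₁ σ₂ s t₁ :=
      le_csSup (Phi_bdd hfC hhc hσ₁c hσ₂c hκc hκnn hσ₁mono hσ₂mono hσ₁nn hσ₂nn hαhi hVb
        hVdec s t₁) (mem_insert_of_mem _ ⟨ξ, u, x, hu, hx, hξ, rfl⟩)
    linarith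

lemma Phi_zero (hαlo' : ClassKinf αlo) (t : ℝ) : Phi f h V σ₁ σ₂ 0 t = 0 := by
  refine le_antisymm ?_
    (Phi_nonneg hfC hhc hσ₁c hσ₂c hκc hκnn hσ₁mono hσ₂mono hσ₁nn hσ₂nn hαhi hVb hVdec _ _)
  refine csSup_le (insert_nonempty _ _) ?_
  rintro v (rfl | ⟨ξ, u, x, hu, hx, hξ, rfl⟩)
  · rfl
  · have hξ0 : ξ = 0 := by
      rw [max_self] at hξ
      exact norm_le_zero_iff.mp hξ
    have hV0 : V ξ = 0 := by
      subst hξ0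
      have h1 := (hVb 0).1
      have h2 := (hVb 0).2
      rw [norm_zero] at h1 h2
      rw [hαlo'.1.2.2.1] at h1
      rw [hαhi.1.2.2.1] at h2
      linarith
    have hz := traj_z_dec hfC hhc hσ₁c hσ₂c hκc hσ₁mono hσ₂mono hσ₁nn hσ₂nn hVdec hu hx
      (le_refl (0:ℝ)) (le_max_right t 0)
    rw [hx.2.1] at hz
    simp only [intervalIntegral.integral_same] at hz
    have hκi : 0 ≤ ∫ s in (0:ℝ)..(max t 0), κ ‖x s‖ :=
      intervalIntegral.integral_nonneg (le_max_right _ _) (fun s _ => hκnn _ (norm_nonneg _))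
    linarith

lemma Phi_major {ξ : Vec n} {u : ℝ → Vec m} {x : ℝ → Vec n} (hu : Adm u) (hx : IsSol f u ξ x)
    {t : ℝ} (ht : 0 ≤ t) :
    V (x t) - 2 * ∫ τ in (0:ℝ)..t, (σ₁ ‖h (x τ)‖ + σ₂ ‖u τ‖) ≤ Phi f h V σ₁ σ₂ ‖ξ‖ t := by
  have hmem : V (x t) - 2 * ∫ τ in (0:ℝ)..t, (σ₁ ‖h (x τ)‖ + σ₂ ‖u τ‖)
      ∈ insert (0:ℝ) { v | ∃ (ξ' : Vec n) (u' : ℝ → Vec m) (x' : ℝ → Vec n),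
        Adm u' ∧ IsSol f u' ξ' x' ∧ ‖ξ'‖ ≤ max ‖ξ‖ 0 ∧
        v = V (x' (max t 0)) - 2 * ∫ τ in (0:ℝ)..(max t 0), (σ₁ ‖h (x' τ)‖ + σ₂ ‖u' τ‖) } := by
    refine mem_insert_of_mem _ ⟨ξ, u, x, hu, hx, le_max_left _ _, ?_⟩
    rw [max_eq_left ht]
  exact le_csSup (Phi_bdd hfC hhc hσ₁c hσ₂c hκc hκnn hσ₁mono hσ₂mono hσ₁nn hσ₂nn hαhi hVb
    hVdec ‖ξ‖ t) hmem

end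

section
include hfC hhc hσ₁c hσ₂c hκc hκnn hσ₁mono hσ₂mono hσ₁nn hσ₂nn hαlo hαhi hVb hVdec

lemma Phi_dec (hκpd : PosDef κ) (hcomp : ∀ r : ℝ, 0 ≤ r → αlo r ≤ αhi r)
    (s ε : ℝ) (hε : 0 < ε) :
    ∃ T, ∀ t, T ≤ t → Phi f h V σ₁ σ₂ s t ≤ ε := by
  set S := max s 0 with hS
  have hS0 : 0 ≤ S := le_max_right _ _
  set R := αhi S with hR
  rcases eq_or_lt_of_le (hαhi.1.2.2.2 S hS0) with hR0 | hRpos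
  · -- R = 0 : then S = 0 and Phi vanishes
    have hSz : S = 0 := by
      by_contra hne
      have : 0 < S := lt_of_le_of_ne hS0 (Ne.symm hne)
      have := hαhi.1.2.1 (le_refl (0:ℝ)) hS0 this
      rw [hαhi.1.2.2.1] at this
      exact absurd hR0.symm (ne_of_gt this)
    have hPhiEq : Phi f h V σ₁ σ₂ s = Phi f h V σ₁ σ₂ 0 := by
      have hmax : max s 0 = max (0:ℝ) 0 := by rw [← hS, hSz, max_self]
      funext t
      rw [Phi, Phi, hmax]
    refine ⟨0, fun t _ => ?_⟩
    rw [hPhiEq, Phi_zero hfC hhc hσ₁c hσ₂c hκc hκnn hσ₁mono hσ₂mono hσ₁nn hσ₂nn hαhi hVb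
      hVdec hαlo t]
    exact le_of_lt hε
  · set ε' := min ε R with hε'def
    have hε' : 0 < ε' := lt_min hε hRpos
    have hε'R : ε' ≤ R := min_le_right _ _
    have hε'ε : ε' ≤ ε := min_le_left _ _
    -- choose a > 0 with αhi a < ε'
    have h0 : Tendsto αhi (nhdsWithin 0 (Ici 0)) (nhds 0) := by
      have := hαhi.1.1 0 (le_refl (0:ℝ))
      unfold ContinuousWithinAt at this
      rwa [hαhi.1.2.2.1] at this
    have hev : {r : ℝ | αhi r < ε'} ∈ nhdsWithin (0:ℝ) (Ici 0) := h0 (Iio_mem_nhds hε')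
    obtain ⟨w, hw0, hw⟩ := mem_nhdsGE_iff_exists_Ico_subset.mp hev
    set a := w / 2 with ha_def
    have ha0 : 0 < a := by simpa [ha_def] using half_pos (mem_Ioi.mp hw0)
    have haε : αhi a < ε' := hw ⟨le_of_lt ha0, by simp [ha_def]; linarith [mem_Ioi.mp hw0]⟩
    -- choose b with αlo b > 2R
    obtain ⟨b, hb0, hb⟩ := hαlo.2 (2 * R)
    -- a ≤ b
    have haS : a ≤ S := by
      by_contra hc'
      push_neg at hc'
      have := hαhi.1.2.1.monotoneOn hS0 (le_of_lt (lt_of_le_of_lt hS0 hc')) (le_of_lt hc')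
      rw [← hR] at this
      linarith
    have hSb : S ≤ b := by
      by_contra hc'
      push_neg at hc'
      have h1 := hαlo.1.2.1.monotoneOn hb0 hS0 (le_of_lt hc')
      have h2 := hcomp S hS0
      rw [← hR] at h2
      linarith
    have hab : a ≤ b := le_trans haS hSb
    -- define c
    have hKcompact : IsCompact (κ '' Icc a b) :=
      isCompact_Icc.image_of_continuousOn (hκc.mono (fun r hr => le_trans (le_of_lt ha0) hr.1))
    have hKne : (κ '' Icc a b).Nonempty := (nonempty_Icc.mpr hab).image κ
    set c := sInf (κ '' Icc a b) with hc_def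
    have hcpos : 0 < c := by
      obtain ⟨r₀, hr₀, hr₀eq⟩ := hKcompact.sInf_mem hKne
      rw [hc_def, ← hr₀eq]
      exact hκpd.2 _ (lt_of_lt_of_le ha0 hr₀.1)
    have hc : ∀ v : Vec n, ε' ≤ V v → V v ≤ 2 * R → c ≤ κ ‖v‖ := by
      intro v h1 h2
      have hva : a ≤ ‖v‖ := by
        by_contra hc'
        push_neg at hc'
        have := hαhi.1.2.1.monotoneOn (norm_nonneg v) (le_of_lt ha0) (le_of_lt hc')
        have hv2 := (hVb v).2
        linarith
      have hvb : ‖v‖ ≤ b := by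
        by_contra hc'
        push_neg at hc'
        have := hαlo.1.2.1.monotoneOn hb0 (norm_nonneg v) (le_of_lt hc')
        have hv1 := (hVb v).1
        linarith
      exact csInf_le hKcompact.bddBelow (mem_image_of_mem κ ⟨hva, hvb⟩)
    refine ⟨max (R / c) 0, fun t ht => ?_⟩
    have ht0 : 0 ≤ t := le_trans (le_max_right _ _) ht
    have hct : R ≤ c * t := by
      have h1 : R / c ≤ t := le_trans (le_max_left _ _) ht
      calc R = c * (R / c) := by field_simp
      _ ≤ c * t := by exact mul_le_mul_of_nonneg_left h1 (le_of_lt hcpos)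
    refine csSup_le (insert_nonempty _ _) ?_
    rintro v (rfl | ⟨ξ, u, x, hu, hx, hξ, rfl⟩)
    · exact le_of_lt hε
    · rw [max_eq_left ht0]
      have hVξ : V ξ ≤ R := le_trans (hVb ξ).2 (hαhi.1.2.1.monotoneOn (norm_nonneg _) hS0 hξ)
      by_cases hz : ε' ≤ V (x t) - 2 * ∫ τ in (0:ℝ)..t, (σ₁ ‖h (x τ)‖ + σ₂ ‖u τ‖)
      · have := traj_master hfC hhc hσ₁c hσ₂c hκc hκnn hσ₁mono hσ₂mono hσ₁nn hσ₂nn hVdec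
          hu hx hVξ hε' ht0 hc hz
        linarith
      · push_neg at hz
        linarith
end
end P2

section KL
set_option linter.unusedSectionVars false
variable {Φ : ℝ → ℝ → ℝ} {αhi : ℝ → ℝ}

def Jfun (Φ : ℝ → ℝ → ℝ) (s t : ℝ) : ℝ := ∫ τ in (t-1)..t, Φ s τ

def Bfun (Φ : ℝ → ℝ → ℝ) (s t : ℝ) : ℝ := ∫ u in (1:ℝ)..2, Jfun Φ (u * s) t

variable (hαhi : ClassKinf αhi)
  (hmono : ∀ t, Monotone (fun s' => Φ s' t))
  (hanti : ∀ s, Antitone (Φ s))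
  (hnn : ∀ s t, 0 ≤ Φ s t)
  (hub : ∀ s t, Φ s t ≤ αhi (max s 0))
  (h0 : ∀ t, Φ 0 t = 0)
  (hdec : ∀ s ε : ℝ, 0 < ε → ∃ T, ∀ t, T ≤ t → Φ s t ≤ ε)

section
include hαhi hmono hanti hnn hub h0 hdec

lemma Phi_ii (s a b : ℝ) : IntervalIntegrable (Φ s) volume a b :=
  ((hanti s).antitoneOn _).intervalIntegrable

lemma J_nonneg (s t : ℝ) : 0 ≤ Jfun Φ s t :=
  intervalIntegral.integral_nonneg (by linarith) (fun τ _ => hnn s τ)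

lemma J_ub (s t : ℝ) : Jfun Φ s t ≤ αhi (max s 0) := by
  have h1 := intervalIntegral.integral_mono_on (a := t-1) (b := t) (μ := volume)
    (by linarith) (Phi_ii hαhi hmono hanti hnn hub h0 hdec s _ _) intervalIntegrable_const
    (fun τ _ => hub s τ)
  rw [intervalIntegral.integral_const] at h1
  have h2 : (t - (t-1)) • αhi (max s 0) = αhi (max s 0) := by
    rw [smul_eq_mul]; ring
  rw [h2] at h1
  exact h1

lemma J_mono (t : ℝ) : Monotone (fun s => Jfun Φ s t) := by
  intro s₁ s₂ hs
  exact intervalIntegral.integral_mono_on (by linarith)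
    (Phi_ii hαhi hmono hanti hnn hub h0 hdec s₁ _ _)
    (Phi_ii hαhi hmono hanti hnn hub h0 hdec s₂ _ _) (fun τ _ => hmono τ hs)

lemma J_anti (s : ℝ) : Antitone (Jfun Φ s) := by
  intro t₁ t₂ ht
  have hcomp := intervalIntegral.integral_comp_add_right (a := t₁ - 1) (b := t₁)
    (fun τ => Φ s τ) (t₂ - t₁)
  have he1 : t₁ - 1 + (t₂ - t₁) = t₂ - 1 := by ring
  have he2 : t₁ + (t₂ - t₁) = t₂ := by ring
  rw [he1, he2] at hcomp
  show Jfun Φ s t₂ ≤ Jfun Φ s t₁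
  rw [Jfun, Jfun, ← hcomp]
  refine intervalIntegral.integral_mono_on (by linarith) ?_
    (Phi_ii hαhi hmono hanti hnn hub h0 hdec s _ _) ?_
  · have : Antitone (fun τ => Φ s (τ + (t₂ - t₁))) := fun a b hab => hanti s (by linarith)
    exact (this.antitoneOn _).intervalIntegrable
  · exact fun τ _ => hanti s (by linarith)

lemma J_ge (s t : ℝ) : Φ s t ≤ Jfun Φ s t := by
  have h1 := intervalIntegral.integral_mono_on (a := t-1) (b := t) (μ := volume)
    (by linarith) intervalIntegrable_const (Phi_ii hαhi hmono hanti hnn hub h0 hdec s _ _)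
    (fun τ hτ => hanti s hτ.2)
  rw [intervalIntegral.integral_const] at h1
  have h2 : (t - (t-1)) • Φ s t = Φ s t := by rw [smul_eq_mul]; ring
  rw [h2] at h1
  exact h1

lemma J_zero (t : ℝ) : Jfun Φ 0 t = 0 := by
  rw [Jfun]
  have : (fun τ => Φ 0 τ) = fun _ => (0:ℝ) := funext h0
  rw [this]
  simp

lemma J_dec (s ε : ℝ) (hε : 0 < ε) : ∃ T, ∀ t, T ≤ t → Jfun Φ s t ≤ ε := by
  obtain ⟨T, hT⟩ := hdec s ε hε
  refine ⟨T + 1, fun t ht => ?_⟩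
  have h1 := intervalIntegral.integral_mono_on (a := t-1) (b := t) (μ := volume)
    (by linarith) (Phi_ii hαhi hmono hanti hnn hub h0 hdec s _ _) intervalIntegrable_const
    (fun τ hτ => hT τ (by linarith [hτ.1]))
  rw [intervalIntegral.integral_const] at h1
  have h2 : (t - (t-1)) • ε = ε := by rw [smul_eq_mul]; ring
  rw [h2] at h1
  exact h1

lemma J_mono' (t : ℝ) (s : ℝ) (hs : 0 ≤ s) :
    Monotone (fun u : ℝ => Jfun Φ (u * s) t) := by
  intro u₁ u₂ hu
  exact J_mono hαhi hmono hanti hnn hub h0 hdec t (mul_le_mul_of_nonneg_right hu hs)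

lemma Ju_ii (t s : ℝ) (hs : 0 ≤ s) (a b : ℝ) :
    IntervalIntegrable (fun u : ℝ => Jfun Φ (u * s) t) volume a b :=
  ((J_mono' hαhi hmono hanti hnn hub h0 hdec t s hs).monotoneOn _).intervalIntegrable

lemma B_nonneg (s t : ℝ) : 0 ≤ Bfun Φ s t :=
  intervalIntegral.integral_nonneg (by norm_num)
    (fun u _ => J_nonneg hαhi hmono hanti hnn hub h0 hdec _ t)

lemma B_ub (s t : ℝ) (hs : 0 ≤ s) : Bfun Φ s t ≤ αhi (2 * s) := by
  have hpt : ∀ u ∈ Icc (1:ℝ) 2, Jfun Φ (u * s) t ≤ αhi (2 * s) := by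
    intro u hu
    have hus : 0 ≤ u * s := mul_nonneg (by linarith [hu.1]) hs
    have h3 := J_ub hαhi hmono hanti hnn hub h0 hdec (u * s) t
    rw [max_eq_left hus] at h3
    refine le_trans h3 (hαhi.1.2.1.monotoneOn hus (by simp only [Set.mem_Ici]; linarith) ?_)
    exact mul_le_mul_of_nonneg_right hu.2 hs
  have h1 := intervalIntegral.integral_mono_on (a := (1:ℝ)) (b := 2) (μ := volume)
    (by norm_num) (Ju_ii hαhi hmono hanti hnn hub h0 hdec t s hs 1 2)
    intervalIntegrable_const hpt
  rw [intervalIntegral.integral_const] at h1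
  have h2 : ((2:ℝ) - 1) • αhi (2 * s) = αhi (2 * s) := by rw [smul_eq_mul]; ring
  rwa [h2] at h1

lemma B_mono (t : ℝ) : MonotoneOn (fun s => Bfun Φ s t) (Set.Ici 0) := by
  intro s₁ hs₁ s₂ hs₂ hs
  refine intervalIntegral.integral_mono_on (by norm_num)
    (Ju_ii hαhi hmono hanti hnn hub h0 hdec t s₁ hs₁ 1 2)
    (Ju_ii hαhi hmono hanti hnn hub h0 hdec t s₂ hs₂ 1 2) (fun u hu => ?_)
  exact J_mono hαhi hmono hanti hnn hub h0 hdec t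
    (mul_le_mul_of_nonneg_left hs (by linarith [hu.1]))

lemma B_anti (s : ℝ) (hs : 0 ≤ s) : Antitone (Bfun Φ s) := by
  intro t₁ t₂ ht
  refine intervalIntegral.integral_mono_on (by norm_num)
    (Ju_ii hαhi hmono hanti hnn hub h0 hdec t₂ s hs 1 2)
    (Ju_ii hαhi hmono hanti hnn hub h0 hdec t₁ s hs 1 2) (fun u _ => ?_)
  exact J_anti hαhi hmono hanti hnn hub h0 hdec (u * s) ht

lemma B_ge (s t : ℝ) (hs : 0 ≤ s) : Φ s t ≤ Bfun Φ s t := by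
  have hpt : ∀ u ∈ Icc (1:ℝ) 2, Jfun Φ s t ≤ Jfun Φ (u * s) t := by
    intro u hu
    refine J_mono hαhi hmono hanti hnn hub h0 hdec t ?_
    nlinarith [hu.1, hs]
  have h1 := intervalIntegral.integral_mono_on (a := (1:ℝ)) (b := 2) (μ := volume)
    (by norm_num) intervalIntegrable_const
    (Ju_ii hαhi hmono hanti hnn hub h0 hdec t s hs 1 2) hpt
  rw [intervalIntegral.integral_const] at h1
  have h2 : ((2:ℝ) - 1) • Jfun Φ s t = Jfun Φ s t := by rw [smul_eq_mul]; ring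
  rw [h2] at h1
  exact le_trans (J_ge hαhi hmono hanti hnn hub h0 hdec s t) h1

lemma B_zero (t : ℝ) : Bfun Φ 0 t = 0 := by
  rw [Bfun]
  have : (fun u : ℝ => Jfun Φ (u * 0) t) = fun _ => (0:ℝ) := by
    funext u; rw [mul_zero]; exact J_zero hαhi hmono hanti hnn hub h0 hdec t
  rw [this]
  simp

lemma B_dec (s : ℝ) (hs : 0 ≤ s) (ε : ℝ) (hε : 0 < ε) :
    ∃ T, ∀ t, T ≤ t → Bfun Φ s t ≤ ε := by
  obtain ⟨T, hT⟩ := J_dec hαhi hmono hanti hnn hub h0 hdec (2 * s) ε hε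
  refine ⟨T, fun t ht => ?_⟩
  have hpt : ∀ u ∈ Icc (1:ℝ) 2, Jfun Φ (u * s) t ≤ ε := by
    intro u hu
    refine le_trans (J_mono hαhi hmono hanti hnn hub h0 hdec t (show u * s ≤ 2 * s from
      mul_le_mul_of_nonneg_right hu.2 hs)) (hT t ht)
  have h1 := intervalIntegral.integral_mono_on (a := (1:ℝ)) (b := 2) (μ := volume)
    (by norm_num) (Ju_ii hαhi hmono hanti hnn hub h0 hdec t s hs 1 2)
    intervalIntegrable_const hpt
  rw [intervalIntegral.integral_const] at h1
  have h2 : ((2:ℝ) - 1) • ε = ε := by rw [smul_eq_mul]; ring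
  rwa [h2] at h1

lemma J_lip (σ t t' : ℝ) :
    |Jfun Φ σ t' - Jfun Φ σ t| ≤ 2 * αhi (max σ 0) * |t' - t| := by
  set B' := αhi (max σ 0) with hB'
  have habs : ∀ a b : ℝ, |∫ τ in a..b, Φ σ τ| ≤ B' * |b - a| := by
    intro a b
    have := intervalIntegral.norm_integral_le_of_norm_le_const (a := a) (b := b)
      (C := B') (f := Φ σ) (fun τ _ => by
        rw [Real.norm_eq_abs, abs_of_nonneg (hnn σ τ)]; exact hub σ τ)
    rwa [Real.norm_eq_abs] at this
  have hkey : Jfun Φ σ t' - Jfun Φ σ t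
      = (∫ τ in t..t', Φ σ τ) - ∫ τ in (t-1)..(t'-1), Φ σ τ := by
    have e3 := intervalIntegral.integral_interval_sub_left (μ := volume)
      (Phi_ii hαhi hmono hanti hnn hub h0 hdec σ 0 t')
      (Phi_ii hαhi hmono hanti hnn hub h0 hdec σ 0 (t'-1))
    have e4 := intervalIntegral.integral_interval_sub_left (μ := volume)
      (Phi_ii hαhi hmono hanti hnn hub h0 hdec σ 0 t)
      (Phi_ii hαhi hmono hanti hnn hub h0 hdec σ 0 (t-1))
    have e1 := intervalIntegral.integral_interval_sub_left (μ := volume)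
      (Phi_ii hαhi hmono hanti hnn hub h0 hdec σ 0 t')
      (Phi_ii hαhi hmono hanti hnn hub h0 hdec σ 0 t)
    have e2 := intervalIntegral.integral_interval_sub_left (μ := volume)
      (Phi_ii hαhi hmono hanti hnn hub h0 hdec σ 0 (t'-1))
      (Phi_ii hαhi hmono hanti hnn hub h0 hdec σ 0 (t-1))
    rw [Jfun, Jfun, ← e3, ← e4, ← e1, ← e2]
    ring
  rw [hkey]
  have h1 := habs t t'
  have h2 := habs (t-1) (t'-1)
  have h3 : |t' - 1 - (t - 1)| = |t' - t| := by ring_nf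
  rw [h3] at h2
  calc |(∫ τ in t..t', Φ σ τ) - ∫ τ in (t-1)..(t'-1), Φ σ τ|
      ≤ |∫ τ in t..t', Φ σ τ| + |∫ τ in (t-1)..(t'-1), Φ σ τ| := abs_sub _ _
    _ ≤ B' * |t' - t| + B' * |t' - t| := add_le_add h1 h2
    _ = 2 * B' * |t' - t| := by ring

lemma B_cont_t (s : ℝ) (hs : 0 ≤ s) : Continuous (Bfun Φ s) := by
  set K := 2 * αhi (2 * s) with hK
  have hKnn : 0 ≤ K := by
    have := hαhi.1.2.2.2 (2*s) (by linarith)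
    linarith
  refine (LipschitzWith.of_dist_le_mul (K := Real.toNNReal K) ?_).continuous
  intro t' t
  rw [Real.dist_eq, Real.dist_eq, Real.coe_toNNReal _ hKnn]
  have hsub : Bfun Φ s t' - Bfun Φ s t = ∫ u in (1:ℝ)..2,
      (Jfun Φ (u * s) t' - Jfun Φ (u * s) t) := by
    rw [Bfun, Bfun, ← intervalIntegral.integral_sub
      (Ju_ii hαhi hmono hanti hnn hub h0 hdec t' s hs 1 2)
      (Ju_ii hαhi hmono hanti hnn hub h0 hdec t s hs 1 2)]
  have hbd : ∀ u ∈ Set.uIoc (1:ℝ) 2,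
      ‖Jfun Φ (u * s) t' - Jfun Φ (u * s) t‖ ≤ K * |t' - t| := by
    intro u hu
    rw [Set.uIoc_of_le (by norm_num : (1:ℝ) ≤ 2)] at hu
    have hus : 0 ≤ u * s := mul_nonneg (by linarith [hu.1]) hs
    have h1 := J_lip hαhi hmono hanti hnn hub h0 hdec (u * s) t t'
    rw [max_eq_left hus] at h1
    have h2 : αhi (u * s) ≤ αhi (2 * s) :=
      hαhi.1.2.1.monotoneOn hus (by simp only [Set.mem_Ici]; linarith) (mul_le_mul_of_nonneg_right hu.2 hs)
    rw [Real.norm_eq_abs]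
    calc |Jfun Φ (u * s) t' - Jfun Φ (u * s) t| ≤ 2 * αhi (u * s) * |t' - t| := h1
      _ ≤ K * |t' - t| := by
          rw [hK]
          have := abs_nonneg (t' - t)
          nlinarith
  have := intervalIntegral.norm_integral_le_of_norm_le_const (C := K * |t' - t|) hbd
  rw [← hsub] at this
  rw [Real.norm_eq_abs] at this
  calc |Bfun Φ s t' - Bfun Φ s t| ≤ K * |t' - t| * |2 - 1| := this
    _ = K * |t' - t| := by norm_num


omit hαhi hmono hanti hnn hub h0 hdec in
lemma max0_cont' {φ : ℝ → ℝ} (hφ : ContinuousOn φ (Set.Ici 0)) :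
    Continuous (fun r : ℝ => φ (max r 0)) :=
  hφ.comp_continuous (continuous_id.max continuous_const) (fun _ => mem_Ici.mpr (le_max_right _ _))

lemma B_cont_s (t : ℝ) : ContinuousOn (fun s => Bfun Φ s t) (Set.Ici 0) := by
  have hJii : ∀ a b : ℝ, IntervalIntegrable (fun v => Jfun Φ v t) volume a b :=
    fun a b => ((J_mono hαhi hmono hanti hnn hub h0 hdec t).monotoneOn _).intervalIntegrable
  set G := fun σ : ℝ => ∫ v in (0:ℝ)..σ, Jfun Φ v t with hGdef
  have hGc : Continuous G := intervalIntegral.continuous_primitive hJii 0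
  have hform : ∀ s : ℝ, s ≠ 0 → Bfun Φ s t = s⁻¹ * (G (2*s) - G s) := by
    intro s hs
    have hcm := intervalIntegral.integral_comp_mul_right (a := (1:ℝ)) (b := 2) (c := s)
      (fun v => Jfun Φ v t) hs
    have hsub := intervalIntegral.integral_interval_sub_left (μ := volume)
      (hJii 0 (2*s)) (hJii 0 s)
    rw [Bfun, hcm, one_mul, smul_eq_mul]
    congr 1
    rw [← hsub]
  intro s₀ hs₀
  rcases eq_or_lt_of_le (mem_Ici.mp hs₀) with hz | hpos
  · -- s₀ = 0
    have hz' : s₀ = 0 := hz.symm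
    subst hz'
    have hB0 : Bfun Φ 0 t = 0 := B_zero hαhi hmono hanti hnn hub h0 hdec t
    rw [ContinuousWithinAt, hB0]
    have hgc : Continuous (fun s : ℝ => αhi (max (2*s) 0)) :=
      (max0_cont' hαhi.1.1).comp (continuous_const.mul continuous_id)
    have hg0 : αhi (max (2*(0:ℝ)) 0) = 0 := by
      norm_num
      exact hαhi.1.2.2.1
    have hgt : Tendsto (fun s : ℝ => αhi (max (2*s) 0)) (nhdsWithin 0 (Ici 0)) (nhds 0) := by
      have := (hgc.tendsto 0).mono_left (nhdsWithin_le_nhds (s := Ici (0:ℝ)))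
      rwa [hg0] at this
    refine tendsto_of_tendsto_of_tendsto_of_le_of_le' tendsto_const_nhds hgt ?_ ?_
    · filter_upwards [self_mem_nhdsWithin] with s hs
      exact B_nonneg hαhi hmono hanti hnn hub h0 hdec s t
    · filter_upwards [self_mem_nhdsWithin] with s hs
      have := B_ub hαhi hmono hanti hnn hub h0 hdec s t (mem_Ici.mp hs)
      rwa [max_eq_left (by linarith [mem_Ici.mp hs] : (0:ℝ) ≤ 2*s)]
  · -- 0 < s₀
    have hne : s₀ ≠ 0 := ne_of_gt hpos
    have hca : ContinuousAt (fun s : ℝ => s⁻¹ * (G (2*s) - G s)) s₀ := by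
      have h1 : ContinuousAt (fun s : ℝ => s⁻¹) s₀ := (continuousAt_inv₀ hne)
      have h2 : ContinuousAt (fun s : ℝ => G (2*s)) s₀ :=
        (hGc.comp (continuous_const.mul continuous_id)).continuousAt
      exact h1.mul (h2.sub hGc.continuousAt)
    have hev : (fun s : ℝ => s⁻¹ * (G (2*s) - G s)) =ᶠ[nhds s₀] (fun s => Bfun Φ s t) := by
      filter_upwards [eventually_ne_nhds hne] with s hs
      exact (hform s hs).symm
    exact (hca.congr hev).continuousWithinAt

include hαhi hmono hanti hnn hub h0 hdec in
lemma kl_major :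
    ∃ β : ℝ → ℝ → ℝ, ClassKL β ∧ ∀ s t : ℝ, 0 ≤ s → 0 ≤ t → Φ s t ≤ β s t := by
  refine ⟨fun s t => Bfun Φ s t + Real.exp (-t) * s, ⟨?_, ?_⟩, ?_⟩
  · intro t ht
    refine ⟨?_, ?_, ?_, ?_⟩
    · exact (B_cont_s hαhi hmono hanti hnn hub h0 hdec t).add
        (continuous_const.mul continuous_id).continuousOn
    · intro s₁ h₁ s₂ h₂ hlt
      have hm := B_mono hαhi hmono hanti hnn hub h0 hdec t h₁ h₂ (le_of_lt hlt)
      have he : Real.exp (-t) * s₁ < Real.exp (-t) * s₂ :=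
        mul_lt_mul_of_pos_left hlt (Real.exp_pos _)
      simp only []
      linarith
    · have := B_zero hαhi hmono hanti hnn hub h0 hdec t
      simp only [this, mul_zero, add_zero]
    · intro s hs
      have h1 := B_nonneg hαhi hmono hanti hnn hub h0 hdec s t
      have h2 : 0 ≤ Real.exp (-t) * s := mul_nonneg (Real.exp_pos _).le hs
      exact add_nonneg h1 h2
  · intro s hs
    refine ⟨?_, ?_, ?_⟩
    · exact ((B_cont_t hαhi hmono hanti hnn hub h0 hdec s hs).add
        ((Real.continuous_exp.comp continuous_neg).mul continuous_const)).continuousOn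
    · intro t₁ _ t₂ _ ht
      have h1 := B_anti hαhi hmono hanti hnn hub h0 hdec s hs ht
      have h2 : Real.exp (-t₂) * s ≤ Real.exp (-t₁) * s :=
        mul_le_mul_of_nonneg_right (Real.exp_le_exp.mpr (by linarith)) hs
      simp only []
      linarith
    · have h1 : Tendsto (fun t => Bfun Φ s t) atTop (nhds 0) := by
        rw [Metric.tendsto_atTop]
        intro ε hε
        obtain ⟨T, hT⟩ := B_dec hαhi hmono hanti hnn hub h0 hdec s hs (ε/2) (by linarith)
        refine ⟨T, fun t ht => ?_⟩
        rw [Real.dist_eq, sub_zero,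
          abs_of_nonneg (B_nonneg hαhi hmono hanti hnn hub h0 hdec s t)]
        linarith [hT t ht]
      have h2 : Tendsto (fun t : ℝ => Real.exp (-t) * s) atTop (nhds 0) := by
        have := (Real.tendsto_exp_atBot.comp tendsto_neg_atTop_atBot).mul_const s
        rwa [zero_mul] at this
      have := h1.add h2
      rwa [add_zero] at this
  · intro s t hs ht
    have h1 := B_ge hαhi hmono hanti hnn hub h0 hdec s t hs
    have h2 : 0 ≤ Real.exp (-t) * s := mul_nonneg (Real.exp_pos _).le hs
    exact le_add_of_le_of_nonneg h1 h2

end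
end KL

/-- Theorem 1, sufficiency: a forward complete system admitting a continuous
iIOSS Lyapunov function (coded via its integral decrease along solutions) is iIOSS. -/
theorem stmt12 {n m q : ℕ} (f : Vec n → Vec m → Vec n) (h : Vec n → Vec q)
    (hf : RegularRHS f) (hf0 : f 0 0 = 0) (hh : LocallyLipschitz h) (hh0 : h 0 = 0)
    (hfc : ForwardComplete f)
    (V : Vec n → ℝ) (hVc : Continuous V)
    (αlo αhi σ₁ σ₂ κ : ℝ → ℝ)
    (hαlo : ClassKinf αlo) (hαhi : ClassKinf αhi) (hσ₁ : ClassK σ₁) (hσ₂ : ClassK σ₂)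
    (hκc : ContinuousOn κ (Set.Ici 0)) (hκpd : PosDef κ) (hκnn : ∀ s, 0 ≤ s → 0 ≤ κ s)
    (hVbound : ∀ ξ : Vec n, αlo ‖ξ‖ ≤ V ξ ∧ V ξ ≤ αhi ‖ξ‖)
    (hVdec : ∀ (ξ : Vec n) (u : ℝ → Vec m) (x : ℝ → Vec n), Adm u → IsSol f u ξ x →
      ∀ t, 0 ≤ t → V (x t) - V ξ ≤
        ∫ s in (0 : ℝ)..t, (-κ ‖x s‖ + σ₁ ‖h (x s)‖ + σ₂ ‖u s‖)) :
    ∃ α β γ₁ γ₂ : _, ClassKinf α ∧ ClassKL β ∧ ClassK γ₁ ∧ ClassK γ₂ ∧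
      ∀ (ξ : Vec n) (u : ℝ → Vec m) (x : ℝ → Vec n), Adm u → IsSol f u ξ x →
        ∀ t, 0 ≤ t → α ‖x t‖ ≤ β ‖ξ‖ t + ∫ s in (0 : ℝ)..t, (γ₁ ‖h (x s)‖ + γ₂ ‖u s‖) := by
  rcases Nat.eq_zero_or_pos n with hn0 | hn
  · -- trivial case n = 0
    subst hn0
    refine ⟨αlo, fun s t => s * Real.exp (-t), σ₁, σ₂, hαlo, ⟨?_, ?_⟩, hσ₁, hσ₂, ?_⟩
    · intro t _
      refine ⟨(continuous_id.mul continuous_const).continuousOn, ?_, by simp, ?_⟩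
      · intro s₁ _ s₂ _ hlt
        exact mul_lt_mul_of_pos_right hlt (Real.exp_pos _)
      · intro s hs
        exact mul_nonneg hs (Real.exp_pos _).le
    · intro s hs
      refine ⟨(continuous_const.mul (Real.continuous_exp.comp continuous_neg)).continuousOn,
        ?_, ?_⟩
      · intro t₁ _ t₂ _ ht
        exact mul_le_mul_of_nonneg_left (Real.exp_le_exp.mpr (by linarith)) hs
      · have := (Real.tendsto_exp_atBot.comp tendsto_neg_atTop_atBot).const_mul s
        rwa [mul_zero] at this
    · intro ξ u x hu hx t ht
      have hx0 : x t = 0 := by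
        ext i
        exact i.elim0
      rw [hx0, norm_zero, hαlo.1.2.2.1]
      have h1 : 0 ≤ ‖ξ‖ * Real.exp (-t) := mul_nonneg (norm_nonneg _) (Real.exp_pos _).le
      have h2 : 0 ≤ ∫ s in (0:ℝ)..t, (σ₁ ‖h (x s)‖ + σ₂ ‖u s‖) :=
        intervalIntegral.integral_nonneg ht
          (fun s _ => add_nonneg (hσ₁.2.2.2 _ (norm_nonneg _)) (hσ₂.2.2.2 _ (norm_nonneg _)))
      exact add_nonneg h1 h2
  · -- main case n ≥ 1
    have hfCont : Continuous (fun p : Vec n × Vec m => f p.1 p.2) := hf.1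
    have hhc : Continuous h := hh.continuous
    have hσ₁c := hσ₁.1
    have hσ₂c := hσ₂.1
    have hσ₁mono : MonotoneOn σ₁ (Set.Ici 0) := hσ₁.2.1.monotoneOn
    have hσ₂mono : MonotoneOn σ₂ (Set.Ici 0) := hσ₂.2.1.monotoneOn
    have hσ₁nn := hσ₁.2.2.2
    have hσ₂nn := hσ₂.2.2.2
    have hcomp : ∀ r : ℝ, 0 ≤ r → αlo r ≤ αhi r := by
      intro r hr
      set ξ : Vec n := EuclideanSpace.single (⟨0, hn⟩ : Fin n) r with hξ
      have hnorm : ‖ξ‖ = r := by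
        rw [hξ, EuclideanSpace.norm_single, Real.norm_eq_abs, abs_of_nonneg hr]
      have h1 := (hVbound ξ).1
      have h2 := (hVbound ξ).2
      rw [hnorm] at h1 h2
      linarith
    obtain ⟨β, hβKL, hβmaj⟩ := kl_major (Φ := Phi f h V σ₁ σ₂) hαhi
      (fun t => Phi_mono hfCont hhc hσ₁c hσ₂c hκc hκnn hσ₁mono hσ₂mono hσ₁nn hσ₂nn hαhi
        hVbound hVdec t)
      (fun s => Phi_anti hfCont hhc hσ₁c hσ₂c hκc hκnn hσ₁mono hσ₂mono hσ₁nn hσ₂nn hαhi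
        hVbound hVdec s)
      (fun s t => Phi_nonneg hfCont hhc hσ₁c hσ₂c hκc hκnn hσ₁mono hσ₂mono hσ₁nn hσ₂nn hαhi
        hVbound hVdec s t)
      (fun s t => Phi_le hfCont hhc hσ₁c hσ₂c hκc hκnn hσ₁mono hσ₂mono hσ₁nn hσ₂nn hαhi
        hVbound hVdec s t)
      (fun t => Phi_zero hfCont hhc hσ₁c hσ₂c hκc hκnn hσ₁mono hσ₂mono hσ₁nn hσ₂nn hαhi
        hVbound hVdec hαlo t)
      (fun s ε hε => Phi_dec hfCont hhc hσ₁c hσ₂c hκc hκnn hσ₁mono hσ₂mono hσ₁nn hσ₂nn hαlo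
        hαhi hVbound hVdec hκpd hcomp s ε hε)
    refine ⟨αlo, β, fun r => 2 * σ₁ r, fun r => 2 * σ₂ r, hαlo, hβKL, ?_, ?_, ?_⟩
    · refine ⟨continuousOn_const.mul hσ₁.1, ?_, by show 2 * σ₁ 0 = 0; rw [hσ₁.2.2.1]; ring, ?_⟩
      · intro a ha b hb hab
        have := hσ₁.2.1 ha hb hab
        show 2 * σ₁ a < 2 * σ₁ b
        linarith
      · intro s hs
        have := hσ₁.2.2.2 s hs
        show 0 ≤ 2 * σ₁ s
        linarith
    · refine ⟨continuousOn_const.mul hσ₂.1, ?_, by show 2 * σ₂ 0 = 0; rw [hσ₂.2.2.1]; ring, ?_⟩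
      · intro a ha b hb hab
        have := hσ₂.2.1 ha hb hab
        show 2 * σ₂ a < 2 * σ₂ b
        linarith
      · intro s hs
        have := hσ₂.2.2.2 s hs
        show 0 ≤ 2 * σ₂ s
        linarith
    · intro ξ u x hu hx t ht
      have hmaj := Phi_major hfCont hhc hσ₁c hσ₂c hκc hκnn hσ₁mono hσ₂mono hσ₁nn hσ₂nn hαhi
        hVbound hVdec hu hx ht
      have hβ := hβmaj ‖ξ‖ t (norm_nonneg _) ht
      have hlo := (hVbound (x t)).1
      have hint : (∫ s in (0:ℝ)..t, (2 * σ₁ ‖h (x s)‖ + 2 * σ₂ ‖u s‖))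
          = 2 * ∫ s in (0:ℝ)..t, (σ₁ ‖h (x s)‖ + σ₂ ‖u s‖) := by
        have he : (fun s => 2 * σ₁ ‖h (x s)‖ + 2 * σ₂ ‖u s‖)
            = fun s => 2 * (σ₁ ‖h (x s)‖ + σ₂ ‖u s‖) := by
          funext s; ring
        rw [he, intervalIntegral.integral_const_mul]
      rw [hint]
      linarith
end
end
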